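/- arXiv:1701.05909 — 3 statements merged into one kernel-verified Lean document; each statement's English description precedes it below -/
import Mathlib

section
/- For every integer m ≥ 1, writing s = n − 2m, one has (3n − 7s)·Ma_m(P) ≤ S_5(m). -/
open scoped Classical

noncomputable section

/-- A point of the plane. -/
abbrev Pt : Type := ℝ × ℝ

/-- The closed straight-line segment with endpoints `a` and `b`. -/
def Seg (a b : Pt) : Set Pt := segment ℝ a b

/-- `P` is in general position: no three points of `P` are collinear and
no two points of `P` have the same `x`-coordinate. -/
def GenPos (P : Finset Pt) : Prop :=
  (∀ p ∈ P, ∀ q ∈ P, ∀ r ∈ P, p ≠ q → q ≠ r → p ≠ r →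
      ¬ Collinear ℝ ({p, q, r} : Set Pt)) ∧
  ∀ p ∈ P, ∀ q ∈ P, p ≠ q → p.1 ≠ q.1

/-- `M` is a crossing-free matching of `P`.  Each edge is recorded as an ordered
pair `(left endpoint, right endpoint)`, the left endpoint being the one of
smaller `x`-coordinate.  No point is an endpoint of more than one edge and no
two distinct edges intersect. -/
structure IsMatching (P : Finset Pt) (M : Finset (Pt × Pt)) : Prop where
  left_mem : ∀ e ∈ M, e.1 ∈ P
  right_mem : ∀ e ∈ M, e.2 ∈ P
  x_lt : ∀ e ∈ M, e.1.1 < e.2.1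
  no_shared : ∀ e ∈ M, ∀ f ∈ M, e ≠ f →
      e.1 ≠ f.1 ∧ e.1 ≠ f.2 ∧ e.2 ≠ f.1 ∧ e.2 ≠ f.2
  no_cross : ∀ e ∈ M, ∀ f ∈ M, e ≠ f → Seg e.1 e.2 ∩ Seg f.1 f.2 = ∅

/-- `p` is isolated in `M`: it is an endpoint of no edge of `M`. -/
def Isolated (M : Finset (Pt × Pt)) (p : Pt) : Prop :=
  ∀ e ∈ M, e.1 ≠ p ∧ e.2 ≠ p

/-- The `y`-coordinate of the point of the line through the endpoints of `e`
having abscissa `x`. -/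
def yOn (e : Pt × Pt) (x : ℝ) : ℝ :=
  e.1.2 + (x - e.1.1) * (e.2.2 - e.1.2) / (e.2.1 - e.1.1)

/-- The point of (the line supporting) the edge `e` with the same
`x`-coordinate as `q`. -/
def vproj (e : Pt × Pt) (q : Pt) : Pt := (q.1, yOn e q.1)

/-- `q` is vertically visible from the interior of the edge `e` of `M`:
its `x`-coordinate lies strictly between the `x`-coordinates of the endpoints
of `e`, and the open vertical segment joining `q` to the point of `e` with the
same `x`-coordinate meets no edge of `M` and contains no point of `P`. -/
def VertVisible (P : Finset Pt) (M : Finset (Pt × Pt)) (q : Pt) (e : Pt × Pt) : Prop :=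
  e.1.1 < q.1 ∧ q.1 < e.2.1 ∧
  (∀ f ∈ M, openSegment ℝ q (vproj e q) ∩ Seg f.1 f.2 = ∅) ∧
  ∀ r ∈ P, r ∉ openSegment ℝ q (vproj e q)

/-- `p` is the left endpoint of some edge of `M`. -/
def IsLeftEndpoint (M : Finset (Pt × Pt)) (p : Pt) : Prop := ∃ e ∈ M, e.1 = p

/-- `p` is the right endpoint of some edge of `M`. -/
def IsRightEndpoint (M : Finset (Pt × Pt)) (p : Pt) : Prop := ∃ e ∈ M, e.2 = p

/-- The rank `d_M(p)` of `p` in `M`. -/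
def rank (P : Finset Pt) (M : Finset (Pt × Pt)) (p : Pt) : ℕ :=
  if h : ∃ e ∈ M, e.1 = p then
    (P.filter fun q =>
      (Isolated M q ∨ IsLeftEndpoint M q) ∧ VertVisible P M q h.choose).card
  else if h' : ∃ e ∈ M, e.2 = p then
    (P.filter fun q =>
      (Isolated M q ∨ IsRightEndpoint M q) ∧ VertVisible P M q h'.choose).card
  else 0

/-- The result of inserting the edge `qp` into `M` (oriented left-to-right). -/
def addEdge (M : Finset (Pt × Pt)) (q p : Pt) : Finset (Pt × Pt) :=
  if q.1 < p.1 then insert (q, p) M else insert (p, q) M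

/-- `h_i(p,M)`: the number of points `q ∈ P` such that `M ∪ {qp}` is a
crossing-free matching of `P` in which `p` has rank `i`. -/
def hcount (P : Finset Pt) (M : Finset (Pt × Pt)) (p : Pt) (i : ℕ) : ℕ :=
  (P.filter fun q =>
    IsMatching P (addEdge M q p) ∧ rank P (addEdge M q p) p = i).card

/-- `l_i(p,M)`: the number of points `q ∈ P` to the left of `p` such that
`M ∪ {qp}` is a crossing-free matching of `P` in which `p` has rank `i`. -/
def lcount (P : Finset Pt) (M : Finset (Pt × Pt)) (p : Pt) (i : ℕ) : ℕ :=
  (P.filter fun q => q.1 < p.1 ∧ IsMatching P (insert (q, p) M) ∧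
    rank P (insert (q, p) M) p = i).card

/-- `v_i(M)`: the number of points of `P` of rank `i` in `M`. -/
def vcount (P : Finset Pt) (M : Finset (Pt × Pt)) (i : ℕ) : ℕ :=
  (P.filter fun p => rank P M p = i).card

/-- The (finite) collection of crossing-free matchings of `P` with `m` edges. -/
def Matchings (P : Finset Pt) (m : ℕ) : Finset (Finset (Pt × Pt)) :=
  (P ×ˢ P).powerset.filter fun M => IsMatching P M ∧ M.card = m

/-- `Ma_m(P)`: the number of crossing-free matchings of `P` with `m` edges. -/
def Ma (P : Finset Pt) (m : ℕ) : ℕ := (Matchings P m).card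

/-- `S_k(m)`: the sum of `Σ_{i=0}^{k} (k-i) h_i(p,M')` over all pairs `(p, M')`
with `M'` a crossing-free matching of `P` with `m-1` edges and `p ∈ P`
isolated in `M'`. -/
def Ssum (P : Finset Pt) (k m : ℕ) : ℕ :=
  ∑ M ∈ Matchings P (m - 1), ∑ p ∈ P.filter (fun p => Isolated M p),
    ∑ i ∈ Finset.range (k + 1), (k - i) * hcount P M p i

/-- The union of the edges of `M`, as a subset of the plane. -/
def edgesSet (M : Finset (Pt × Pt)) : Set Pt := ⋃ e ∈ M, Seg e.1 e.2

/-- The vertical wall of `r`: the maximal open vertical segment through `r`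
meeting no edge of `M` except possibly at `r` itself. -/
def Wall (M : Finset (Pt × Pt)) (r : Pt) : Set Pt :=
  {x : Pt | x.1 = r.1 ∧
    ∀ z : Pt, z.1 = r.1 → z.2 ∈ Set.uIcc x.2 r.2 → z ≠ r → z ∉ edgesSet M}

/-- The complement of the union of all edges of `M` and all vertical walls of
points of `P`; its connected components are the cells of the vertical
decomposition. -/
def FreeRegion (P : Finset Pt) (M : Finset (Pt × Pt)) : Set Pt :=
  (edgesSet M ∪ ⋃ r ∈ P, Wall M r)ᶜ

/-- `T` is a cell of the vertical decomposition of `M`. -/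
def IsCell (P : Finset Pt) (M : Finset (Pt × Pt)) (T : Set Pt) : Prop :=
  ∃ x ∈ FreeRegion P M, T = connectedComponentIn (FreeRegion P M) x

/-- `T` is the cell containing the points `(x(p) - ε, y(p))` for all
sufficiently small `ε > 0`. -/
def IsLeftCellOf (P : Finset Pt) (M : Finset (Pt × Pt)) (p : Pt) (T : Set Pt) : Prop :=
  IsCell P M T ∧ ∃ ε₀ > (0 : ℝ), ∀ ε : ℝ, 0 < ε → ε < ε₀ →
    ((p.1 - ε, p.2) : Pt) ∈ T

/-- `T` is the cell containing the points `(x(p) + ε, y(p))` for all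
sufficiently small `ε > 0`. -/
def IsRightCellOf (P : Finset Pt) (M : Finset (Pt × Pt)) (p : Pt) (T : Set Pt) : Prop :=
  IsCell P M T ∧ ∃ ε₀ > (0 : ℝ), ∀ ε : ℝ, 0 < ε → ε < ε₀ →
    ((p.1 + ε, p.2) : Pt) ∈ T

/-- `q` is the left bifurcation point of `p`: part of the boundary of the cell
to the left of `p` lies on the vertical wall of `q`, and `x(q)` is the infimum
of the abscissas of points of that cell. -/
def IsLeftBifPoint (P : Finset Pt) (M : Finset (Pt × Pt)) (p q : Pt) : Prop :=
  q ∈ P ∧ ∃ T, IsLeftCellOf P M p T ∧ (frontier T ∩ Wall M q).Nonempty ∧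
    IsGLB {x : ℝ | ∃ y : ℝ, ((x, y) : Pt) ∈ T} q.1

/-- `q` is the right bifurcation point of `p`. -/
def IsRightBifPoint (P : Finset Pt) (M : Finset (Pt × Pt)) (p q : Pt) : Prop :=
  q ∈ P ∧ ∃ T, IsRightCellOf P M p T ∧ (frontier T ∩ Wall M q).Nonempty ∧
    IsLUB {x : ℝ | ∃ y : ℝ, ((x, y) : Pt) ∈ T} q.1

/-- The edge `e` of `M` is vertically visible below `p`. -/
def EdgeVisBelow (P : Finset Pt) (M : Finset (Pt × Pt)) (e : Pt × Pt) (p : Pt) : Prop :=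
  e.1.1 < p.1 ∧ p.1 < e.2.1 ∧ yOn e p.1 < p.2 ∧
  (∀ f ∈ M, openSegment ℝ p (vproj e p) ∩ Seg f.1 f.2 = ∅) ∧
  ∀ r ∈ P, r ∉ openSegment ℝ p (vproj e p)

/-- The edge `e` of `M` is vertically visible above `p`. -/
def EdgeVisAbove (P : Finset Pt) (M : Finset (Pt × Pt)) (e : Pt × Pt) (p : Pt) : Prop :=
  e.1.1 < p.1 ∧ p.1 < e.2.1 ∧ p.2 < yOn e p.1 ∧
  (∀ f ∈ M, openSegment ℝ p (vproj e p) ∩ Seg f.1 f.2 = ∅) ∧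
  ∀ r ∈ P, r ∉ openSegment ℝ p (vproj e p)

end

section AuxGeo

open Finset

lemma mem_Seg_of_x {e : Pt × Pt} (hab : e.1.1 < e.2.1) {x : ℝ} (h1 : e.1.1 ≤ x)
    (h2 : x ≤ e.2.1) : ((x, yOn e x) : Pt) ∈ Seg e.1 e.2 := by
  have hd : (0:ℝ) < e.2.1 - e.1.1 := by linarith
  set t : ℝ := (x - e.1.1) / (e.2.1 - e.1.1) with ht
  have ht0 : 0 ≤ t := div_nonneg (by linarith) hd.le
  have ht1 : t ≤ 1 := by rw [ht, div_le_one hd]; linarith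
  refine ⟨1 - t, t, by linarith, ht0, by ring, ?_⟩
  have hx : (1 - t) * e.1.1 + t * e.2.1 = x := by
    rw [ht]; field_simp; ring
  have hy : (1 - t) * e.1.2 + t * e.2.2 = yOn e x := by
    rw [ht, yOn]; field_simp; ring
  apply Prod.ext
  · simpa using hx
  · simpa using hy

lemma mem_openSegment_vert {x y y1 y2 : ℝ} (h1 : y1 < y) (h2 : y < y2) :
    ((x, y) : Pt) ∈ openSegment ℝ ((x, y1) : Pt) ((x, y2) : Pt) := by
  have hd : (0:ℝ) < y2 - y1 := by linarith
  set t : ℝ := (y - y1) / (y2 - y1) with ht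
  have ht0 : 0 < t := div_pos (by linarith) hd
  have ht1 : t < 1 := by rw [ht, div_lt_one hd]; linarith
  refine ⟨1 - t, t, by linarith, ht0, by ring, ?_⟩
  apply Prod.ext
  · show (1 - t) * x + t * x = x; ring
  · show (1 - t) * y1 + t * y2 = y; rw [ht]; field_simp; ring

end AuxGeo

section AuxVis

open Finset

lemma seg_disjoint_elim {M : Finset (Pt × Pt)} (hM : IsMatching P' M)
    {e f : Pt × Pt} (he : e ∈ M) (hf : f ∈ M) (hef : e ≠ f) {z : Pt}
    (h1 : z ∈ Seg e.1 e.2) (h2 : z ∈ Seg f.1 f.2) : False := by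
  have := hM.no_cross e he f hf hef
  have : z ∈ (∅ : Set Pt) := this ▸ Set.mem_inter h1 h2
  exact this

lemma vis_yOn_ne {P : Finset Pt} (hP : GenPos P) {M : Finset (Pt × Pt)}
    (hM : IsMatching P M) {q : Pt} (hq : q ∈ P) {e : Pt × Pt} (he : e ∈ M)
    (hvis : VertVisible P M q e) : yOn e q.1 ≠ q.2 := by
  intro heq
  have hlt := hM.x_lt e he
  have hmem : ((q.1, yOn e q.1) : Pt) ∈ Seg e.1 e.2 :=
    mem_Seg_of_x hlt hvis.1.le hvis.2.1.le
  rw [heq] at hmem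
  have hq' : q ∈ Seg e.1 e.2 := hmem
  have hspan0 : q ∈ (affineSpan ℝ ({e.1, e.2} : Set Pt) : Set Pt) :=
    (AffineSubspace.convex _).segment_subset
      (subset_affineSpan ℝ ({e.1, e.2} : Set Pt) (by simp))
      (subset_affineSpan ℝ ({e.1, e.2} : Set Pt) (by simp)) hq'
  have hspan : q ∈ affineSpan ℝ ({e.1, e.2} : Set Pt) := SetLike.mem_coe.mp hspan0
  have hcol : Collinear ℝ ({q, e.1, e.2} : Set Pt) :=
    collinear_insert_of_mem_affineSpan_pair hspan
  have hne1 : e.1 ≠ q := fun h => absurd (congrArg Prod.fst h) (ne_of_lt hvis.1)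
  have hne2 : e.2 ≠ q := fun h => absurd (congrArg Prod.fst h) (ne_of_gt hvis.2.1)
  have hne12 : e.1 ≠ e.2 := fun h => absurd (congrArg Prod.fst h) (ne_of_lt hlt)
  have hset : ({e.1, e.2, q} : Set Pt) = {q, e.1, e.2} := by
    ext x; simp only [Set.mem_insert_iff, Set.mem_singleton_iff]; tauto
  exact hP.1 e.1 (hM.left_mem e he) e.2 (hM.right_mem e he) q hq hne12 hne2
    hne1 (hset ▸ hcol)

lemma vis_yOn_ne' {P : Finset Pt} {M : Finset (Pt × Pt)}
    (hM : IsMatching P M) {q : Pt} {e f : Pt × Pt} (he : e ∈ M) (hf : f ∈ M)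
    (hve : VertVisible P M q e) (hvf : VertVisible P M q f) (hef : e ≠ f) :
    yOn e q.1 ≠ yOn f q.1 := by
  intro heq
  have h1 : ((q.1, yOn e q.1) : Pt) ∈ Seg e.1 e.2 :=
    mem_Seg_of_x (hM.x_lt e he) hve.1.le hve.2.1.le
  have h2 : ((q.1, yOn e q.1) : Pt) ∈ Seg f.1 f.2 := by
    rw [heq]; exact mem_Seg_of_x (hM.x_lt f hf) hvf.1.le hvf.2.1.le
  exact seg_disjoint_elim hM he hf hef h1 h2

lemma vis_block_above {P : Finset Pt} {M : Finset (Pt × Pt)}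
    (hM : IsMatching P M) {q : Pt} {e f : Pt × Pt} (he : e ∈ M) (hf : f ∈ M)
    (hve : VertVisible P M q e) (hvf : VertVisible P M q f)
    (h1 : q.2 < yOn e q.1) (h2 : yOn e q.1 < yOn f q.1) : False := by
  have hz : ((q.1, yOn e q.1) : Pt) ∈ Seg e.1 e.2 :=
    mem_Seg_of_x (hM.x_lt e he) hve.1.le hve.2.1.le
  have hz2 : ((q.1, yOn e q.1) : Pt) ∈ openSegment ℝ q (vproj f q) := by
    show ((q.1, yOn e q.1) : Pt) ∈ openSegment ℝ ((q.1, q.2) : Pt) ((q.1, yOn f q.1) : Pt)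
    exact mem_openSegment_vert h1 h2
  have h0 := hvf.2.2.1 e he
  have : ((q.1, yOn e q.1) : Pt) ∈ (∅ : Set Pt) := h0 ▸ Set.mem_inter hz2 hz
  exact this

lemma vis_block_below {P : Finset Pt} {M : Finset (Pt × Pt)}
    (hM : IsMatching P M) {q : Pt} {e f : Pt × Pt} (he : e ∈ M) (hf : f ∈ M)
    (hve : VertVisible P M q e) (hvf : VertVisible P M q f)
    (h1 : yOn e q.1 < q.2) (h2 : yOn f q.1 < yOn e q.1) : False := by
  have hz : ((q.1, yOn e q.1) : Pt) ∈ Seg e.1 e.2 :=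
    mem_Seg_of_x (hM.x_lt e he) hve.1.le hve.2.1.le
  have hz2 : ((q.1, yOn e q.1) : Pt) ∈ openSegment ℝ q (vproj f q) := by
    show ((q.1, yOn e q.1) : Pt) ∈ openSegment ℝ ((q.1, q.2) : Pt) ((q.1, yOn f q.1) : Pt)
    rw [openSegment_symm]
    exact mem_openSegment_vert h2 h1
  have h0 := hvf.2.2.1 e he
  have : ((q.1, yOn e q.1) : Pt) ∈ (∅ : Set Pt) := h0 ▸ Set.mem_inter hz2 hz
  exact this

lemma vis_card_le_two {P : Finset Pt} (hP : GenPos P) {M : Finset (Pt × Pt)}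
    (hM : IsMatching P M) {q : Pt} (hq : q ∈ P) :
    (M.filter fun e => VertVisible P M q e).card ≤ 2 := by
  classical
  refine le_trans (Finset.card_le_card_of_injOn
    (fun e : Pt × Pt => decide (q.2 < yOn e q.1))
    (fun _ _ => Finset.mem_univ _) ?_) (by simp)
  · intro e he f hf hb
    simp only [Finset.coe_filter, Set.mem_setOf_eq] at he hf
    obtain ⟨heM, hve⟩ := he
    obtain ⟨hfM, hvf⟩ := hf
    by_contra hef
    have hbb := decide_eq_decide.mp hb
    have hnee := vis_yOn_ne hP hM hq heM hve
    have hnef := vis_yOn_ne hP hM hq hfM hvf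
    have hnn := vis_yOn_ne' hM heM hfM hve hvf hef
    by_cases hcase : q.2 < yOn e q.1
    · have hcf : q.2 < yOn f q.1 := hbb.mp hcase
      rcases lt_or_gt_of_ne hnn with h'|h'
      · exact vis_block_above hM heM hfM hve hvf hcase h'
      · exact vis_block_above hM hfM heM hvf hve hcf h'
    · have hcf : ¬ q.2 < yOn f q.1 := fun h => hcase (hbb.mpr h)
      have h1 : yOn e q.1 < q.2 := lt_of_le_of_ne (not_lt.mp hcase) hnee
      have h2 : yOn f q.1 < q.2 := lt_of_le_of_ne (not_lt.mp hcf) hnef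
      rcases lt_or_gt_of_ne hnn with h'|h'
      · exact vis_block_below hM hfM heM hvf hve h2 h'
      · exact vis_block_below hM heM hfM hve hvf h1 h'

end AuxVis

section AuxRank

open Finset

lemma rank_left_eq {P : Finset Pt} {M : Finset (Pt × Pt)} (hM : IsMatching P M)
    {e : Pt × Pt} (he : e ∈ M) :
    rank P M e.1 = (P.filter fun q =>
      (Isolated M q ∨ IsLeftEndpoint M q) ∧ VertVisible P M q e).card := by
  have h : ∃ f ∈ M, f.1 = e.1 := ⟨e, he, rfl⟩
  have hch : h.choose = e := by
    obtain ⟨hmem, heq⟩ := h.choose_spec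
    by_contra hne
    exact (hM.no_shared _ hmem e he hne).1 heq
  rw [rank, dif_pos h, hch]

lemma rank_right_eq {P : Finset Pt} {M : Finset (Pt × Pt)} (hM : IsMatching P M)
    {e : Pt × Pt} (he : e ∈ M) :
    rank P M e.2 = (P.filter fun q =>
      (Isolated M q ∨ IsRightEndpoint M q) ∧ VertVisible P M q e).card := by
  have h0 : ¬ ∃ f ∈ M, f.1 = e.2 := by
    rintro ⟨f, hf, hfe⟩
    by_cases hef : f = e
    · subst hef
      have hx := hM.x_lt f hf
      rw [hfe] at hx
      exact lt_irrefl _ hx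
    · exact (hM.no_shared f hf e he hef).2.1 hfe
  have h : ∃ f ∈ M, f.2 = e.2 := ⟨e, he, rfl⟩
  have hch : h.choose = e := by
    obtain ⟨hmem, heq⟩ := h.choose_spec
    by_contra hne
    exact (hM.no_shared _ hmem e he hne).2.2.2 heq
  rw [rank, dif_neg h0, dif_pos h, hch]

lemma not_left_and_right {P : Finset Pt} {M : Finset (Pt × Pt)}
    (hM : IsMatching P M) (q : Pt) :
    ¬ (IsLeftEndpoint M q ∧ IsRightEndpoint M q) := by
  rintro ⟨⟨e, he, he1⟩, ⟨f, hf, hf2⟩⟩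
  by_cases hef : e = f
  · subst hef
    have hx := hM.x_lt e he
    rw [he1, hf2] at hx
    exact lt_irrefl _ hx
  · exact (hM.no_shared e he f hf hef).2.1 (he1.trans hf2.symm)

lemma IsMatching.of_subset {P : Finset Pt} {M : Finset (Pt × Pt)}
    (h : IsMatching P M) {N : Finset (Pt × Pt)} (hs : N ⊆ M) : IsMatching P N :=
  ⟨fun e he => h.left_mem e (hs he), fun e he => h.right_mem e (hs he),
    fun e he => h.x_lt e (hs he),
    fun e he f hf => h.no_shared e (hs he) f (hs hf),
    fun e he f hf => h.no_cross e (hs he) f (hs hf)⟩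

lemma mem_Matchings_iff {P : Finset Pt} {M : Finset (Pt × Pt)} {m : ℕ} :
    M ∈ Matchings P m ↔ (∀ e ∈ M, e.1 ∈ P ∧ e.2 ∈ P) ∧ IsMatching P M ∧ M.card = m := by
  rw [Matchings, Finset.mem_filter, Finset.mem_powerset]
  constructor
  · rintro ⟨hsub, h1, h2⟩
    exact ⟨fun e he => Finset.mem_product.mp (hsub he), h1, h2⟩
  · rintro ⟨hsub, h1, h2⟩
    exact ⟨fun e he => Finset.mem_product.mpr (hsub e he), h1, h2⟩

lemma erase_mem_Matchings {P : Finset Pt} {m : ℕ} {M : Finset (Pt × Pt)}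
    (hM : M ∈ Matchings P m) {e : Pt × Pt} (he : e ∈ M) :
    M.erase e ∈ Matchings P (m - 1) := by
  rw [mem_Matchings_iff] at hM ⊢
  obtain ⟨hsub, hmat, hcard⟩ := hM
  exact ⟨fun f hf => hsub f (Finset.mem_of_mem_erase hf),
    hmat.of_subset (Finset.erase_subset _ _),
    by rw [Finset.card_erase_of_mem he, hcard]⟩

lemma isolated_erase {P : Finset Pt} {M : Finset (Pt × Pt)} (hM : IsMatching P M)
    {e : Pt × Pt} (he : e ∈ M) {p : Pt} (hp : p = e.1 ∨ p = e.2) :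
    Isolated (M.erase e) p := by
  intro f hf
  obtain ⟨hne, hfM⟩ := Finset.mem_erase.mp hf
  have h4 := hM.no_shared f hfM e he hne
  rcases hp with rfl | rfl
  · exact ⟨h4.1, h4.2.2.1⟩
  · exact ⟨h4.2.1, h4.2.2.2⟩

lemma addEdge_erase_left {M : Finset (Pt × Pt)} {e : Pt × Pt}
    (hx : e.1.1 < e.2.1) (he : e ∈ M) : addEdge (M.erase e) e.2 e.1 = M := by
  rw [addEdge, if_neg (by exact fun h => absurd (h.trans hx) (lt_irrefl _))]
  rw [Prod.mk.eta]
  exact Finset.insert_erase he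

lemma addEdge_erase_right {M : Finset (Pt × Pt)} {e : Pt × Pt}
    (hx : e.1.1 < e.2.1) (he : e ∈ M) : addEdge (M.erase e) e.1 e.2 = M := by
  rw [addEdge, if_pos hx, Prod.mk.eta]
  exact Finset.insert_erase he

lemma addEdge_x_ne {P : Finset Pt} {M : Finset (Pt × Pt)} {q p : Pt}
    (h : IsMatching P (addEdge M q p)) : q.1 ≠ p.1 := by
  intro he
  rw [addEdge, if_neg (by rw [he]; exact lt_irrefl _)] at h
  have := h.x_lt (p, q) (Finset.mem_insert_self _ _)
  simp only at this
  rw [he] at this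
  exact lt_irrefl _ this

lemma addEdge_mem_Matchings {P : Finset Pt} {m : ℕ} (hm : 1 ≤ m)
    {M' : Finset (Pt × Pt)} {q p : Pt} (hM' : M' ∈ Matchings P (m - 1))
    (hiso : Isolated M' p) (hmat : IsMatching P (addEdge M' q p)) :
    addEdge M' q p ∈ Matchings P m := by
  rw [mem_Matchings_iff] at hM' ⊢
  obtain ⟨_, _, hcard⟩ := hM'
  refine ⟨fun e he => ⟨hmat.left_mem e he, hmat.right_mem e he⟩, hmat, ?_⟩
  by_cases hqp : q.1 < p.1
  · rw [addEdge, if_pos hqp] at *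
    have hnot : ((q, p) : Pt × Pt) ∉ M' := fun hmem => (hiso _ hmem).2 rfl
    rw [Finset.card_insert_of_notMem hnot, hcard]
    omega
  · rw [addEdge, if_neg hqp] at *
    have hnot : ((p, q) : Pt × Pt) ∉ M' := fun hmem => (hiso _ hmem).1 rfl
    rw [Finset.card_insert_of_notMem hnot, hcard]
    omega

lemma notIso_card {P : Finset Pt} {M : Finset (Pt × Pt)} (hM : IsMatching P M) :
    (P.filter fun p => ¬ Isolated M p).card = 2 * M.card := by
  classical
  have hset : P.filter (fun p => ¬ Isolated M p)
      = M.image Prod.fst ∪ M.image Prod.snd := by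
    ext p
    simp only [Finset.mem_filter, Finset.mem_union, Finset.mem_image]
    constructor
    · rintro ⟨hp, hniso⟩
      rw [Isolated] at hniso
      push_neg at hniso
      obtain ⟨e, he, hor⟩ := hniso
      by_cases h1 : e.1 = p
      · exact Or.inl ⟨e, he, h1⟩
      · exact Or.inr ⟨e, he, hor h1⟩
    · rintro (⟨e, he, hep⟩ | ⟨e, he, hep⟩)
      · exact ⟨hep ▸ hM.left_mem e he, fun hiso => (hiso e he).1 hep⟩
      · exact ⟨hep ▸ hM.right_mem e he, fun hiso => (hiso e he).2 hep⟩
  rw [hset, Finset.card_union_of_disjoint, Finset.card_image_of_injOn,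
    Finset.card_image_of_injOn]
  · ring
  · intro e he f hf hef
    by_contra hne
    exact (hM.no_shared e he f hf hne).2.2.2 hef
  · intro e he f hf hef
    by_contra hne
    exact (hM.no_shared e he f hf hne).1 hef
  · rw [Finset.disjoint_left]
    intro x hx1 hx2
    rw [Finset.mem_image] at hx1 hx2
    obtain ⟨e, he, hex⟩ := hx1
    obtain ⟨f, hf, hfx⟩ := hx2
    by_cases hef : e = f
    · subst hef
      have := hM.x_lt e he
      rw [hex, hfx] at this
      exact lt_irrefl _ this
    · exact (hM.no_shared e he f hf hef).2.1 (hex.trans hfx.symm)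

end AuxRank

section AuxWt

open Finset

/-- Truncated-weight `max(5 - rank, 0)` (as a natural number). -/
noncomputable def Wt (P : Finset Pt) (M : Finset (Pt × Pt)) (p : Pt) : ℕ :=
  if rank P M p ≤ 5 then 5 - rank P M p else 0

lemma Wt_ge (P : Finset Pt) (M : Finset (Pt × Pt)) (p : Pt) :
    (5 : ℤ) - rank P M p ≤ Wt P M p := by
  rw [Wt]
  split
  · rename_i h
    rw [Nat.cast_sub h]
    push_cast
    linarith
  · rename_i h
    push_cast
    omega

lemma inner_sum_eq (P : Finset Pt) (M : Finset (Pt × Pt)) (p : Pt) :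
    ∑ i ∈ Finset.range 6, (5 - i) * hcount P M p i
      = ∑ q ∈ P, if IsMatching P (addEdge M q p)
          then Wt P (addEdge M q p) p else 0 := by
  classical
  have h1 : ∀ i, (5 - i) * hcount P M p i
      = ∑ q ∈ P, if IsMatching P (addEdge M q p) ∧ rank P (addEdge M q p) p = i
          then 5 - i else 0 := by
    intro i
    rw [hcount, Finset.card_filter, Finset.mul_sum]
    refine Finset.sum_congr rfl fun q _ => ?_
    split <;> simp
  simp only [h1]
  rw [Finset.sum_comm]
  refine Finset.sum_congr rfl fun q _ => ?_
  by_cases hC : IsMatching P (addEdge M q p)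
  · simp only [hC, true_and, if_pos]
    rw [Finset.sum_ite_eq (Finset.range 6) (rank P (addEdge M q p) p) (fun i => 5 - i)]
    rw [Wt]
    by_cases h5 : rank P (addEdge M q p) p ≤ 5
    · rw [if_pos (Finset.mem_range.mpr (Nat.lt_succ_of_le h5)), if_pos h5]
    · rw [if_neg (fun h => h5 (Nat.lt_succ_iff.mp (Finset.mem_range.mp h))), if_neg h5]
  · simp [hC]

lemma per_matching {P : Finset Pt} (hP : GenPos P) {m : ℕ} {M : Finset (Pt × Pt)}
    (hM : M ∈ Matchings P m) :
    14 * (m : ℤ) - 4 * P.card ≤ ∑ e ∈ M, ((Wt P M e.1 : ℤ) + (Wt P M e.2 : ℤ)) := by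
  classical
  rw [mem_Matchings_iff] at hM
  obtain ⟨hPP, hmat, hcard⟩ := hM
  -- the per-point bound
  have hq : ∀ q ∈ P,
      (∑ e ∈ M, ((if (Isolated M q ∨ IsLeftEndpoint M q) ∧ VertVisible P M q e
          then (1:ℕ) else 0)
        + (if (Isolated M q ∨ IsRightEndpoint M q) ∧ VertVisible P M q e
          then (1:ℕ) else 0)))
      ≤ if Isolated M q then 4 else 2 := by
    intro q hqP
    have hvis2 := vis_card_le_two hP hmat hqP
    have hviss : ∑ e ∈ M, (if VertVisible P M q e then (1:ℕ) else 0) ≤ 2 := by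
      rw [← Finset.card_filter]
      exact hvis2
    by_cases hiso : Isolated M q
    · rw [if_pos hiso]
      have : ∑ e ∈ M, ((if (Isolated M q ∨ IsLeftEndpoint M q) ∧ VertVisible P M q e
            then (1:ℕ) else 0)
          + (if (Isolated M q ∨ IsRightEndpoint M q) ∧ VertVisible P M q e
            then (1:ℕ) else 0))
          ≤ ∑ e ∈ M, ((if VertVisible P M q e then (1:ℕ) else 0)
            + (if VertVisible P M q e then (1:ℕ) else 0)) := by
        refine Finset.sum_le_sum fun e _ => ?_
        gcongr <;> · split <;> rename_i h <;> simp [h]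
        
      refine le_trans this ?_
      rw [Finset.sum_add_distrib]
      omega
    · rw [if_neg hiso]
      have : ∑ e ∈ M, ((if (Isolated M q ∨ IsLeftEndpoint M q) ∧ VertVisible P M q e
            then (1:ℕ) else 0)
          + (if (Isolated M q ∨ IsRightEndpoint M q) ∧ VertVisible P M q e
            then (1:ℕ) else 0))
          ≤ ∑ e ∈ M, (if VertVisible P M q e then (1:ℕ) else 0) := by
        refine Finset.sum_le_sum fun e _ => ?_
        by_cases hL : IsLeftEndpoint M q
        · have hR : ¬ IsRightEndpoint M q := fun hR => not_left_and_right hmat q ⟨hL, hR⟩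
          by_cases hv : VertVisible P M q e <;> simp [hiso, hL, hR, hv]
        · by_cases hR : IsRightEndpoint M q <;> by_cases hv : VertVisible P M q e <;>
            simp [hiso, hL, hR, hv]
      exact le_trans this hviss
  -- sum the per-point bound
  have hDsum : ∑ e ∈ M, (rank P M e.1 + rank P M e.2)
      ≤ 2 * P.card + 2 * (P.filter fun p => Isolated M p).card := by
    have hre : ∀ e ∈ M, rank P M e.1 + rank P M e.2
        = ∑ q ∈ P, ((if (Isolated M q ∨ IsLeftEndpoint M q) ∧ VertVisible P M q e
            then (1:ℕ) else 0)
          + (if (Isolated M q ∨ IsRightEndpoint M q) ∧ VertVisible P M q e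
            then (1:ℕ) else 0)) := by
      intro e he
      rw [rank_left_eq hmat he, rank_right_eq hmat he, Finset.card_filter,
        Finset.card_filter, ← Finset.sum_add_distrib]
    rw [Finset.sum_congr rfl hre, Finset.sum_comm]
    have : ∑ q ∈ P, ∑ e ∈ M, ((if (Isolated M q ∨ IsLeftEndpoint M q) ∧ VertVisible P M q e
            then (1:ℕ) else 0)
          + (if (Isolated M q ∨ IsRightEndpoint M q) ∧ VertVisible P M q e
            then (1:ℕ) else 0))
        ≤ ∑ q ∈ P, (if Isolated M q then 4 else 2) :=
      Finset.sum_le_sum hq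
    refine le_trans this ?_
    have h2 : ∀ q ∈ P, (if Isolated M q then (4:ℕ) else 2)
        = 2 + (if Isolated M q then 2 else 0) := by
      intro q _; split <;> rfl
    rw [Finset.sum_congr rfl h2, Finset.sum_add_distrib, Finset.sum_const,
      ← Finset.sum_filter, Finset.sum_const]
    simp only [smul_eq_mul]
    omega
  have hci : (P.filter fun p => Isolated M p).card + 2 * m = P.card := by
    have h1 := Finset.card_filter_add_card_filter_not
      (s := P) (p := fun p => Isolated M p)
    rw [notIso_card hmat, hcard] at h1
    exact h1
  -- now conclude over ℤ
  have hWt : ∑ e ∈ M, (((5:ℤ) - rank P M e.1) + ((5:ℤ) - rank P M e.2))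
      ≤ ∑ e ∈ M, ((Wt P M e.1 : ℤ) + (Wt P M e.2 : ℤ)) :=
    Finset.sum_le_sum fun e _ => add_le_add (Wt_ge P M e.1) (Wt_ge P M e.2)
  have hsum : ∑ e ∈ M, (((5:ℤ) - rank P M e.1) + ((5:ℤ) - rank P M e.2))
      = 10 * m - (∑ e ∈ M, (rank P M e.1 + rank P M e.2) : ℕ) := by
    push_cast
    simp only [Finset.sum_add_distrib, Finset.sum_sub_distrib, Finset.sum_const,
      hcard, smul_eq_mul]
    ring
  have hDZ : ((∑ e ∈ M, (rank P M e.1 + rank P M e.2) : ℕ) : ℤ)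
      ≤ 2 * P.card + 2 * ((P.card : ℤ) - 2 * m) := by
    have := hDsum
    have hciZ : ((P.filter fun p => Isolated M p).card : ℤ) = (P.card : ℤ) - 2 * m := by
      have := hci
      push_cast [← this]
      ring
    calc ((∑ e ∈ M, (rank P M e.1 + rank P M e.2) : ℕ) : ℤ)
        ≤ ((2 * P.card + 2 * (P.filter fun p => Isolated M p).card : ℕ) : ℤ) := by
          exact_mod_cast hDsum
      _ = 2 * P.card + 2 * ((P.card : ℤ) - 2 * m) := by push_cast [hciZ]; ring
  rw [hsum] at hWt
  linarith [hWt, hDZ]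

end AuxWt

section AuxFinal

open Finset

lemma Ssum_eq (P : Finset Pt) {m : ℕ} (hm : 1 ≤ m) :
    Ssum P 5 m = ∑ M ∈ Matchings P m, ∑ e ∈ M, (Wt P M e.1 + Wt P M e.2) := by
  classical
  rw [Ssum]
  have h1 : ∀ M' ∈ Matchings P (m-1), ∑ p ∈ P.filter (fun p => Isolated M' p),
      ∑ i ∈ Finset.range (5+1), (5 - i) * hcount P M' p i
        = ∑ p ∈ P.filter (fun p => Isolated M' p), ∑ q ∈ P,
            if IsMatching P (addEdge M' q p) then Wt P (addEdge M' q p) p else 0 :=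
    fun M' _ => Finset.sum_congr rfl fun p _ => inner_sum_eq P M' p
  rw [Finset.sum_congr rfl h1]
  have h2 : ∑ M' ∈ Matchings P (m-1), ∑ p ∈ P.filter (fun p => Isolated M' p), ∑ q ∈ P,
      (if IsMatching P (addEdge M' q p) then Wt P (addEdge M' q p) p else 0)
    = ∑ x ∈ ((Matchings P (m-1)).sigma
        (fun M' => (P.filter (fun p => Isolated M' p)) ×ˢ P)).filter
          (fun x => IsMatching P (addEdge x.1 x.2.2 x.2.1)),
        Wt P (addEdge x.1 x.2.2 x.2.1) x.2.1 := by
    rw [Finset.sum_filter, Finset.sum_sigma]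
    exact Finset.sum_congr rfl fun M' _ => (Finset.sum_product
      (P.filter (fun p => Isolated M' p)) P
      (fun s => if IsMatching P (addEdge M' s.2 s.1)
        then Wt P (addEdge M' s.2 s.1) s.1 else 0)).symm
  rw [h2]
  have h3 : ∑ M ∈ Matchings P m, ∑ e ∈ M, (Wt P M e.1 + Wt P M e.2)
      = ∑ y ∈ (Matchings P m).sigma (fun M => M ×ˢ (Finset.univ : Finset Bool)),
          Wt P y.1 (if y.2.2 then y.2.1.2 else y.2.1.1) := by
    rw [Finset.sum_sigma]
    refine Finset.sum_congr rfl fun M _ => ?_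
    rw [Finset.sum_product]
    refine Finset.sum_congr rfl fun e _ => ?_
    have hb : (∑ b ∈ (Finset.univ : Finset Bool),
        Wt P M (if b then e.2 else e.1)) = Wt P M e.2 + Wt P M e.1 := by
      simp
    rw [hb]
    exact add_comm _ _
  rw [h3]
  -- the bijection
  refine Finset.sum_nbij'
    (i := fun x => ⟨addEdge x.1 x.2.2 x.2.1,
      ((if x.2.2.1 < x.2.1.1 then (x.2.2, x.2.1) else (x.2.1, x.2.2)),
        decide (x.2.2.1 < x.2.1.1))⟩)
    (j := fun y => ⟨y.1.erase y.2.1,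
      ((if y.2.2 then y.2.1.2 else y.2.1.1), (if y.2.2 then y.2.1.1 else y.2.1.2))⟩)
    ?_ ?_ ?_ ?_ ?_
  · -- hi
    rintro ⟨M', p, q⟩ hx
    simp only [Finset.mem_filter, Finset.mem_sigma, Finset.mem_product] at hx
    obtain ⟨⟨hM', ⟨hpP, hiso⟩, hq⟩, hc⟩ := hx
    refine Finset.mem_sigma.mpr ⟨addEdge_mem_Matchings hm hM' hiso hc,
      Finset.mem_product.mpr ⟨?_, Finset.mem_univ _⟩⟩
    by_cases hqp : q.1 < p.1 <;>
      simp [addEdge, hqp, Finset.mem_insert_self]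
  · -- hj
    rintro ⟨M, e, b⟩ hy
    rw [Finset.mem_sigma, Finset.mem_product] at hy
    obtain ⟨hM, he, -⟩ := hy
    have hmat : IsMatching P M := (mem_Matchings_iff.mp hM).2.1
    have hx := hmat.x_lt e he
    simp only [Finset.mem_filter, Finset.mem_sigma, Finset.mem_product]
    refine ⟨⟨erase_mem_Matchings hM he, ?_, ?_⟩, ?_⟩
    · cases b
      · exact ⟨hmat.left_mem e he, isolated_erase hmat he (Or.inl rfl)⟩
      · exact ⟨hmat.right_mem e he, isolated_erase hmat he (Or.inr rfl)⟩
    · cases b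
      · exact hmat.right_mem e he
      · exact hmat.left_mem e he
    · cases b
      · show IsMatching P (addEdge (M.erase e) e.2 e.1)
        rw [addEdge_erase_left hx he]; exact hmat
      · show IsMatching P (addEdge (M.erase e) e.1 e.2)
        rw [addEdge_erase_right hx he]; exact hmat
  · -- left inverse
    rintro ⟨M', p, q⟩ hx
    simp only [Finset.mem_filter, Finset.mem_sigma, Finset.mem_product] at hx
    obtain ⟨⟨hM', ⟨hpP, hiso⟩, hq⟩, hc⟩ := hx
    have hnot1 : ((q, p) : Pt × Pt) ∉ M' := fun hmem => (hiso _ hmem).2 rfl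
    have hnot2 : ((p, q) : Pt × Pt) ∉ M' := fun hmem => (hiso _ hmem).1 rfl
    by_cases hqp : q.1 < p.1
    · simp [addEdge, hqp, Finset.erase_insert hnot1]
    · simp [addEdge, hqp, Finset.erase_insert hnot2]
  · -- right inverse
    rintro ⟨M, e, b⟩ hy
    rw [Finset.mem_sigma, Finset.mem_product] at hy
    obtain ⟨hM, he, -⟩ := hy
    have hmat : IsMatching P M := (mem_Matchings_iff.mp hM).2.1
    have hx := hmat.x_lt e he
    have hne : ¬ e.2.1 < e.1.1 := not_lt.mpr hx.le
    cases b
    · -- b = false : p = e.1, q = e.2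
      simp [addEdge_erase_left hx he, hne, decide_eq_false hne, Prod.mk.eta]
    · -- b = true : p = e.2, q = e.1
      simp [addEdge_erase_right hx he, hx, decide_eq_true hx, Prod.mk.eta]
  · -- weights agree
    rintro ⟨M', p, q⟩ hx
    by_cases hqp : q.1 < p.1 <;> simp [hqp]

end AuxFinal

/-- For every integer `m ≥ 1`, writing `s = n − 2m`,
one has `(3n − 7s)·Ma_m(P) ≤ S_5(m)`. -/
theorem Ma_le_Ssum_five (P : Finset Pt) (hP : GenPos P) (m : ℕ) (hm : 1 ≤ m) :
    (3 * (P.card : ℤ) - 7 * ((P.card : ℤ) - 2 * m)) * Ma P m ≤ Ssum P 5 m := by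
  classical
  have key : (Ssum P 5 m : ℤ)
      = ∑ M ∈ Matchings P m, ∑ e ∈ M, ((Wt P M e.1 : ℤ) + (Wt P M e.2 : ℤ)) := by
    rw [Ssum_eq P hm]
    push_cast
    rfl
  have hbound : ∀ M ∈ Matchings P m,
      14 * (m : ℤ) - 4 * P.card ≤ ∑ e ∈ M, ((Wt P M e.1 : ℤ) + (Wt P M e.2 : ℤ)) :=
    fun M hM => per_matching hP hM
  have hmain : (14 * (m : ℤ) - 4 * P.card) * (Matchings P m).card ≤ Ssum P 5 m := by
    rw [key]
    calc (14 * (m : ℤ) - 4 * P.card) * (Matchings P m).card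
        = ∑ _M ∈ Matchings P m, (14 * (m : ℤ) - 4 * P.card) := by
          rw [Finset.sum_const, nsmul_eq_mul, mul_comm]
      _ ≤ _ := Finset.sum_le_sum hbound
  rw [Ma]
  have harith : (3 * (P.card : ℤ) - 7 * ((P.card : ℤ) - 2 * m))
      = 14 * (m : ℤ) - 4 * P.card := by ring
  rw [harith]
  exact hmain
end

section
/- Let M be a crossing-free matching of P, let p ∈ P be isolated in M, and suppose the left bifurcation point q of p exists and is isolated in M. Then for every point u ∈ P with x-coordinate smaller than that of p such that M ∪ {up} is a crossing-free matching of P and the rank of p in M ∪ {up} equals 0, one has u = q; in particular l_0(p,M) ≤ 1. -/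
open scoped Classical

namespace Aux

lemma seg_param {a b z : Pt} (h : z ∈ Seg a b) :
    ∃ t : ℝ, 0 ≤ t ∧ t ≤ 1 ∧ z.1 = a.1 + t * (b.1 - a.1) ∧ z.2 = a.2 + t * (b.2 - a.2) := by
  rw [Seg, segment_eq_image] at h
  obtain ⟨t, ht, hz⟩ := h
  have h1 := congrArg Prod.fst hz
  have h2 := congrArg Prod.snd hz
  simp at h1 h2
  exact ⟨t, ht.1, ht.2, by rw [← h1]; ring, by rw [← h2]; ring⟩

lemma seg_param_mem {a b : Pt} {t : ℝ} (h0 : 0 ≤ t) (h1 : t ≤ 1) :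
    ((a.1 + t * (b.1 - a.1), a.2 + t * (b.2 - a.2)) : Pt) ∈ Seg a b := by
  rw [Seg, segment_eq_image]
  refine ⟨t, ⟨h0, h1⟩, ?_⟩
  apply Prod.ext
  · simp; ring
  · simp; ring

lemma mem_seg_coords {e : Pt × Pt} (hx : e.1.1 < e.2.1) {z : Pt} (h : z ∈ Seg e.1 e.2) :
    e.1.1 ≤ z.1 ∧ z.1 ≤ e.2.1 ∧ z.2 = yOn e z.1 := by
  obtain ⟨t, h0, h1, hz1, hz2⟩ := seg_param h
  have hd : (0:ℝ) < e.2.1 - e.1.1 := by linarith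
  have ht : t = (z.1 - e.1.1) / (e.2.1 - e.1.1) := by
    rw [eq_div_iff (ne_of_gt hd)]; linarith [hz1]
  refine ⟨by nlinarith, by nlinarith, ?_⟩
  rw [yOn, hz2, ht]; field_simp

lemma yOn_mem_seg {e : Pt × Pt} (hx : e.1.1 < e.2.1) {x : ℝ}
    (h1 : e.1.1 ≤ x) (h2 : x ≤ e.2.1) : ((x, yOn e x) : Pt) ∈ Seg e.1 e.2 := by
  have hd : (0:ℝ) < e.2.1 - e.1.1 := by linarith
  have h := seg_param_mem (a := e.1) (b := e.2) (t := (x - e.1.1) / (e.2.1 - e.1.1))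
    (div_nonneg (by linarith) hd.le) (by rw [div_le_one hd]; linarith)
  have e1 : e.1.1 + (x - e.1.1) / (e.2.1 - e.1.1) * (e.2.1 - e.1.1) = x := by
    field_simp
    ring
  have e2 : e.1.2 + (x - e.1.1) / (e.2.1 - e.1.1) * (e.2.2 - e.1.2) = yOn e x := by
    rw [yOn]; field_simp
  rw [e1, e2] at h; exact h

lemma yOn_left (e : Pt × Pt) : yOn e e.1.1 = e.1.2 := by simp [yOn]

lemma yOn_right {e : Pt × Pt} (hx : e.1.1 < e.2.1) : yOn e e.2.1 = e.2.2 := by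
  have : e.2.1 - e.1.1 ≠ 0 := by linarith
  rw [yOn]; field_simp; ring

lemma collinear_of_mem_seg {a b z : Pt} (h : z ∈ Seg a b) :
    Collinear ℝ ({a, b, z} : Set Pt) := by
  obtain ⟨t, -, -, h1, h2⟩ := seg_param h
  rw [collinear_iff_of_mem (Set.mem_insert a _)]
  refine ⟨b - a, ?_⟩
  rintro w (rfl | rfl | rfl)
  · exact ⟨0, by simp⟩
  · exact ⟨1, by simp⟩
  · refine ⟨t, ?_⟩
    apply Prod.ext
    · simpa using by rw [h1]; ring
    · simpa using by rw [h2]; ring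

lemma yOn_continuous (e : Pt × Pt) : Continuous (fun v : Pt => yOn e v.1) := by
  unfold yOn; fun_prop

end Aux

namespace Aux

lemma mem_edgesSet {M : Finset (Pt × Pt)} {z : Pt} :
    z ∈ edgesSet M ↔ ∃ e ∈ M, z ∈ Seg e.1 e.2 := by
  simp [edgesSet]

lemma isClosed_seg (a b : Pt) : IsClosed (Seg a b) := by
  rw [Seg, segment_eq_image]
  exact (isCompact_Icc.image (by fun_prop)).isClosed

lemma isClosed_edgesSet (M : Finset (Pt × Pt)) : IsClosed (edgesSet M) := by
  have : edgesSet M = ⋃ e ∈ M, Seg e.1 e.2 := rfl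
  rw [this]
  apply M.finite_toSet.isClosed_biUnion
  intro e _
  exact isClosed_seg e.1 e.2

lemma genpos_eq_of_abscissa {P : Finset Pt} (hP : GenPos P) {a b : Pt}
    (ha : a ∈ P) (hb : b ∈ P) (h : a.1 = b.1) : a = b := by
  by_contra hne
  exact hP.2 a ha b hb hne h

lemma pt_on_edge_endpoint {P : Finset Pt} {M : Finset (Pt × Pt)} (hP : GenPos P)
    (hM : IsMatching P M) {r : Pt} {e : Pt × Pt} (hr : r ∈ P) (he : e ∈ M)
    (hmem : r ∈ Seg e.1 e.2) : r = e.1 ∨ r = e.2 := by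
  by_contra hne
  push_neg at hne
  have hx := hM.x_lt e he
  have h12 : e.1 ≠ e.2 := fun h => by rw [h] at hx; exact lt_irrefl _ hx
  exact hP.1 e.1 (hM.left_mem e he) e.2 (hM.right_mem e he) r hr h12 (Ne.symm hne.2)
    (Ne.symm hne.1) (collinear_of_mem_seg hmem)

lemma isolated_not_mem_edgesSet {P : Finset Pt} {M : Finset (Pt × Pt)} (hP : GenPos P)
    (hM : IsMatching P M) {p : Pt} (hp : p ∈ P) (hiso : Isolated M p) :
    p ∉ edgesSet M := by
  intro hmem
  rw [mem_edgesSet] at hmem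
  obtain ⟨e, he, hm⟩ := hmem
  rcases pt_on_edge_endpoint hP hM hp he hm with h | h
  · exact (hiso e he).1 h.symm
  · exact (hiso e he).2 h.symm

lemma mem_wall_self (M : Finset (Pt × Pt)) (r : Pt) : r ∈ Wall M r := by
  refine ⟨rfl, fun z hz1 hz2 hz3 => ?_⟩
  exfalso
  apply hz3
  have : z.2 = r.2 := by simpa [Set.uIcc_self] using hz2
  exact Prod.ext hz1 this

lemma wall_abscissa {M : Finset (Pt × Pt)} {z r : Pt} (h : z ∈ Wall M r) : z.1 = r.1 := h.1

lemma pt_not_mem_freeRegion {P : Finset Pt} {M : Finset (Pt × Pt)} {r : Pt} (hr : r ∈ P) :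
    r ∉ FreeRegion P M := by
  intro h
  exact h (Set.mem_union_right _ (Set.mem_biUnion hr (mem_wall_self M r)))

lemma freeRegion_not_edge {P : Finset Pt} {M : Finset (Pt × Pt)} {z : Pt}
    (h : z ∈ FreeRegion P M) : z ∉ edgesSet M := fun h' => h (Set.mem_union_left _ h')

lemma freeRegion_not_wall {P : Finset Pt} {M : Finset (Pt × Pt)} {z : Pt}
    (h : z ∈ FreeRegion P M) {r : Pt} (hr : r ∈ P) : z ∉ Wall M r :=
  fun h' => h (Set.mem_union_right _ (Set.mem_biUnion hr h'))

/-- extraction: if `z` is free and on the vertical line of `s ∈ P`, there is an edge point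
strictly between `z` and `s`. -/
lemma wall_extract {P : Finset Pt} {M : Finset (Pt × Pt)} {z s : Pt}
    (hz : z ∈ FreeRegion P M) (hs : s ∈ P) (hx : z.1 = s.1) :
    ∃ w : Pt, w.1 = s.1 ∧ w.2 ∈ Set.uIcc z.2 s.2 ∧ w.2 ≠ z.2 ∧ w.2 ≠ s.2 ∧ w ∈ edgesSet M := by
  have hnw := freeRegion_not_wall hz hs
  simp only [Wall, Set.mem_setOf_eq, not_and, not_forall] at hnw
  obtain ⟨w, hw1, hw2, hw3, hw4⟩ := hnw hx
  rw [not_not] at hw4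
  refine ⟨w, hw1, hw2, ?_, ?_, hw4⟩
  · intro h
    have : w = z := Prod.ext (hw1.trans hx.symm) h
    exact freeRegion_not_edge hz (this ▸ hw4)
  · intro h
    exact hw3 (Prod.ext hw1 h)

lemma isOpen_freeRegion (P : Finset Pt) (M : Finset (Pt × Pt)) :
    IsOpen (FreeRegion P M) := by
  rw [isOpen_iff_forall_mem_open]
  intro z hz
  classical
  have hOr : ∀ r : Pt, ∃ O : Set Pt, IsOpen O ∧ z ∈ O ∧ (r ∈ P → O ∩ Wall M r = ∅) := by
    intro r
    by_cases hrP : r ∈ P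
    swap
    · exact ⟨Set.univ, isOpen_univ, trivial, fun h => absurd h hrP⟩
    by_cases hxr : z.1 = r.1
    · obtain ⟨w, hw1, hw2, hw3, hw4, hw5⟩ := wall_extract hz hrP hxr
      refine ⟨{v : Pt | |v.2 - z.2| < |w.2 - z.2|}, ?_, ?_, fun _ => ?_⟩
      · exact isOpen_lt (by fun_prop) continuous_const
      · simp only [Set.mem_setOf_eq, sub_self, abs_zero]
        exact abs_pos.mpr (sub_ne_zero.mpr hw3)
      · ext v
        simp only [Set.mem_inter_iff, Set.mem_setOf_eq, Set.mem_empty_iff_false, iff_false,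
          not_and]
        intro hv hvw
        have hv1 : v.1 = r.1 := wall_abscissa hvw
        have hwne : w ≠ r := fun h => hw4 (congrArg Prod.snd h)
        have habs := abs_lt.mp hv
        have hmem : w.2 ∈ Set.uIcc v.2 r.2 := by
          rw [Set.mem_uIcc] at hw2 ⊢
          rcases hw2 with ⟨h1, h2⟩ | ⟨h1, h2⟩
          · -- z.2 ≤ w.2 ≤ r.2, w.2 ≠ z.2 so z.2 < w.2, |w.2-z.2| = w.2-z.2
            have : |w.2 - z.2| = w.2 - z.2 := abs_of_pos (by rcases lt_or_eq_of_le h1 with h|h; linarith; exact absurd h.symm hw3)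
            rw [this] at habs
            left; constructor <;> linarith
          · have : |w.2 - z.2| = z.2 - w.2 := by
              rw [abs_sub_comm]; exact abs_of_pos (by rcases lt_or_eq_of_le h2 with h|h; linarith; exact absurd h hw3)
            rw [this] at habs
            right; constructor <;> linarith
        exact hvw.2 w (hw1.trans hv1.symm ▸ hw1) hmem hwne hw5
    · refine ⟨{v : Pt | v.1 ≠ r.1}, ?_, hxr, fun _ => ?_⟩
      · exact isOpen_ne_fun continuous_fst continuous_const
      · ext v
        simp only [Set.mem_inter_iff, Set.mem_setOf_eq, Set.mem_empty_iff_false, iff_false,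
          not_and]
        intro hv hvw
        exact hv (wall_abscissa hvw)
  choose O hO1 hO2 hO3 using hOr
  refine ⟨(edgesSet M)ᶜ ∩ ⋂ r ∈ P, O r, ?_, ?_, ?_⟩
  · rintro v ⟨hv1, hv2⟩ hbad
    rcases hbad with h | h
    · exact hv1 h
    · obtain ⟨S, ⟨r, rfl⟩, hS⟩ := h
      simp only [Set.mem_iUnion] at hS
      obtain ⟨hrP, hvw⟩ := hS
      have := hO3 r hrP
      rw [Set.eq_empty_iff_forall_notMem] at this
      exact this v ⟨by simp only [Set.mem_iInter] at hv2; exact hv2 r hrP, hvw⟩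
  · exact ((isClosed_edgesSet M).isOpen_compl).inter (isOpen_biInter_finset fun r _ => hO1 r)
  · exact ⟨freeRegion_not_edge hz, Set.mem_biInter fun r hr => hO2 r⟩

end Aux

namespace Aux

lemma finset_pos_min {α : Type*} (s : Finset α) (f : α → ℝ) (h : ∀ a ∈ s, 0 < f a) :
    ∃ ρ : ℝ, 0 < ρ ∧ ∀ a ∈ s, ρ ≤ f a := by
  classical
  by_cases hs : s.Nonempty
  · refine ⟨min 1 (s.inf' hs f), lt_min one_pos ?_, fun a ha => ?_⟩
    · obtain ⟨a, ha, hfa⟩ := s.exists_mem_eq_inf' hs f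
      rw [hfa]; exact h a ha
    · exact le_trans (min_le_right _ _) (Finset.inf'_le f ha)
  · exact ⟨1, one_pos, fun a ha => absurd (⟨a, ha⟩ : s.Nonempty) hs⟩

/-- Edges of `M` strictly below `z` (vertically), with weak span. -/
noncomputable def FB (M : Finset (Pt × Pt)) (z : Pt) : Finset (Pt × Pt) :=
  M.filter (fun e => e.1.1 ≤ z.1 ∧ z.1 ≤ e.2.1 ∧ yOn e z.1 < z.2)

/-- Edges of `M` strictly above `z`. -/
noncomputable def FA (M : Finset (Pt × Pt)) (z : Pt) : Finset (Pt × Pt) :=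
  M.filter (fun e => e.1.1 ≤ z.1 ∧ z.1 ≤ e.2.1 ∧ z.2 < yOn e z.1)

lemma mem_FB {M : Finset (Pt × Pt)} {z : Pt} {e : Pt × Pt} :
    e ∈ FB M z ↔ e ∈ M ∧ e.1.1 ≤ z.1 ∧ z.1 ≤ e.2.1 ∧ yOn e z.1 < z.2 := by
  simp [FB, Finset.mem_filter, and_assoc]

lemma mem_FA {M : Finset (Pt × Pt)} {z : Pt} {e : Pt × Pt} :
    e ∈ FA M z ↔ e ∈ M ∧ e.1.1 ≤ z.1 ∧ z.1 ≤ e.2.1 ∧ z.2 < yOn e z.1 := by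
  simp [FA, Finset.mem_filter, and_assoc]

def IsFloor (M : Finset (Pt × Pt)) (z : Pt) (F : Pt × Pt) : Prop :=
  F ∈ FB M z ∧ ∀ e ∈ FB M z, yOn e z.1 ≤ yOn F z.1

def IsCeil (M : Finset (Pt × Pt)) (z : Pt) (C : Pt × Pt) : Prop :=
  C ∈ FA M z ∧ ∀ e ∈ FA M z, yOn C z.1 ≤ yOn e z.1

variable {P : Finset Pt} {M : Finset (Pt × Pt)}

lemma exists_floor {z : Pt} (h : (FB M z).Nonempty) : ∃ F, IsFloor M z F := by
  obtain ⟨F, hF, hmax⟩ := Finset.exists_max_image (FB M z) (fun e => yOn e z.1) h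
  exact ⟨F, hF, hmax⟩

lemma exists_ceil {z : Pt} (h : (FA M z).Nonempty) : ∃ C, IsCeil M z C := by
  obtain ⟨C, hC, hmin⟩ := Finset.exists_min_image (FA M z) (fun e => yOn e z.1) h
  exact ⟨C, hC, hmin⟩

/-- Two edges of a matching crossing the same vertical line at the same height coincide. -/
lemma edge_eq_of_yOn_eq (hM : IsMatching P M) {e f : Pt × Pt} {x : ℝ}
    (he : e ∈ M) (hf : f ∈ M)
    (hxe1 : e.1.1 ≤ x) (hxe2 : x ≤ e.2.1) (hxf1 : f.1.1 ≤ x) (hxf2 : x ≤ f.2.1)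
    (hy : yOn e x = yOn f x) : e = f := by
  by_contra hne
  have h1 : ((x, yOn e x) : Pt) ∈ Seg e.1 e.2 := yOn_mem_seg (hM.x_lt e he) hxe1 hxe2
  have h2 : ((x, yOn e x) : Pt) ∈ Seg f.1 f.2 := by
    rw [hy]; exact yOn_mem_seg (hM.x_lt f hf) hxf1 hxf2
  have := hM.no_cross e he f hf hne
  rw [Set.eq_empty_iff_forall_notMem] at this
  exact this _ ⟨h1, h2⟩

lemma floor_unique (hM : IsMatching P M) {z : Pt} {F F' : Pt × Pt}
    (h : IsFloor M z F) (h' : IsFloor M z F') : F = F' := by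
  obtain ⟨hF, hmax⟩ := h
  obtain ⟨hF', hmax'⟩ := h'
  rw [mem_FB] at hF hF'
  exact edge_eq_of_yOn_eq hM hF.1 hF'.1 hF.2.1 hF.2.2.1 hF'.2.1 hF'.2.2.1
    (le_antisymm (hmax' F (mem_FB.mpr hF)) (hmax F' (mem_FB.mpr hF')))

lemma ceil_unique (hM : IsMatching P M) {z : Pt} {C C' : Pt × Pt}
    (h : IsCeil M z C) (h' : IsCeil M z C') : C = C' := by
  obtain ⟨hC, hmin⟩ := h
  obtain ⟨hC', hmin'⟩ := h'
  rw [mem_FA] at hC hC'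
  exact edge_eq_of_yOn_eq hM hC.1 hC'.1 hC.2.1 hC.2.2.1 hC'.2.1 hC'.2.2.1
    (le_antisymm (hmin C' (mem_FA.mpr hC')) (hmin' C (mem_FA.mpr hC)))

/-- An edge point strictly below a free point `z` on its vertical yields a member of `FB`. -/
lemma FB_of_edgept (hM : IsMatching P M) {z w : Pt}
    (hw : w ∈ edgesSet M) (hx : w.1 = z.1) (hy : w.2 < z.2) :
    ∃ e ∈ FB M z, yOn e z.1 = w.2 := by
  rw [mem_edgesSet] at hw
  obtain ⟨e, he, hmem⟩ := hw
  obtain ⟨h1, h2, h3⟩ := mem_seg_coords (hM.x_lt e he) hmem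
  rw [hx] at h1 h2 h3
  exact ⟨e, mem_FB.mpr ⟨he, h1, h2, by rw [← h3]; exact hy⟩, h3.symm⟩

lemma FA_of_edgept (hM : IsMatching P M) {z w : Pt}
    (hw : w ∈ edgesSet M) (hx : w.1 = z.1) (hy : z.2 < w.2) :
    ∃ e ∈ FA M z, yOn e z.1 = w.2 := by
  rw [mem_edgesSet] at hw
  obtain ⟨e, he, hmem⟩ := hw
  obtain ⟨h1, h2, h3⟩ := mem_seg_coords (hM.x_lt e he) hmem
  rw [hx] at h1 h2 h3
  exact ⟨e, mem_FA.mpr ⟨he, h1, h2, by rw [← h3]; exact hy⟩, h3.symm⟩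

/-- The floor of a free point touches the vertical of `z` strictly inside its span. -/
lemma floor_span_strict (hP : GenPos P) (hM : IsMatching P M) {z : Pt} {F : Pt × Pt}
    (hz : z ∈ FreeRegion P M) (hF : IsFloor M z F) :
    F.1.1 < z.1 ∧ z.1 < F.2.1 := by
  obtain ⟨hFmem, hmax⟩ := hF
  rw [mem_FB] at hFmem
  obtain ⟨hFM, h1, h2, h3⟩ := hFmem
  have key : ∀ s : Pt, s ∈ P → z.1 = s.1 → s.2 = yOn F z.1 → False := by
    intro s hs hx hy
    obtain ⟨w, hw1, hw2, hw3, hw4, hw5⟩ := wall_extract hz hs hx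
    have hlt : s.2 < z.2 := by rw [hy]; exact h3
    rw [Set.mem_uIcc] at hw2
    have hw2' : s.2 < w.2 ∧ w.2 < z.2 := by
      rcases hw2 with ⟨ha, hb⟩ | ⟨ha, hb⟩
      · exact absurd (le_trans ha hb) (not_le.mpr hlt)
      · exact ⟨lt_of_le_of_ne ha (Ne.symm hw4), lt_of_le_of_ne hb hw3⟩
    obtain ⟨e, heFB, hey⟩ := FB_of_edgept hM hw5 (hw1.trans hx.symm) hw2'.2
    have := hmax e heFB
    rw [hey, ← hy] at this
    exact absurd this (not_le.mpr hw2'.1)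
  constructor
  · rcases lt_or_eq_of_le h1 with h | h
    · exact h
    exact (key F.1 (hM.left_mem F hFM) h.symm (by rw [← h]; exact (yOn_left F).symm)).elim
  · rcases lt_or_eq_of_le h2 with h | h
    · exact h
    exact (key F.2 (hM.right_mem F hFM) h (by rw [h]; exact (yOn_right (hM.x_lt F hFM)).symm)).elim

lemma ceil_span_strict (hP : GenPos P) (hM : IsMatching P M) {z : Pt} {C : Pt × Pt}
    (hz : z ∈ FreeRegion P M) (hC : IsCeil M z C) :
    C.1.1 < z.1 ∧ z.1 < C.2.1 := by
  obtain ⟨hCmem, hmin⟩ := hC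
  rw [mem_FA] at hCmem
  obtain ⟨hCM, h1, h2, h3⟩ := hCmem
  have key : ∀ s : Pt, s ∈ P → z.1 = s.1 → s.2 = yOn C z.1 → False := by
    intro s hs hx hy
    obtain ⟨w, hw1, hw2, hw3, hw4, hw5⟩ := wall_extract hz hs hx
    have hlt : z.2 < s.2 := by rw [hy]; exact h3
    rw [Set.mem_uIcc] at hw2
    have hw2' : z.2 < w.2 ∧ w.2 < s.2 := by
      rcases hw2 with ⟨ha, hb⟩ | ⟨ha, hb⟩
      · exact ⟨lt_of_le_of_ne ha (Ne.symm hw3), lt_of_le_of_ne hb hw4⟩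
      · exact absurd (le_trans ha hb) (not_le.mpr hlt)
    obtain ⟨e, heFA, hey⟩ := FA_of_edgept hM hw5 (hw1.trans hx.symm) hw2'.1
    have := hmin e heFA
    rw [hey, ← hy] at this
    exact absurd this (not_le.mpr hw2'.2)
  constructor
  · rcases lt_or_eq_of_le h1 with h | h
    · exact h
    exact (key C.1 (hM.left_mem C hCM) h.symm (by rw [← h]; exact (yOn_left C).symm)).elim
  · rcases lt_or_eq_of_le h2 with h | h
    · exact h
    exact (key C.2 (hM.right_mem C hCM) h (by rw [h]; exact (yOn_right (hM.x_lt C hCM)).symm)).elim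

end Aux

namespace Aux

variable {P : Finset Pt} {M : Finset (Pt × Pt)}

/-- abscissa separation radius -/
lemma abscissa_gap (P : Finset Pt) (x : ℝ) :
    ∃ ρ : ℝ, 0 < ρ ∧ ∀ r ∈ P, r.1 ≠ x → ρ ≤ |r.1 - x| := by
  classical
  obtain ⟨ρ, hρ, h⟩ := finset_pos_min (P.filter (fun r => r.1 ≠ x)) (fun r => |r.1 - x|)
    (fun r hr => abs_pos.mpr (sub_ne_zero.mpr (Finset.mem_filter.mp hr).2))
  exact ⟨ρ, hρ, fun r hr hne => h r (Finset.mem_filter.mpr ⟨hr, hne⟩)⟩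

lemma floor_local (hP : GenPos P) (hM : IsMatching P M) {z : Pt} {F : Pt × Pt}
    (hz : z ∈ FreeRegion P M) (hF : IsFloor M z F) :
    ∃ O : Set Pt, IsOpen O ∧ z ∈ O ∧
      ∀ z' ∈ O, z' ∈ FreeRegion P M → IsFloor M z' F := by
  classical
  obtain ⟨ρ₁, hρ₁, hgap⟩ := abscissa_gap P z.1
  obtain ⟨hs1, hs2⟩ := floor_span_strict hP hM hz hF
  obtain ⟨hFmem, hmax⟩ := hF
  have hFM : F ∈ M := (mem_FB.mp hFmem).1
  have hFy : yOn F z.1 < z.2 := (mem_FB.mp hFmem).2.2.2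
  refine ⟨{v : Pt | |v.1 - z.1| < ρ₁} ∩ {v : Pt | F.1.1 < v.1 ∧ v.1 < F.2.1} ∩
      {v : Pt | yOn F v.1 < v.2} ∩
      (⋂ e ∈ M.filter (fun e => z.2 < yOn e z.1), {v : Pt | v.2 < yOn e v.1}) ∩
      (⋂ e ∈ M.filter (fun e => yOn e z.1 < yOn F z.1), {v : Pt | yOn e v.1 < yOn F v.1}),
    ?_, ?_, ?_⟩
  · refine (((?_ : IsOpen _).inter ?_).inter ?_).inter ?_ |>.inter ?_
    · exact isOpen_lt (by fun_prop) continuous_const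
    · exact (isOpen_lt continuous_const continuous_fst).inter
        (isOpen_lt continuous_fst continuous_const)
    · exact isOpen_lt (yOn_continuous F) continuous_snd
    · exact isOpen_biInter_finset fun e _ => isOpen_lt continuous_snd (yOn_continuous e)
    · exact isOpen_biInter_finset fun e _ =>
        isOpen_lt (yOn_continuous e) (yOn_continuous F)
  · refine ⟨⟨⟨⟨?_, hs1, hs2⟩, hFy⟩, ?_⟩, ?_⟩
    · simpa using hρ₁
    · exact Set.mem_biInter fun e he => (Finset.mem_filter.mp he).2
    · exact Set.mem_biInter fun e he => (Finset.mem_filter.mp he).2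
  · rintro z' ⟨⟨⟨⟨hz'1, hz'2⟩, hz'3⟩, hz'4⟩, hz'5⟩ hz'free
    have hFmem' : F ∈ FB M z' := mem_FB.mpr ⟨hFM, hz'2.1.le, hz'2.2.le, hz'3⟩
    refine ⟨hFmem', ?_⟩
    intro e he
    rw [mem_FB] at he
    obtain ⟨heM, he1, he2, he3⟩ := he
    -- the span of e must contain z.1 as well
    have hz'1' : |z'.1 - z.1| < ρ₁ := hz'1
    obtain ⟨ha, hb⟩ := abs_lt.mp hz'1'
    have hspan : e.1.1 ≤ z.1 ∧ z.1 ≤ e.2.1 := by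
      constructor
      · by_contra hlt
        push_neg at hlt
        have hg := hgap e.1 (hM.left_mem e heM) (ne_of_gt hlt)
        rw [abs_of_pos (by linarith : (0:ℝ) < e.1.1 - z.1)] at hg
        linarith [he1]
      · by_contra hlt
        push_neg at hlt
        have hg := hgap e.2 (hM.right_mem e heM) (ne_of_lt hlt)
        rw [abs_of_neg (by linarith : e.2.1 - z.1 < 0)] at hg
        linarith [he2]
    -- now compare yOn e z.1 with z.2
    rcases lt_trichotomy (yOn e z.1) z.2 with hy | hy | hy
    · -- e ∈ FB M z
      have heFB : e ∈ FB M z := mem_FB.mpr ⟨heM, hspan.1, hspan.2, hy⟩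
      rcases lt_or_eq_of_le (hmax e heFB) with hlt | heq
      · exact (Set.mem_iInter₂.mp hz'5 e (Finset.mem_filter.mpr ⟨heM, hlt⟩)).le
      · -- equal heights: e = F
        have : e = F := edge_eq_of_yOn_eq hM heM hFM hspan.1 hspan.2 hs1.le hs2.le heq
        rw [this]
    · -- z on e: contradiction
      exfalso
      have : z ∈ Seg e.1 e.2 := by
        have := yOn_mem_seg (hM.x_lt e heM) hspan.1 hspan.2
        rwa [hy, Prod.mk.eta] at this
      exact freeRegion_not_edge hz (mem_edgesSet.mpr ⟨e, heM, this⟩)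
    · -- e above z: O₄ excludes it from FB z'
      exfalso
      have hmem4 : z' ∈ {v : Pt | v.2 < yOn e v.1} := by
        have := hz'4
        rw [Set.mem_iInter₂] at this
        exact this e (Finset.mem_filter.mpr ⟨heM, hy⟩)
      exact absurd he3 (not_lt.mpr hmem4.le)

end Aux

namespace Aux

variable {P : Finset Pt} {M : Finset (Pt × Pt)}

lemma nofloor_local (hP : GenPos P) (hM : IsMatching P M) {z : Pt}
    (hz : z ∈ FreeRegion P M) (h : FB M z = ∅) :
    ∃ O : Set Pt, IsOpen O ∧ z ∈ O ∧
      ∀ z' ∈ O, z' ∈ FreeRegion P M → FB M z' = ∅ := by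
  classical
  obtain ⟨ρ₁, hρ₁, hgap⟩ := abscissa_gap P z.1
  refine ⟨{v : Pt | |v.1 - z.1| < ρ₁} ∩
      (⋂ e ∈ M.filter (fun e => z.2 < yOn e z.1), {v : Pt | v.2 < yOn e v.1}), ?_, ?_, ?_⟩
  · exact (isOpen_lt (by fun_prop) continuous_const).inter
      (isOpen_biInter_finset fun e _ => isOpen_lt continuous_snd (yOn_continuous e))
  · exact ⟨by simpa using hρ₁, Set.mem_biInter fun e he => (Finset.mem_filter.mp he).2⟩
  · rintro z' ⟨hz'1, hz'4⟩ hz'free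
    rw [Finset.eq_empty_iff_forall_notMem]
    intro e he
    rw [mem_FB] at he
    obtain ⟨heM, he1, he2, he3⟩ := he
    have hz'1' : |z'.1 - z.1| < ρ₁ := hz'1
    obtain ⟨ha, hb⟩ := abs_lt.mp hz'1'
    have hspan : e.1.1 ≤ z.1 ∧ z.1 ≤ e.2.1 := by
      constructor
      · by_contra hlt
        push_neg at hlt
        have hg := hgap e.1 (hM.left_mem e heM) (ne_of_gt hlt)
        rw [abs_of_pos (by linarith : (0:ℝ) < e.1.1 - z.1)] at hg
        linarith [he1]
      · by_contra hlt
        push_neg at hlt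
        have hg := hgap e.2 (hM.right_mem e heM) (ne_of_lt hlt)
        rw [abs_of_neg (by linarith : e.2.1 - z.1 < 0)] at hg
        linarith [he2]
    rcases lt_trichotomy (yOn e z.1) z.2 with hy | hy | hy
    · have heFB : e ∈ FB M z := mem_FB.mpr ⟨heM, hspan.1, hspan.2, hy⟩
      rw [h] at heFB
      exact absurd heFB (Finset.notMem_empty e)
    · have : z ∈ Seg e.1 e.2 := by
        have := yOn_mem_seg (hM.x_lt e heM) hspan.1 hspan.2
        rwa [hy, Prod.mk.eta] at this
      exact freeRegion_not_edge hz (mem_edgesSet.mpr ⟨e, heM, this⟩)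
    · have hmem4 : z' ∈ {v : Pt | v.2 < yOn e v.1} :=
        Set.mem_iInter₂.mp hz'4 e (Finset.mem_filter.mpr ⟨heM, hy⟩)
      exact absurd he3 (not_lt.mpr hmem4.le)

lemma ceil_local (hP : GenPos P) (hM : IsMatching P M) {z : Pt} {C : Pt × Pt}
    (hz : z ∈ FreeRegion P M) (hC : IsCeil M z C) :
    ∃ O : Set Pt, IsOpen O ∧ z ∈ O ∧
      ∀ z' ∈ O, z' ∈ FreeRegion P M → IsCeil M z' C := by
  classical
  obtain ⟨ρ₁, hρ₁, hgap⟩ := abscissa_gap P z.1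
  obtain ⟨hs1, hs2⟩ := ceil_span_strict hP hM hz hC
  obtain ⟨hCmem, hmin⟩ := hC
  have hCM : C ∈ M := (mem_FA.mp hCmem).1
  have hCy : z.2 < yOn C z.1 := (mem_FA.mp hCmem).2.2.2
  refine ⟨{v : Pt | |v.1 - z.1| < ρ₁} ∩ {v : Pt | C.1.1 < v.1 ∧ v.1 < C.2.1} ∩
      {v : Pt | v.2 < yOn C v.1} ∩
      (⋂ e ∈ M.filter (fun e => yOn e z.1 < z.2), {v : Pt | yOn e v.1 < v.2}) ∩
      (⋂ e ∈ M.filter (fun e => yOn C z.1 < yOn e z.1), {v : Pt | yOn C v.1 < yOn e v.1}),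
    ?_, ?_, ?_⟩
  · refine (((?_ : IsOpen _).inter ?_).inter ?_).inter ?_ |>.inter ?_
    · exact isOpen_lt (by fun_prop) continuous_const
    · exact (isOpen_lt continuous_const continuous_fst).inter
        (isOpen_lt continuous_fst continuous_const)
    · exact isOpen_lt continuous_snd (yOn_continuous C)
    · exact isOpen_biInter_finset fun e _ => isOpen_lt (yOn_continuous e) continuous_snd
    · exact isOpen_biInter_finset fun e _ =>
        isOpen_lt (yOn_continuous C) (yOn_continuous e)
  · refine ⟨⟨⟨⟨?_, hs1, hs2⟩, hCy⟩, ?_⟩, ?_⟩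
    · simpa using hρ₁
    · exact Set.mem_biInter fun e he => (Finset.mem_filter.mp he).2
    · exact Set.mem_biInter fun e he => (Finset.mem_filter.mp he).2
  · rintro z' ⟨⟨⟨⟨hz'1, hz'2⟩, hz'3⟩, hz'4⟩, hz'5⟩ hz'free
    have hCmem' : C ∈ FA M z' := mem_FA.mpr ⟨hCM, hz'2.1.le, hz'2.2.le, hz'3⟩
    refine ⟨hCmem', ?_⟩
    intro e he
    rw [mem_FA] at he
    obtain ⟨heM, he1, he2, he3⟩ := he
    have hz'1' : |z'.1 - z.1| < ρ₁ := hz'1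
    obtain ⟨ha, hb⟩ := abs_lt.mp hz'1'
    have hspan : e.1.1 ≤ z.1 ∧ z.1 ≤ e.2.1 := by
      constructor
      · by_contra hlt
        push_neg at hlt
        have hg := hgap e.1 (hM.left_mem e heM) (ne_of_gt hlt)
        rw [abs_of_pos (by linarith : (0:ℝ) < e.1.1 - z.1)] at hg
        linarith [he1]
      · by_contra hlt
        push_neg at hlt
        have hg := hgap e.2 (hM.right_mem e heM) (ne_of_lt hlt)
        rw [abs_of_neg (by linarith : e.2.1 - z.1 < 0)] at hg
        linarith [he2]
    rcases lt_trichotomy (yOn e z.1) z.2 with hy | hy | hy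
    · exfalso
      have hmem4 : z' ∈ {v : Pt | yOn e v.1 < v.2} :=
        Set.mem_iInter₂.mp hz'4 e (Finset.mem_filter.mpr ⟨heM, hy⟩)
      exact absurd he3 (not_lt.mpr hmem4.le)
    · exfalso
      have : z ∈ Seg e.1 e.2 := by
        have := yOn_mem_seg (hM.x_lt e heM) hspan.1 hspan.2
        rwa [hy, Prod.mk.eta] at this
      exact freeRegion_not_edge hz (mem_edgesSet.mpr ⟨e, heM, this⟩)
    · have heFA : e ∈ FA M z := mem_FA.mpr ⟨heM, hspan.1, hspan.2, hy⟩
      rcases lt_or_eq_of_le (hmin e heFA) with hlt | heq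
      · exact (Set.mem_iInter₂.mp hz'5 e (Finset.mem_filter.mpr ⟨heM, hlt⟩)).le
      · have : C = e := edge_eq_of_yOn_eq hM hCM heM hs1.le hs2.le hspan.1 hspan.2 heq
        rw [← this]

lemma noceil_local (hP : GenPos P) (hM : IsMatching P M) {z : Pt}
    (hz : z ∈ FreeRegion P M) (h : FA M z = ∅) :
    ∃ O : Set Pt, IsOpen O ∧ z ∈ O ∧
      ∀ z' ∈ O, z' ∈ FreeRegion P M → FA M z' = ∅ := by
  classical
  obtain ⟨ρ₁, hρ₁, hgap⟩ := abscissa_gap P z.1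
  refine ⟨{v : Pt | |v.1 - z.1| < ρ₁} ∩
      (⋂ e ∈ M.filter (fun e => yOn e z.1 < z.2), {v : Pt | yOn e v.1 < v.2}), ?_, ?_, ?_⟩
  · exact (isOpen_lt (by fun_prop) continuous_const).inter
      (isOpen_biInter_finset fun e _ => isOpen_lt (yOn_continuous e) continuous_snd)
  · exact ⟨by simpa using hρ₁, Set.mem_biInter fun e he => (Finset.mem_filter.mp he).2⟩
  · rintro z' ⟨hz'1, hz'4⟩ hz'free
    rw [Finset.eq_empty_iff_forall_notMem]
    intro e he
    rw [mem_FA] at he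
    obtain ⟨heM, he1, he2, he3⟩ := he
    have hz'1' : |z'.1 - z.1| < ρ₁ := hz'1
    obtain ⟨ha, hb⟩ := abs_lt.mp hz'1'
    have hspan : e.1.1 ≤ z.1 ∧ z.1 ≤ e.2.1 := by
      constructor
      · by_contra hlt
        push_neg at hlt
        have hg := hgap e.1 (hM.left_mem e heM) (ne_of_gt hlt)
        rw [abs_of_pos (by linarith : (0:ℝ) < e.1.1 - z.1)] at hg
        linarith [he1]
      · by_contra hlt
        push_neg at hlt
        have hg := hgap e.2 (hM.right_mem e heM) (ne_of_lt hlt)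
        rw [abs_of_neg (by linarith : e.2.1 - z.1 < 0)] at hg
        linarith [he2]
    rcases lt_trichotomy (yOn e z.1) z.2 with hy | hy | hy
    · have hmem4 : z' ∈ {v : Pt | yOn e v.1 < v.2} :=
        Set.mem_iInter₂.mp hz'4 e (Finset.mem_filter.mpr ⟨heM, hy⟩)
      exact absurd he3 (not_lt.mpr hmem4.le)
    · have : z ∈ Seg e.1 e.2 := by
        have := yOn_mem_seg (hM.x_lt e heM) hspan.1 hspan.2
        rwa [hy, Prod.mk.eta] at this
      exact freeRegion_not_edge hz (mem_edgesSet.mpr ⟨e, heM, this⟩)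
    · have heFA : e ∈ FA M z := mem_FA.mpr ⟨heM, hspan.1, hspan.2, hy⟩
      rw [h] at heFA
      exact absurd heFA (Finset.notMem_empty e)

end Aux

namespace Aux

variable {P : Finset Pt} {M : Finset (Pt × Pt)}

lemma preconnected_all {T : Set Pt} (hTc : IsPreconnected T) (Q : Pt → Prop)
    (hloc : ∀ z ∈ T, ∃ O : Set Pt, IsOpen O ∧ z ∈ O ∧ ∀ z' ∈ O ∩ T, (Q z' ↔ Q z))
    {z₀ : Pt} (hz₀ : z₀ ∈ T) (hQ : Q z₀) : ∀ z ∈ T, Q z := by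
  classical
  have hloc' : ∀ z : Pt, ∃ O : Set Pt,
      z ∈ T → (IsOpen O ∧ z ∈ O ∧ ∀ z' ∈ O ∩ T, (Q z' ↔ Q z)) := by
    intro z
    by_cases hz : z ∈ T
    · obtain ⟨O, h⟩ := hloc z hz
      exact ⟨O, fun _ => h⟩
    · exact ⟨∅, fun h => absurd h hz⟩
  choose O hO using hloc'
  by_contra hbad
  push_neg at hbad
  obtain ⟨z₁, hz₁, hQz₁⟩ := hbad
  set U : Set Pt := ⋃ z ∈ {z : Pt | z ∈ T ∧ Q z}, O z with hU
  set V : Set Pt := ⋃ z ∈ {z : Pt | z ∈ T ∧ ¬ Q z}, O z with hV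
  have hUo : IsOpen U := isOpen_biUnion fun z hz => (hO z hz.1).1
  have hVo : IsOpen V := isOpen_biUnion fun z hz => (hO z hz.1).1
  have hcover : T ⊆ U ∪ V := by
    intro z hz
    by_cases hq : Q z
    · exact Set.mem_union_left _ (Set.mem_biUnion ⟨hz, hq⟩ (hO z hz).2.1)
    · exact Set.mem_union_right _ (Set.mem_biUnion ⟨hz, hq⟩ (hO z hz).2.1)
  have hne1 : (T ∩ U).Nonempty := ⟨z₀, hz₀, Set.mem_biUnion ⟨hz₀, hQ⟩ (hO z₀ hz₀).2.1⟩
  have hne2 : (T ∩ V).Nonempty := ⟨z₁, hz₁, Set.mem_biUnion ⟨hz₁, hQz₁⟩ (hO z₁ hz₁).2.1⟩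
  obtain ⟨v, hvT, hvU, hvV⟩ := hTc U V hUo hVo hcover hne1 hne2
  obtain ⟨a, ⟨haT, haQ⟩, hva⟩ := Set.mem_iUnion₂.mp hvU
  obtain ⟨b, ⟨hbT, hbQ⟩, hvb⟩ := Set.mem_iUnion₂.mp hvV
  have h1 := ((hO a haT).2.2 v ⟨hva, hvT⟩).mpr haQ
  have h2 := ((hO b hbT).2.2 v ⟨hvb, hvT⟩).mp h1
  exact hbQ h2

lemma floor_global (hP : GenPos P) (hM : IsMatching P M) {T : Set Pt}
    (hTc : IsPreconnected T) (hTF : T ⊆ FreeRegion P M) :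
    (∀ z ∈ T, FB M z = ∅) ∨ (∃ F, ∀ z ∈ T, IsFloor M z F) := by
  classical
  rcases Set.eq_empty_or_nonempty T with rfl | ⟨z₀, hz₀⟩
  · exact Or.inl (by simp)
  by_cases h0 : FB M z₀ = ∅
  · left
    refine preconnected_all hTc (fun z => FB M z = ∅) ?_ hz₀ h0
    intro z hz
    by_cases hz' : FB M z = ∅
    · obtain ⟨O, h1, h2, h3⟩ := nofloor_local hP hM (hTF hz) hz'
      exact ⟨O, h1, h2, fun w hw => iff_of_true (h3 w hw.1 (hTF hw.2)) hz'⟩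
    · obtain ⟨F, hF⟩ := exists_floor (Finset.nonempty_iff_ne_empty.mpr hz')
      obtain ⟨O, h1, h2, h3⟩ := floor_local hP hM (hTF hz) hF
      refine ⟨O, h1, h2, fun w hw => iff_of_false ?_ hz'⟩
      intro hemp
      have := (h3 w hw.1 (hTF hw.2)).1
      rw [hemp] at this
      exact absurd this (Finset.notMem_empty F)
  · obtain ⟨F₀, hF₀⟩ := exists_floor (Finset.nonempty_iff_ne_empty.mpr h0)
    right
    refine ⟨F₀, preconnected_all hTc (fun z => IsFloor M z F₀) ?_ hz₀ hF₀⟩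
    intro z hz
    by_cases hz' : FB M z = ∅
    · obtain ⟨O, h1, h2, h3⟩ := nofloor_local hP hM (hTF hz) hz'
      refine ⟨O, h1, h2, fun w hw => iff_of_false ?_ ?_⟩
      · intro hfl
        have := hfl.1
        rw [h3 w hw.1 (hTF hw.2)] at this
        exact absurd this (Finset.notMem_empty F₀)
      · intro hfl
        have := hfl.1
        rw [hz'] at this
        exact absurd this (Finset.notMem_empty F₀)
    · obtain ⟨F, hF⟩ := exists_floor (Finset.nonempty_iff_ne_empty.mpr hz')
      obtain ⟨O, h1, h2, h3⟩ := floor_local hP hM (hTF hz) hF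
      refine ⟨O, h1, h2, fun w hw => ?_⟩
      constructor
      · intro hwF₀
        have : F = F₀ := floor_unique hM (h3 w hw.1 (hTF hw.2)) hwF₀
        rwa [← this]
      · intro hzF₀
        have : F = F₀ := floor_unique hM hF hzF₀
        rw [← this]
        exact h3 w hw.1 (hTF hw.2)

lemma ceil_global (hP : GenPos P) (hM : IsMatching P M) {T : Set Pt}
    (hTc : IsPreconnected T) (hTF : T ⊆ FreeRegion P M) :
    (∀ z ∈ T, FA M z = ∅) ∨ (∃ C, ∀ z ∈ T, IsCeil M z C) := by
  classical
  rcases Set.eq_empty_or_nonempty T with rfl | ⟨z₀, hz₀⟩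
  · exact Or.inl (by simp)
  by_cases h0 : FA M z₀ = ∅
  · left
    refine preconnected_all hTc (fun z => FA M z = ∅) ?_ hz₀ h0
    intro z hz
    by_cases hz' : FA M z = ∅
    · obtain ⟨O, h1, h2, h3⟩ := noceil_local hP hM (hTF hz) hz'
      exact ⟨O, h1, h2, fun w hw => iff_of_true (h3 w hw.1 (hTF hw.2)) hz'⟩
    · obtain ⟨C, hC⟩ := exists_ceil (Finset.nonempty_iff_ne_empty.mpr hz')
      obtain ⟨O, h1, h2, h3⟩ := ceil_local hP hM (hTF hz) hC
      refine ⟨O, h1, h2, fun w hw => iff_of_false ?_ hz'⟩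
      intro hemp
      have := (h3 w hw.1 (hTF hw.2)).1
      rw [hemp] at this
      exact absurd this (Finset.notMem_empty C)
  · obtain ⟨C₀, hC₀⟩ := exists_ceil (Finset.nonempty_iff_ne_empty.mpr h0)
    right
    refine ⟨C₀, preconnected_all hTc (fun z => IsCeil M z C₀) ?_ hz₀ hC₀⟩
    intro z hz
    by_cases hz' : FA M z = ∅
    · obtain ⟨O, h1, h2, h3⟩ := noceil_local hP hM (hTF hz) hz'
      refine ⟨O, h1, h2, fun w hw => iff_of_false ?_ ?_⟩
      · intro hfl
        have := hfl.1
        rw [h3 w hw.1 (hTF hw.2)] at this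
        exact absurd this (Finset.notMem_empty C₀)
      · intro hfl
        have := hfl.1
        rw [hz'] at this
        exact absurd this (Finset.notMem_empty C₀)
    · obtain ⟨C, hC⟩ := exists_ceil (Finset.nonempty_iff_ne_empty.mpr hz')
      obtain ⟨O, h1, h2, h3⟩ := ceil_local hP hM (hTF hz) hC
      refine ⟨O, h1, h2, fun w hw => ?_⟩
      constructor
      · intro hwC₀
        have : C = C₀ := ceil_unique hM (h3 w hw.1 (hTF hw.2)) hwC₀
        rwa [← this]
      · intro hzC₀
        have : C = C₀ := ceil_unique hM hC hzC₀
        rw [← this]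
        exact h3 w hw.1 (hTF hw.2)

end Aux

namespace Aux

variable {P : Finset Pt} {M : Finset (Pt × Pt)}

/-- Key structural lemma: if `T` is a preconnected subset of the free region whose
abscissa set contains the whole interval `(aa,bb)`, then the wall of a point `r ∈ P`
with `aa < r.1 < bb` does not meet the closure of `T`. -/
lemma wall_not_meet_closure (hP : GenPos P) (hM : IsMatching P M) {T : Set Pt}
    (hTc : IsPreconnected T) (hTF : T ⊆ FreeRegion P M)
    {aa bb : ℝ}
    (himg : ∀ x : ℝ, aa < x → x < bb → ∃ z ∈ T, z.1 = x)
    {r : Pt} (hr : r ∈ P) (hra : aa < r.1) (hrb : r.1 < bb)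
    {w : Pt} (hwW : w ∈ Wall M r) (hwT : w ∈ closure T) : False := by
  classical
  have hab : aa < bb := lt_trans hra hrb
  obtain ⟨z, hzT, hzx⟩ := himg r.1 hra hrb
  have hzfree : z ∈ FreeRegion P M := hTF hzT
  have hw1 : w.1 = r.1 := hwW.1
  have hznr : z ≠ r := fun h => pt_not_mem_freeRegion hr (h ▸ hzfree)
  have hz2ne : z.2 ≠ r.2 := fun h => hznr (Prod.ext hzx h)
  obtain ⟨w', hw'1, hw'2, hw'3, hw'4, hw'5⟩ := wall_extract hzfree hr hzx
  -- generic span bound helper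
  have spanbound : ∀ E : Pt × Pt, (∀ x : ℝ, aa < x → x < bb → E.1.1 ≤ x ∧ x ≤ E.2.1) →
      E.1.1 ≤ aa ∧ bb ≤ E.2.1 := by
    intro E hE
    constructor
    · by_contra hlt
      push_neg at hlt
      set x := min ((aa + E.1.1)/2) ((aa + bb)/2) with hx
      have hx1 : aa < x := lt_min (by linarith) (by linarith)
      have hx2 : x < bb := lt_of_le_of_lt (min_le_right _ _) (by linarith)
      have hx3 : x < E.1.1 := lt_of_le_of_lt (min_le_left _ _) (by linarith)
      exact absurd ((hE x hx1 hx2).1) (not_le.mpr hx3)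
    · by_contra hlt
      push_neg at hlt
      set x := max ((bb + E.2.1)/2) ((aa + bb)/2) with hx
      have hx1 : x < bb := max_lt (by linarith) (by linarith)
      have hx2 : aa < x := lt_of_lt_of_le (by linarith) (le_max_right _ _)
      have hx3 : E.2.1 < x := lt_of_lt_of_le (by linarith) (le_max_left _ _)
      exact absurd ((hE x hx2 hx1).2) (not_le.mpr hx3)
  -- a point of the wall of r, other than r itself, is not an edge point
  have hwall_free : ∀ v : Pt, v.1 = r.1 → v.2 ∈ Set.uIcc w.2 r.2 → v ≠ r →
      v ∉ edgesSet M := fun v hv1 hv2 hv3 => hwW.2 v (hv1.trans hw1.symm ▸ hv1) hv2 hv3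
  rcases lt_trichotomy r.2 z.2 with hcmp | hcmp | hcmp
  · -- r strictly below z : use the floor
    have hw'between : r.2 < w'.2 ∧ w'.2 < z.2 := by
      rw [Set.mem_uIcc] at hw'2
      rcases hw'2 with ⟨ha, hb⟩ | ⟨ha, hb⟩
      · exact absurd (le_trans ha hb) (not_le.mpr hcmp)
      · exact ⟨lt_of_le_of_ne ha (Ne.symm hw'4), lt_of_le_of_ne hb hw'3⟩
    obtain ⟨e', he'FB, he'y⟩ := FB_of_edgept hM hw'5 (hw'1.trans hzx.symm) hw'between.2
    rcases floor_global hP hM hTc hTF with hnone | ⟨F, hFall⟩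
    · rw [hnone z hzT] at he'FB
      exact absurd he'FB (Finset.notMem_empty e')
    · have hFz := hFall z hzT
      have hFspan : ∀ x : ℝ, aa < x → x < bb → F.1.1 ≤ x ∧ x ≤ F.2.1 := by
        intro x hx1 hx2
        obtain ⟨zx, hzxT, hzxx⟩ := himg x hx1 hx2
        have := (mem_FB.mp (hFall zx hzxT).1).2
        rw [hzxx] at this
        exact ⟨this.1, this.2.1⟩
      obtain ⟨hFa, hFb⟩ := spanbound F hFspan
      set B := yOn F r.1 with hB
      -- closure bound
      have hclw : B ≤ w.2 := by
        have hsub : T ⊆ {v : Pt | yOn F v.1 ≤ v.2} := by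
          intro v hv
          exact (le_of_lt (mem_FB.mp (hFall v hv).1).2.2.2)
        have := closure_mono hsub hwT
        rw [(isClosed_le (yOn_continuous F) continuous_snd).closure_eq] at this
        simpa [hw1] using this
      have hrspan : F.1.1 ≤ r.1 ∧ r.1 ≤ F.2.1 := ⟨le_trans hFa hra.le, le_trans hrb.le hFb⟩
      have hzF : ((r.1, B) : Pt) ∈ Seg F.1 F.2 :=
        yOn_mem_seg (hM.x_lt F (mem_FB.mp hFz.1).1) hrspan.1 hrspan.2
      -- B ≤ r.2
      have hBr : B ≤ r.2 := by
        by_contra hlt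
        push_neg at hlt
        by_cases hwr : w = r
        · rw [hwr] at hclw; exact absurd hclw (not_le.mpr hlt)
        · have hwnotedge : w ∉ edgesSet M :=
            hwall_free w hw1 (Set.left_mem_uIcc) hwr
          have hBw : B < w.2 := by
            rcases lt_or_eq_of_le hclw with h | h
            · exact h
            · exfalso
              apply hwnotedge
              rw [mem_edgesSet]
              refine ⟨F, (mem_FB.mp hFz.1).1, ?_⟩
              have : w = ((r.1, B) : Pt) := Prod.ext hw1 h.symm
              rwa [this]
          have : ((r.1, B) : Pt) ∉ edgesSet M := by
            apply hwall_free (r.1, B) rfl ?_ ?_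
            · rw [Set.mem_uIcc]; right; exact ⟨hlt.le, hBw.le⟩
            · intro h; exact absurd (congrArg Prod.snd h) (ne_of_gt hlt)
          exact this (mem_edgesSet.mpr ⟨F, (mem_FB.mp hFz.1).1, hzF⟩)
      -- B ≠ r.2
      have hBr' : B < r.2 := by
        rcases lt_or_eq_of_le hBr with h | h
        · exact h
        exfalso
        have hrF : r ∈ Seg F.1 F.2 := by
          have : ((r.1, B) : Pt) = r := by rw [h]
          rwa [this] at hzF
        have hFM := (mem_FB.mp hFz.1).1
        rcases pt_on_edge_endpoint hP hM hr hFM hrF with h' | h'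
        · rw [h'] at hra; exact absurd (lt_of_lt_of_le hra hFa) (lt_irrefl _)
        · rw [h'] at hrb; exact absurd (lt_of_le_of_lt hFb hrb) (lt_irrefl _)
      -- contradiction with floor maximality at z
      have := hFz.2 e' he'FB
      rw [he'y, hzx] at this
      exact absurd this (not_le.mpr (lt_trans hBr' hw'between.1))
  · exact hz2ne hcmp.symm
  · -- r strictly above z : use the ceiling
    have hw'between : z.2 < w'.2 ∧ w'.2 < r.2 := by
      rw [Set.mem_uIcc] at hw'2
      rcases hw'2 with ⟨ha, hb⟩ | ⟨ha, hb⟩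
      · exact ⟨lt_of_le_of_ne ha (Ne.symm hw'3), lt_of_le_of_ne hb hw'4⟩
      · exact absurd (le_trans ha hb) (not_le.mpr hcmp)
    obtain ⟨e', he'FA, he'y⟩ := FA_of_edgept hM hw'5 (hw'1.trans hzx.symm) hw'between.1
    rcases ceil_global hP hM hTc hTF with hnone | ⟨C, hCall⟩
    · rw [hnone z hzT] at he'FA
      exact absurd he'FA (Finset.notMem_empty e')
    · have hCz := hCall z hzT
      have hCspan : ∀ x : ℝ, aa < x → x < bb → C.1.1 ≤ x ∧ x ≤ C.2.1 := by
        intro x hx1 hx2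
        obtain ⟨zx, hzxT, hzxx⟩ := himg x hx1 hx2
        have := (mem_FA.mp (hCall zx hzxT).1).2
        rw [hzxx] at this
        exact ⟨this.1, this.2.1⟩
      obtain ⟨hCa, hCb⟩ := spanbound C hCspan
      set B := yOn C r.1 with hB
      have hclw : w.2 ≤ B := by
        have hsub : T ⊆ {v : Pt | v.2 ≤ yOn C v.1} := by
          intro v hv
          exact (le_of_lt (mem_FA.mp (hCall v hv).1).2.2.2)
        have := closure_mono hsub hwT
        rw [(isClosed_le continuous_snd (yOn_continuous C)).closure_eq] at this
        simpa [hw1] using this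
      have hrspan : C.1.1 ≤ r.1 ∧ r.1 ≤ C.2.1 := ⟨le_trans hCa hra.le, le_trans hrb.le hCb⟩
      have hzC : ((r.1, B) : Pt) ∈ Seg C.1 C.2 :=
        yOn_mem_seg (hM.x_lt C (mem_FA.mp hCz.1).1) hrspan.1 hrspan.2
      have hBr : r.2 ≤ B := by
        by_contra hlt
        push_neg at hlt
        by_cases hwr : w = r
        · rw [hwr] at hclw; exact absurd hclw (not_le.mpr hlt)
        · have hwnotedge : w ∉ edgesSet M :=
            hwall_free w hw1 (Set.left_mem_uIcc) hwr
          have hBw : w.2 < B := by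
            rcases lt_or_eq_of_le hclw with h | h
            · exact h
            · exfalso
              apply hwnotedge
              rw [mem_edgesSet]
              refine ⟨C, (mem_FA.mp hCz.1).1, ?_⟩
              have : w = ((r.1, B) : Pt) := Prod.ext hw1 h
              rwa [this]
          have : ((r.1, B) : Pt) ∉ edgesSet M := by
            apply hwall_free (r.1, B) rfl ?_ ?_
            · rw [Set.mem_uIcc]; left; exact ⟨hBw.le, hlt.le⟩
            · intro h; exact absurd (congrArg Prod.snd h) (ne_of_lt hlt)
          exact this (mem_edgesSet.mpr ⟨C, (mem_FA.mp hCz.1).1, hzC⟩)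
      have hBr' : r.2 < B := by
        rcases lt_or_eq_of_le hBr with h | h
        · exact h
        exfalso
        have hrC : r ∈ Seg C.1 C.2 := by
          have : ((r.1, B) : Pt) = r := by rw [← h]
          rwa [this] at hzC
        have hCM := (mem_FA.mp hCz.1).1
        rcases pt_on_edge_endpoint hP hM hr hCM hrC with h' | h'
        · rw [h'] at hra; exact absurd (lt_of_lt_of_le hra hCa) (lt_irrefl _)
        · rw [h'] at hrb; exact absurd (lt_of_le_of_lt hCb hrb) (lt_irrefl _)
      have := hCz.2 e' he'FA
      rw [he'y, hzx] at this
      exact absurd this (not_le.mpr (lt_trans hw'between.2 hBr'))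

end Aux

namespace Aux

lemma openSeg_param {a b z : Pt} (h : z ∈ openSegment ℝ a b) :
    ∃ t : ℝ, 0 < t ∧ t < 1 ∧ z.1 = a.1 + t * (b.1 - a.1) ∧ z.2 = a.2 + t * (b.2 - a.2) := by
  rw [openSegment_eq_image] at h
  obtain ⟨t, ht, hz⟩ := h
  have h1 := congrArg Prod.fst hz
  have h2 := congrArg Prod.snd hz
  simp at h1 h2
  exact ⟨t, ht.1, ht.2, by rw [← h1]; ring, by rw [← h2]; ring⟩

lemma openSeg_vert {c y₁ y₂ : ℝ} (hne : y₁ ≠ y₂) {z : Pt}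
    (h : z ∈ openSegment ℝ ((c, y₁) : Pt) ((c, y₂) : Pt)) :
    z.1 = c ∧ z.2 ∈ Set.uIcc y₁ y₂ ∧ z.2 ≠ y₁ ∧ z.2 ≠ y₂ := by
  obtain ⟨t, ht0, ht1, hz1, hz2⟩ := openSeg_param h
  simp only at hz1 hz2
  refine ⟨by rw [hz1]; ring, ?_, ?_, ?_⟩
  · rw [Set.mem_uIcc]
    rcases le_total y₁ y₂ with hle | hle
    · left; constructor <;> nlinarith
    · right; constructor <;> nlinarith
  · intro hzy
    rw [hzy] at hz2
    have : t * (y₂ - y₁) = 0 := by linarith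
    rcases mul_eq_zero.mp this with h | h
    · linarith
    · exact hne (by linarith)
  · intro hzy
    rw [hzy] at hz2
    have : (1 - t) * (y₂ - y₁) = 0 := by nlinarith
    rcases mul_eq_zero.mp this with h | h
    · linarith
    · exact hne (by linarith)

lemma seg_symm (a b : Pt) : Seg a b = Seg b a := by
  rw [Seg, Seg, segment_symm]

/-- If some isolated point `q` of `M ∪ {up}` lies strictly between `u` and `p` in abscissa
and the vertical projection of `q` on `up` lies on the wall of `q`, then `p` does not have
rank 0 in `M ∪ {up}`. -/
lemma rank_ne_zero_of_visible {P : Finset Pt} (hP : GenPos P) {M : Finset (Pt × Pt)}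
    {p u q : Pt} (hp : p ∈ P) (hiso : Isolated M p) (hu : u ∈ P)
    (hqP : q ∈ P) (hqiso : Isolated M q) (hup : u.1 < p.1)
    (huq : u.1 < q.1) (hqp : q.1 < p.1)
    {w : Pt} (hwSeg : w ∈ Seg u p) (hw1 : w.1 = q.1) (hwWall : w ∈ Wall M q) :
    rank P (insert (u, p) M) p ≠ 0 := by
  classical
  set M' := insert (u, p) M with hM'def
  intro hr0
  -- identify w
  have hupx : ((u, p) : Pt × Pt).1.1 < ((u, p) : Pt × Pt).2.1 := hup
  obtain ⟨hwa, hwb, hwy⟩ := mem_seg_coords hupx hwSeg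
  have hwproj : w = vproj (u, p) q := by
    rw [vproj, ← hw1]
    exact Prod.ext rfl hwy
  have hwq : w ≠ q := by
    intro h
    rw [h] at hwSeg
    have hupne : u ≠ p := fun hh => absurd (congrArg Prod.fst hh) (ne_of_lt hup)
    have hpqne : p ≠ q := fun hh => absurd (congrArg Prod.fst hh) (ne_of_gt hqp)
    have huqne : u ≠ q := fun hh => absurd (congrArg Prod.fst hh) (ne_of_lt huq)
    exact hP.1 u hu p hp q hqP hupne hpqne huqne (collinear_of_mem_seg hwSeg)
  have hwq2 : w.2 ≠ q.2 := fun h => hwq (Prod.ext hw1 h)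
  -- rank branch analysis
  have hc1 : ¬ ∃ e ∈ M', e.1 = p := by
    rintro ⟨e, he, hep⟩
    rcases Finset.mem_insert.mp he with rfl | heM
    · exact absurd (congrArg Prod.fst hep) (ne_of_lt hup)
    · exact (hiso e heM).1 hep
  have hc2 : ∃ e ∈ M', e.2 = p := ⟨(u, p), Finset.mem_insert_self _ _, rfl⟩
  have hch : hc2.choose = (u, p) := by
    obtain ⟨hmem, h2⟩ := hc2.choose_spec
    rcases Finset.mem_insert.mp hmem with h | h
    · exact h
    · exact absurd h2 (hiso _ h).2
  rw [rank, dif_neg hc1, dif_pos hc2] at hr0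
  rw [Finset.card_eq_zero, Finset.eq_empty_iff_forall_notMem] at hr0
  apply hr0 q
  rw [Finset.mem_filter]
  refine ⟨hqP, ?_, ?_⟩
  · left
    intro f hf
    rcases Finset.mem_insert.mp hf with rfl | hfM
    · exact ⟨fun h => absurd (congrArg Prod.fst h) (ne_of_lt huq),
        fun h => absurd (congrArg Prod.fst h) (ne_of_gt hqp)⟩
    · exact hqiso f hfM
  · rw [hch]
    refine ⟨huq, hqp, ?_, ?_⟩
    · intro f hf
      rw [Set.eq_empty_iff_forall_notMem]
      rintro z ⟨hz1, hz2⟩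
      rw [← hwproj] at hz1
      have hq_pt : q = ((q.1, q.2) : Pt) := rfl
      have hw_pt : w = ((q.1, w.2) : Pt) := Prod.ext hw1 rfl
      rw [hq_pt, hw_pt] at hz1
      obtain ⟨hzc, hzu, hzq, hzw⟩ := openSeg_vert (Ne.symm hwq2) hz1
      rcases Finset.mem_insert.mp hf with rfl | hfM
      · -- f = (u,p): unique intersection with the vertical line
        obtain ⟨-, -, hzy⟩ := mem_seg_coords hupx hz2
        rw [hzc] at hzy
        rw [← hw1] at hzy
        exact hzw (by rw [hzy, hwy, hw1])
      · -- f ∈ M: contradicts the wall property at w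
        have hzne : z ≠ q := fun h => hzq (congrArg Prod.snd h)
        have hzuIcc : z.2 ∈ Set.uIcc w.2 q.2 := by rwa [Set.uIcc_comm]
        exact hwWall.2 z (hzc.trans hw1.symm ▸ hzc) hzuIcc hzne
          (mem_edgesSet.mpr ⟨f, hfM, hz2⟩)
    · intro r' hr'
      intro hmem
      rw [← hwproj] at hmem
      have hq_pt : q = ((q.1, q.2) : Pt) := rfl
      have hw_pt : w = ((q.1, w.2) : Pt) := Prod.ext hw1 rfl
      rw [hq_pt, hw_pt] at hmem
      obtain ⟨hzc, hzu, hzq, hzw⟩ := openSeg_vert (Ne.symm hwq2) hmem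
      have : r' = q := genpos_eq_of_abscissa hP hr' hqP (by rw [hzc])
      exact hzq (by rw [this])

end Aux

/-- If `p` is isolated in `M` and the left bifurcation
point `q` of `p` exists and is isolated in `M`, then any point `u` to the left
of `p` whose insertion gives `p` rank `0` must equal `q`; in particular
`l_0(p,M) ≤ 1`. -/
theorem rank_zero_unique (P : Finset Pt) (hP : GenPos P)
    (M : Finset (Pt × Pt)) (hM : IsMatching P M)
    (p : Pt) (hp : p ∈ P) (hiso : Isolated M p)
    (q : Pt) (hq : IsLeftBifPoint P M p q) (hqiso : Isolated M q) :
    (∀ u ∈ P, u.1 < p.1 → IsMatching P (insert (u, p) M) →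
      rank P (insert (u, p) M) p = 0 → u = q) ∧
    lcount P M p 0 ≤ 1 := by
  classical
  obtain ⟨hqP, T, ⟨⟨x₁, hx₁F, hTeq⟩, ε₀, hε₀pos, hnear⟩, hfront, hglb⟩ := hq
  have hFRopen := Aux.isOpen_freeRegion P M
  have hTopen : IsOpen T := by rw [hTeq]; exact hFRopen.connectedComponentIn
  have hTsub : T ⊆ FreeRegion P M := by rw [hTeq]; exact connectedComponentIn_subset _ _
  have hTpre : IsPreconnected T := by rw [hTeq]; exact isPreconnected_connectedComponentIn
  have hTmax : ∀ s : Set Pt, IsPreconnected s → s ⊆ FreeRegion P M →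
      ∀ y ∈ s, y ∈ T → s ⊆ T := by
    intro s hs hsub y hys hyT
    have h1 : s ⊆ connectedComponentIn (FreeRegion P M) y :=
      hs.subset_connectedComponentIn hys hsub
    have h2 : connectedComponentIn (FreeRegion P M) x₁
        = connectedComponentIn (FreeRegion P M) y :=
      connectedComponentIn_eq (by rw [← hTeq]; exact hyT)
    rw [hTeq, h2]
    exact h1
  have hlb : ∀ z ∈ T, q.1 ≤ z.1 := by
    intro z hz
    exact hglb.1 ⟨z.2, by rw [Prod.mk.eta]; exact hz⟩
  have hq1p1 : q.1 < p.1 := by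
    have h := hnear (ε₀/2) (by linarith) (by linarith)
    have h2 := hlb _ h
    simp only at h2
    linarith
  have hSJ : {x : ℝ | ∃ y : ℝ, ((x, y) : Pt) ∈ T} = Prod.fst '' T := by
    ext x
    constructor
    · rintro ⟨y, hy⟩; exact ⟨(x, y), hy, rfl⟩
    · rintro ⟨z, hz, rfl⟩; exact ⟨z.2, by rw [Prod.mk.eta]; exact hz⟩
  have himg : ∀ x : ℝ, q.1 < x → x < p.1 → ∃ z ∈ T, z.1 = x := by
    intro x hx1 hx2
    have hJpre : IsPreconnected (Prod.fst '' T) := hTpre.image _ continuous_fst.continuousOn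
    have hJoc := hJpre.ordConnected
    have ha : ∃ j ∈ Prod.fst '' T, j < x := by
      by_contra hcon
      push_neg at hcon
      have hlbx : x ∈ lowerBounds {x : ℝ | ∃ y : ℝ, ((x, y) : Pt) ∈ T} := by
        intro j hj
        rw [hSJ] at hj
        exact hcon j hj
      exact absurd (hglb.2 hlbx) (not_le.mpr hx1)
    obtain ⟨a, haJ, hax⟩ := ha
    set ε := min ε₀ (p.1 - x) / 2 with hε
    have hεpos : 0 < ε := by
      have : 0 < min ε₀ (p.1 - x) := lt_min hε₀pos (by linarith)
      rw [hε]; linarith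
    have hεε₀ : ε < ε₀ := by
      have : min ε₀ (p.1 - x) ≤ ε₀ := min_le_left _ _
      rw [hε]; linarith
    have hbJ : p.1 - ε ∈ Prod.fst '' T := ⟨_, hnear ε hεpos hεε₀, rfl⟩
    have hxb : x ≤ p.1 - ε := by
      have : min ε₀ (p.1 - x) ≤ p.1 - x := min_le_right _ _
      rw [hε]; linarith
    obtain ⟨z, hz, hzx⟩ := hJoc.out haJ hbJ ⟨hax.le, hxb⟩
    exact ⟨z, hz, hzx⟩
  have main : ∀ u ∈ P, u.1 < p.1 → IsMatching P (insert (u, p) M) →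
      rank P (insert (u, p) M) p = 0 → u = q := by
    intro u huP hup hM' hr0
    have hune : ∀ f ∈ M, ((u, p) : Pt × Pt) ≠ f := by
      intro f hf h
      exact (hiso f hf).2 (by rw [← h])
    have hcross : ∀ f ∈ M, Seg u p ∩ Seg f.1 f.2 = ∅ := fun f hf =>
      hM'.no_cross (u, p) (Finset.mem_insert_self _ _) f (Finset.mem_insert_of_mem hf)
        (hune f hf)
    set D := p.1 - u.1 with hD
    have hDpos : 0 < D := by rw [hD]; linarith
    have hpedge : p ∉ edgesSet M := Aux.isolated_not_mem_edgesSet hP hM hp hiso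
    obtain ⟨ρe, hρe, hball⟩ : ∃ ρ > 0, Metric.ball p ρ ⊆ (edgesSet M)ᶜ := by
      have h := (Aux.isClosed_edgesSet M).isOpen_compl
      rw [Metric.isOpen_iff] at h
      exact h p hpedge
    obtain ⟨ρg, hρg, hgap⟩ := Aux.abscissa_gap P p.1
    set K := |u.2 - p.2| / D with hK
    have hKnn : 0 ≤ K := div_nonneg (abs_nonneg _) hDpos.le
    set ε₁ := min (min ε₀ ρg) (min (ρe / (1 + K)) D) / 2 with hε₁
    have hρeK : 0 < ρe / (1 + K) := div_pos hρe (by linarith)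
    have hminpos : 0 < min (min ε₀ ρg) (min (ρe / (1 + K)) D) :=
      lt_min (lt_min hε₀pos hρg) (lt_min hρeK hDpos)
    have hε₁pos : 0 < ε₁ := by rw [hε₁]; linarith
    have hε₁ε₀ : ε₁ < ε₀ := by
      have h1 : min (min ε₀ ρg) (min (ρe / (1 + K)) D) ≤ ε₀ :=
        le_trans (min_le_left _ _) (min_le_left _ _)
      rw [hε₁]; linarith
    have hε₁ρg : ε₁ < ρg := by
      have h1 : min (min ε₀ ρg) (min (ρe / (1 + K)) D) ≤ ρg :=
        le_trans (min_le_left _ _) (min_le_right _ _)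
      rw [hε₁]; linarith
    have hε₁D : ε₁ < D := by
      have h1 : min (min ε₀ ρg) (min (ρe / (1 + K)) D) ≤ D :=
        le_trans (min_le_right _ _) (min_le_right _ _)
      rw [hε₁]; linarith
    have hε₁ρe : ε₁ * (1 + K) < ρe := by
      have h1 : min (min ε₀ ρg) (min (ρe / (1 + K)) D) ≤ ρe / (1 + K) :=
        le_trans (min_le_right _ _) (min_le_left _ _)
      have h3 : (0:ℝ) < 1 + K := by linarith
      have h2 : ε₁ * (1 + K) ≤ ρe / (1 + K) / 2 * (1 + K) := by
        apply mul_le_mul_of_nonneg_right _ h3.le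
        rw [hε₁]; linarith
      have h4 : ρe / (1 + K) / 2 * (1 + K) = ρe / 2 := by field_simp
      rw [h4] at h2
      linarith
    set x₀ := p.1 - ε₁ with hx₀
    set t₀ := ε₁ / D with ht₀
    have ht₀pos : 0 < t₀ := div_pos hε₁pos hDpos
    have ht₀lt1 : t₀ < 1 := (div_lt_one hDpos).mpr hε₁D
    set γ : ℝ → Pt := fun t => (p.1 + t * (u.1 - p.1), p.2 + t * (u.2 - p.2)) with hγ
    have hγcont : Continuous γ := by rw [hγ]; fun_prop
    have hγseg : ∀ t : ℝ, 0 ≤ t → t ≤ 1 → γ t ∈ Seg u p := by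
      intro t h0 h1
      rw [Aux.seg_symm]
      exact Aux.seg_param_mem h0 h1
    have hγx : ∀ t : ℝ, (γ t).1 = p.1 - t * D := by
      intro t
      show p.1 + t * (u.1 - p.1) = p.1 - t * D
      rw [hD]; ring
    have hγt₀1 : (γ t₀).1 = x₀ := by
      rw [hγx, ht₀, hx₀]
      field_simp
    have hv₀T : ((x₀, p.2) : Pt) ∈ T := hnear ε₁ hε₁pos hε₁ε₀
    have hVsub : Seg ((x₀, p.2) : Pt) (γ t₀) ⊆ FreeRegion P M := by
      intro v hv
      obtain ⟨t, h0, h1, hv1, hv2⟩ := Aux.seg_param hv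
      have hfst : ((x₀, p.2) : Pt).1 = x₀ := rfl
      have hsnd : ((x₀, p.2) : Pt).2 = p.2 := rfl
      rw [hfst] at hv1
      rw [hsnd] at hv2
      have hvx : v.1 = x₀ := by rw [hv1, hγt₀1]; ring
      have hy0 : |(γ t₀).2 - p.2| ≤ ε₁ * K := by
        have hsnd2 : (γ t₀).2 = p.2 + t₀ * (u.2 - p.2) := rfl
        rw [hsnd2, add_sub_cancel_left, abs_mul, abs_of_pos ht₀pos, ht₀, hK]
        rw [div_mul_eq_mul_div, mul_div_assoc]
      have hv2b : |v.2 - p.2| ≤ ε₁ * K := by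
        have : v.2 - p.2 = t * ((γ t₀).2 - p.2) := by rw [hv2]; ring
        rw [this, abs_mul, abs_of_nonneg h0]
        calc t * |(γ t₀).2 - p.2| ≤ 1 * |(γ t₀).2 - p.2| :=
          mul_le_mul_of_nonneg_right h1 (abs_nonneg _)
        _ = |(γ t₀).2 - p.2| := one_mul _
        _ ≤ ε₁ * K := hy0
      intro hbad
      rcases hbad with hbad | hbad
      · -- edge point: contradiction with ball
        have hvball : v ∈ Metric.ball p ρe := by
          rw [Metric.mem_ball, Prod.dist_eq, Real.dist_eq, Real.dist_eq]
          apply max_lt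
          · rw [hvx, hx₀]
            simp only [sub_sub_cancel_left, abs_neg]
            rw [abs_of_pos hε₁pos]
            have h5 : ε₁ * 1 ≤ ε₁ * (1 + K) :=
              mul_le_mul_of_nonneg_left (by linarith) hε₁pos.le
            rw [mul_one] at h5
            linarith
          · calc |v.2 - p.2| ≤ ε₁ * K := hv2b
            _ ≤ ε₁ * (1 + K) :=
              mul_le_mul_of_nonneg_left (by linarith) hε₁pos.le
            _ < ρe := hε₁ρe
        exact (hball hvball) hbad
      · -- wall point
        obtain ⟨S, ⟨r, rfl⟩, hS⟩ := hbad
        simp only [Set.mem_iUnion] at hS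
        obtain ⟨hrP, hvw⟩ := hS
        have hv1r : v.1 = r.1 := Aux.wall_abscissa hvw
        by_cases hrp : r.1 = p.1
        · rw [hvx, hx₀, hrp] at hv1r
          linarith
        · have hrx : r.1 = p.1 - ε₁ := by rw [← hv1r, hvx, hx₀]
          have habs : |r.1 - p.1| = ε₁ := by
            rw [hrx, abs_of_neg (by linarith : p.1 - ε₁ - p.1 < 0)]; ring
          have := hgap r hrP hrp
          linarith
    have hVT : Seg ((x₀, p.2) : Pt) (γ t₀) ⊆ T := by
      apply hTmax _ (convex_segment _ _).isPreconnected hVsub ((x₀, p.2) : Pt)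
        (left_mem_segment ℝ _ _) hv₀T
    have hγt₀T : γ t₀ ∈ T := hVT (right_mem_segment ℝ _ _)
    have hγ1 : γ 1 = u := by
      apply Prod.ext
      · show p.1 + 1 * (u.1 - p.1) = u.1
        ring
      · show p.2 + 1 * (u.2 - p.2) = u.2
        ring
    set B := {t : ℝ | t ∈ Set.Icc t₀ 1 ∧ γ t ∉ FreeRegion P M} with hBdef
    have hBne : (1 : ℝ) ∈ B := by
      refine ⟨⟨ht₀lt1.le, le_refl 1⟩, ?_⟩
      rw [hγ1]
      exact Aux.pt_not_mem_freeRegion huP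
    have hBclosed : IsClosed B := by
      have : B = Set.Icc t₀ 1 ∩ γ ⁻¹' (FreeRegion P M)ᶜ := rfl
      rw [this]
      exact isClosed_Icc.inter (hFRopen.isClosed_compl.preimage hγcont)
    have hBbdd : BddBelow B := ⟨t₀, fun t ht => ht.1.1⟩
    set ts := sInf B with hts
    have htsB : ts ∈ B := hBclosed.csInf_mem ⟨1, hBne⟩ hBbdd
    have hts1 : ts ≤ 1 := htsB.1.2
    have htst₀ : t₀ ≤ ts := le_csInf ⟨1, hBne⟩ (fun t ht => ht.1.1)
    have ht₀notB : t₀ ∉ B := fun hc => hc.2 (hTsub hγt₀T)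
    have hts_gt : t₀ < ts := lt_of_le_of_ne htst₀ (fun h => ht₀notB (h ▸ htsB))
    have htspos : 0 < ts := lt_trans ht₀pos hts_gt
    have hmidT : ∀ t : ℝ, t₀ ≤ t → t < ts → γ t ∈ T := by
      intro t h0 h1
      have hsub : γ '' Set.Icc t₀ t ⊆ FreeRegion P M := by
        rintro _ ⟨s, hs, rfl⟩
        have hsB : s ∉ B := notMem_of_lt_csInf (lt_of_le_of_lt hs.2 h1) hBbdd
        by_contra hc
        exact hsB ⟨⟨hs.1, le_trans (le_trans hs.2 h1.le) hts1⟩, hc⟩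
      have hpre : IsPreconnected (γ '' Set.Icc t₀ t) :=
        isPreconnected_Icc.image _ hγcont.continuousOn
      exact hTmax _ hpre hsub (γ t₀) ⟨t₀, ⟨le_refl _, h0⟩, rfl⟩ hγt₀T
        ⟨t, ⟨h0, le_refl t⟩, rfl⟩
    set w := γ ts with hwdef
    have hwcl : w ∈ closure T := by
      have h1 : ts ∈ closure (Set.Ico t₀ ts) := by
        rw [closure_Ico (ne_of_lt hts_gt)]
        exact ⟨htst₀, le_refl _⟩
      have h2 : w ∈ γ '' closure (Set.Ico t₀ ts) := ⟨ts, h1, rfl⟩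
      have h3 := image_closure_subset_closure_image hγcont h2
      refine closure_mono ?_ h3
      rintro _ ⟨s, hs, rfl⟩
      exact hmidT s hs.1 hs.2
    have hwFR : w ∉ FreeRegion P M := htsB.2
    have hwSeg : w ∈ Seg u p := hγseg ts (le_trans ht₀pos.le htst₀) hts1
    have hwnedge : w ∉ edgesSet M := by
      intro hc
      obtain ⟨f, hf, hmem⟩ := Aux.mem_edgesSet.mp hc
      have h := hcross f hf
      rw [Set.eq_empty_iff_forall_notMem] at h
      exact h w ⟨hwSeg, hmem⟩
    obtain ⟨r, hrP, hwr⟩ : ∃ r ∈ P, w ∈ Wall M r := by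
      by_contra hc
      push_neg at hc
      apply hwFR
      intro hbad
      rcases hbad with hbad | hbad
      · exact hwnedge hbad
      · obtain ⟨S, ⟨r, rfl⟩, hS⟩ := hbad
        simp only [Set.mem_iUnion] at hS
        obtain ⟨hrP, hvw⟩ := hS
        exact hc r hrP hvw
    have hw1 : w.1 = r.1 := hwr.1
    have hwx : w.1 = p.1 - ts * D := hγx ts
    have hwlb : q.1 ≤ w.1 := by
      have hsub : T ⊆ {v : Pt | q.1 ≤ v.1} := hlb
      have h := closure_mono hsub hwcl
      rwa [(isClosed_le continuous_const continuous_fst).closure_eq] at h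
    have hwltp : w.1 < p.1 := by
      have h5 : 0 < ts * D := mul_pos htspos hDpos
      rw [hwx]; linarith
    rcases lt_or_eq_of_le hts1 with htslt | htseq
    · -- interior crossing
      have hwgtu : u.1 < w.1 := by
        have h5 : ts * D < 1 * D := mul_lt_mul_of_pos_right htslt hDpos
        rw [one_mul] at h5
        rw [hwx]
        have h6 : D = p.1 - u.1 := hD
        linarith
      rcases lt_or_eq_of_le hwlb with hqlt | hqeq
      · exact (Aux.wall_not_meet_closure hP hM hTpre hTsub himg hrP
          (by rw [← hw1]; exact hqlt) (by rw [← hw1]; exact hwltp) hwr hwcl).elim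
      · have hrq : r = q := Aux.genpos_eq_of_abscissa hP hrP hqP (by rw [← hw1, ← hqeq])
        have hw1q : w.1 = q.1 := by rw [hw1, hrq]
        have hwrq : w ∈ Wall M q := by rw [← hrq]; exact hwr
        have huq : u.1 < q.1 := by rw [hqeq]; exact hwgtu
        exact absurd hr0 (Aux.rank_ne_zero_of_visible hP hp hiso huP hqP hqiso hup
          huq hq1p1 hwSeg hw1q hwrq)
    · -- ts = 1 : w = u
      have hwu : w = u := by rw [hwdef, htseq]; exact hγ1
      rcases lt_or_eq_of_le hwlb with hqlt | hqeq
      · rw [hwu] at hqlt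
        exact (Aux.wall_not_meet_closure hP hM hTpre hTsub himg huP hqlt hup
          (Aux.mem_wall_self M u) (hwu ▸ hwcl)).elim
      · rw [hwu] at hqeq
        exact (Aux.genpos_eq_of_abscissa hP huP hqP hqeq.symm)
  refine ⟨main, ?_⟩
  rw [lcount]
  have hsub : (P.filter fun v => v.1 < p.1 ∧ IsMatching P (insert (v, p) M) ∧
      rank P (insert (v, p) M) p = 0) ⊆ {q} := by
    intro x hx
    rw [Finset.mem_filter] at hx
    rw [Finset.mem_singleton]
    exact main x hx.1 hx.2.1 hx.2.2.1 hx.2.2.2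
  calc _ ≤ ({q} : Finset Pt).card := Finset.card_le_card hsub
  _ = 1 := Finset.card_singleton q
end

section
/- Let M be a crossing-free matching of P, let p ∈ P be isolated in M, and suppose the left bifurcation point q of p exists and is isolated in M. Then for every point u ∈ P with x-coordinate smaller than that of p and u ≠ q such that M ∪ {up} is a crossing-free matching of P and the rank of p in M ∪ {up} is at least 1, the point q is vertically visible from the interior of the edge up in the matching M ∪ {up} (hence q contributes 1 to the rank of p in M ∪ {up}). -/
open scoped Classical

section BifAux

open Set

lemma yOn_eq (g : Pt × Pt) (x : ℝ) :
    yOn g x = (g.1.2 - g.1.1 * ((g.2.2 - g.1.2) / (g.2.1 - g.1.1)))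
      + ((g.2.2 - g.1.2) / (g.2.1 - g.1.1)) * x := by
  unfold yOn; ring

lemma cont_yOn (g : Pt × Pt) : Continuous fun x => yOn g x := by
  have h : (fun x => yOn g x) = fun x =>
      (g.1.2 - g.1.1 * ((g.2.2 - g.1.2) / (g.2.1 - g.1.1)))
      + ((g.2.2 - g.1.2) / (g.2.1 - g.1.1)) * x := funext fun x => yOn_eq g x
  rw [h]
  exact continuous_const.add (continuous_const.mul continuous_id)

lemma yOn_comb (g : Pt × Pt) {a b x y : ℝ} (hab : a + b = 1) :
    yOn g (a * x + b * y) = a * yOn g x + b * yOn g y := by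
  have hb : b = 1 - a := by linarith
  subst hb; unfold yOn; ring

lemma seg_mem_iff {g : Pt × Pt} (h : g.1.1 < g.2.1) {z : Pt} :
    z ∈ Seg g.1 g.2 ↔ g.1.1 ≤ z.1 ∧ z.1 ≤ g.2.1 ∧ z.2 = yOn g z.1 := by
  have hne : g.2.1 - g.1.1 ≠ 0 := ne_of_gt (by linarith)
  unfold Seg
  rw [segment_eq_image]
  constructor
  · rintro ⟨θ, ⟨h0, h1⟩, rfl⟩
    have hx1 : ((1 - θ) • g.1 + θ • g.2).1 = (1-θ) * g.1.1 + θ * g.2.1 := by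
      simp [Prod.fst_add, Prod.smul_fst, smul_eq_mul]
    have hx2 : ((1 - θ) • g.1 + θ • g.2).2 = (1-θ) * g.1.2 + θ * g.2.2 := by
      simp [Prod.snd_add, Prod.smul_snd, smul_eq_mul]
    refine ⟨?_, ?_, ?_⟩
    · rw [hx1]; nlinarith
    · rw [hx1]; nlinarith
    · rw [hx1, hx2]; unfold yOn; field_simp; ring
  · rintro ⟨hx1, hx2, hy⟩
    refine ⟨(z.1 - g.1.1) / (g.2.1 - g.1.1),
      ⟨div_nonneg (by linarith) (by linarith), by
        rw [div_le_one (by linarith)]; linarith⟩, ?_⟩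
    rw [Prod.ext_iff]
    constructor
    · show (1 - (z.1 - g.1.1) / (g.2.1 - g.1.1)) * g.1.1
        + ((z.1 - g.1.1) / (g.2.1 - g.1.1)) * g.2.1 = z.1
      field_simp
      ring
    · show (1 - (z.1 - g.1.1) / (g.2.1 - g.1.1)) * g.1.2
        + ((z.1 - g.1.1) / (g.2.1 - g.1.1)) * g.2.2 = z.2
      rw [hy]; unfold yOn; field_simp; ring

lemma mem_of_x {g : Pt × Pt} (h : g.1.1 < g.2.1) {x : ℝ}
    (h1 : g.1.1 ≤ x) (h2 : x ≤ g.2.1) : ((x, yOn g x) : Pt) ∈ Seg g.1 g.2 :=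
  (seg_mem_iff h).2 ⟨h1, h2, rfl⟩

lemma yOn_left {g : Pt × Pt} : yOn g g.1.1 = g.1.2 := by
  unfold yOn; simp

lemma yOn_right {g : Pt × Pt} (h : g.1.1 < g.2.1) : yOn g g.2.1 = g.2.2 := by
  have hne : g.2.1 - g.1.1 ≠ 0 := ne_of_gt (by linarith)
  unfold yOn; field_simp; ring

lemma lt_on_of_lt_at {e f : Pt × Pt} (he : e.1.1 < e.2.1) (hf : f.1.1 < f.2.1)
    (hd : Seg e.1 e.2 ∩ Seg f.1 f.2 = ∅) {lo hi : ℝ}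
    (hel : e.1.1 ≤ lo) (hfl : f.1.1 ≤ lo) (heh : hi ≤ e.2.1) (hfh : hi ≤ f.2.1)
    {x₀ : ℝ} (hx₀ : lo ≤ x₀ ∧ x₀ ≤ hi) (h₀ : yOn e x₀ < yOn f x₀)
    {x : ℝ} (hx : lo ≤ x ∧ x ≤ hi) : yOn e x < yOn f x := by
  by_contra hcon
  push_neg at hcon
  have hg : Continuous fun t => yOn f t - yOn e t := (cont_yOn f).sub (cont_yOn e)
  have h0mem : (0:ℝ) ∈ Set.uIcc ((fun t => yOn f t - yOn e t) x₀)
      ((fun t => yOn f t - yOn e t) x) := by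
    rw [Set.mem_uIcc]
    right
    exact ⟨by simp; linarith, by simp; linarith⟩
  obtain ⟨t, ht, htv⟩ := intermediate_value_uIcc
    (f := fun t => yOn f t - yOn e t) (a := x₀) (b := x) hg.continuousOn h0mem
  have htlo : lo ≤ t ∧ t ≤ hi := by
    rcases Set.mem_uIcc.1 ht with ⟨h1, h2⟩ | ⟨h1, h2⟩
    · exact ⟨le_trans hx₀.1 h1, le_trans h2 hx.2⟩
    · exact ⟨le_trans hx.1 h1, le_trans h2 hx₀.2⟩
  have heq : yOn e t = yOn f t := by
    simp only at htv; linarith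
  have m1 := mem_of_x he (le_trans hel htlo.1) (le_trans htlo.2 heh)
  have m2 := mem_of_x hf (le_trans hfl htlo.1) (le_trans htlo.2 hfh)
  rw [heq] at m1
  have hmem : ((t, yOn f t) : Pt) ∈ Seg e.1 e.2 ∩ Seg f.1 f.2 := ⟨m1, m2⟩
  rw [hd] at hmem
  exact hmem

lemma lt_at_of_lt_at {e f : Pt × Pt} (he : e.1.1 < e.2.1) (hf : f.1.1 < f.2.1)
    (hd : Seg e.1 e.2 ∩ Seg f.1 f.2 = ∅) {x₀ x : ℝ}
    (h1 : e.1.1 ≤ x₀) (h2 : f.1.1 ≤ x₀) (h3 : e.1.1 ≤ x) (h4 : f.1.1 ≤ x)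
    (h5 : x₀ ≤ e.2.1) (h6 : x₀ ≤ f.2.1) (h7 : x ≤ e.2.1) (h8 : x ≤ f.2.1)
    (hlt : yOn e x₀ < yOn f x₀) : yOn e x < yOn f x :=
  lt_on_of_lt_at he hf hd (le_min h1 h3) (le_min h2 h4) (max_le h5 h7) (max_le h6 h8)
    ⟨min_le_left _ _, le_max_left _ _⟩ hlt ⟨min_le_right _ _, le_max_right _ _⟩

lemma not_mem_seg {P : Finset Pt} (hP : GenPos P) {a b r : Pt}
    (ha : a ∈ P) (hb : b ∈ P) (hr : r ∈ P)
    (hab : a ≠ b) (hra : r ≠ a) (hrb : r ≠ b) : r ∉ Seg a b := by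
  intro hmem
  have h1 : r ∈ affineSpan ℝ ({a, b} : Set Pt) := by
    rw [Seg, segment_eq_image_lineMap] at hmem
    obtain ⟨t, _, ht⟩ := hmem
    rw [← ht]
    exact AffineMap.lineMap_mem_affineSpan_pair t a b
  have h2 : Collinear ℝ ({r, a, b} : Set Pt) := collinear_insert_of_mem_affineSpan_pair h1
  have h3 : ({a, b, r} : Set Pt) ⊆ {r, a, b} := by
    intro x hx; simp at hx ⊢; tauto
  exact hP.1 a ha b hb r hr hab (fun h => hrb h.symm) (fun h => hra h.symm) (h2.subset h3)

lemma convex_lt_aux {t x y a b : ℝ} (h1 : t < x) (h2 : t < y)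
    (ha : 0 ≤ a) (hb : 0 ≤ b) (hab : a + b = 1) : t < a * x + b * y := by
  rcases eq_or_lt_of_le ha with h | h
  · have hb1 : b = 1 := by linarith
    rw [← h, hb1]; simp; linarith
  · have key : a * t + b * t = t := by rw [← add_mul, hab, one_mul]
    have k1 : a * t < a * x := mul_lt_mul_of_pos_left h1 h
    have k2 : b * t ≤ b * y := mul_le_mul_of_nonneg_left h2.le hb
    linarith

lemma convex_gt_aux {t x y a b : ℝ} (h1 : x < t) (h2 : y < t)
    (ha : 0 ≤ a) (hb : 0 ≤ b) (hab : a + b = 1) : a * x + b * y < t := by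
  have := convex_lt_aux (t := -t) (x := -x) (y := -y) (by linarith) (by linarith) ha hb hab
  nlinarith

lemma convex_lt_pair {x1 y1 x2 y2 a b : ℝ} (h1 : x1 < y1) (h2 : x2 < y2)
    (ha : 0 ≤ a) (hb : 0 ≤ b) (hab : a + b = 1) : a * x1 + b * x2 < a * y1 + b * y2 := by
  rcases eq_or_lt_of_le ha with h | h
  · have hb1 : b = 1 := by linarith
    rw [← h, hb1]; simp; linarith
  · have k1 : a * x1 < a * y1 := mul_lt_mul_of_pos_left h1 h
    have k2 : b * x2 ≤ b * y2 := mul_le_mul_of_nonneg_left h2.le hb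
    linarith

lemma openSegment_param {q v z : Pt} (hz : z ∈ openSegment ℝ q v) :
    ∃ θ : ℝ, 0 < θ ∧ θ < 1 ∧ z.1 = (1-θ) * q.1 + θ * v.1 ∧ z.2 = (1-θ) * q.2 + θ * v.2 := by
  rw [openSegment_eq_image] at hz
  obtain ⟨θ, ⟨h0, h1⟩, rfl⟩ := hz
  exact ⟨θ, h0, h1, by simp [Prod.fst_add, Prod.smul_fst, smul_eq_mul],
    by simp [Prod.snd_add, Prod.smul_snd, smul_eq_mul]⟩

end BifAux

/-- If `p` is isolated in `M`, the left bifurcation point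
`q` of `p` exists and is isolated in `M`, and `u ≠ q` is a point to the left
of `p` whose insertion yields a crossing-free matching in which `p` has rank
at least `1`, then `q` is vertically visible from the interior of the edge
`up` in `M ∪ {up}`. -/
theorem bif_point_visible (P : Finset Pt) (hP : GenPos P)
    (M : Finset (Pt × Pt)) (hM : IsMatching P M)
    (p : Pt) (hp : p ∈ P) (hiso : Isolated M p)
    (q : Pt) (hq : IsLeftBifPoint P M p q) (hqiso : Isolated M q)
    (u : Pt) (hu : u ∈ P) (hux : u.1 < p.1) (huq : u ≠ q)
    (hM' : IsMatching P (insert (u, p) M))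
    (hrank : 1 ≤ rank P (insert (u, p) M) p) :
    VertVisible P (insert (u, p) M) q (u, p) := by
  classical
  obtain ⟨hqP, T, hTcell, _hfront, hglb⟩ := hq
  obtain ⟨⟨x₀, hx₀F, hTdef⟩, ε₀, hε₀, hmem⟩ := hTcell
  have hupne : u ≠ p := fun h => absurd hux (by rw [h]; exact lt_irrefl _)
  have hMup : (u, p) ∈ insert (u, p) M := Finset.mem_insert_self _ _
  have hnotM : ∀ f ∈ M, f ≠ (u, p) := fun f hf h => (hiso f hf).2 (by rw [h])
  have hsegdisj : ∀ f ∈ M, Seg u p ∩ Seg f.1 f.2 = ∅ := by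
    intro f hf
    have h := hM'.no_cross (u, p) hMup f (Finset.mem_insert_of_mem hf)
      (fun h => (hnotM f hf) h.symm)
    simpa using h
  have hEdge : ∀ g ∈ M, g.1 ∈ P ∧ g.2 ∈ P ∧ g.1.1 < g.2.1 :=
    fun g hg => ⟨hM.left_mem g hg, hM.right_mem g hg, hM.x_lt g hg⟩
  have hene : ∀ g ∈ M, g.1 ≠ g.2 :=
    fun g hg h => absurd (hEdge g hg).2.2 (by rw [h]; exact lt_irrefl _)
  have hptu : ∀ r ∈ P, ∀ r' ∈ P, r.1 = r'.1 → r = r' := by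
    intro r hr r' hr' h
    by_contra hne
    exact hP.2 r hr r' hr' hne h
  have hunotend : ∀ g ∈ M, g.1 ≠ u ∧ g.2 ≠ u := by
    intro g hg
    have h := hM'.no_shared (u, p) hMup g (Finset.mem_insert_of_mem hg)
      (fun h => hnotM g hg h.symm)
    exact ⟨fun hh => h.1 hh.symm, fun hh => h.2.1 hh.symm⟩
  have hPnotSeg : ∀ r ∈ P, ∀ g ∈ M, r ≠ g.1 → r ≠ g.2 → r ∉ Seg g.1 g.2 :=
    fun r hr g hg h1 h2 =>
      not_mem_seg hP (hEdge g hg).1 (hEdge g hg).2.1 hr (hene g hg) h1 h2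
  have hFnoedge : ∀ z : Pt, z ∈ FreeRegion P M → ∀ g ∈ M, z ∉ Seg g.1 g.2 := by
    intro z hz g hg hm
    have h1 : z ∈ edgesSet M := by
      rw [edgesSet]; exact Set.mem_biUnion hg hm
    exact hz (Set.mem_union_left _ h1)
  have hWallF : ∀ z : Pt, ∀ r ∈ P, z ∈ Wall M r → z ∉ FreeRegion P M := by
    intro z r hr hw hz
    exact hz (Set.mem_union_right _ (Set.mem_biUnion hr hw))
  have hSegF : ∀ z : Pt, ∀ g ∈ M, z ∈ Seg g.1 g.2 → z ∉ FreeRegion P M := by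
    intro z g hg hm hz
    exact hFnoedge z hz g hg hm
  -- the rightmost x-coordinate of P strictly left of p
  have huPl : u.1 ∈ (P.filter (fun r : Pt => r.1 < p.1)).image (fun r : Pt => r.1) :=
    Finset.mem_image_of_mem _ (Finset.mem_filter.2 ⟨hu, hux⟩)
  have hPlne : ((P.filter (fun r : Pt => r.1 < p.1)).image (fun r : Pt => r.1)).Nonempty :=
    ⟨u.1, huPl⟩
  set δ := ((P.filter (fun r : Pt => r.1 < p.1)).image (fun r : Pt => r.1)).max' hPlne
    with hδdef
  have hδlt : δ < p.1 := by
    have h1 := Finset.max'_mem _ hPlne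
    obtain ⟨r, hr, hr2⟩ := Finset.mem_image.1 h1
    rw [hδdef, ← hr2]
    exact (Finset.mem_filter.1 hr).2
  have hδmax : ∀ r ∈ P, r.1 < p.1 → r.1 ≤ δ := fun r hr h =>
    Finset.le_max' _ _ (Finset.mem_image_of_mem _ (Finset.mem_filter.2 ⟨hr, h⟩))
  have hcoord : ∀ r ∈ P, r.1 ≤ δ ∨ p.1 ≤ r.1 := by
    intro r hr
    rcases lt_or_ge r.1 p.1 with h | h
    · exact Or.inl (hδmax r hr h)
    · exact Or.inr h
  have huδ : u.1 ≤ δ := hδmax u hu hux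
  set ε₁ := min ε₀ (p.1 - δ) / 2 with hε₁def
  have hε₁pos : 0 < ε₁ := by
    have h1 : 0 < min ε₀ (p.1 - δ) := lt_min hε₀ (by linarith)
    rw [hε₁def]; linarith
  have hε₁lt : ε₁ < ε₀ := by
    have h1 : min ε₀ (p.1 - δ) ≤ ε₀ := min_le_left _ _
    rw [hε₁def]; linarith
  set xb := p.1 - ε₁ with hxbdef
  have hδxb : δ < xb := by
    have h1 : min ε₀ (p.1 - δ) ≤ p.1 - δ := min_le_right _ _
    rw [hxbdef, hε₁def]; linarith
  have hxbp : xb < p.1 := by rw [hxbdef]; linarith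
  have hzbT : ((xb, p.2) : Pt) ∈ T := hmem ε₁ hε₁pos hε₁lt
  have hTF : T ⊆ FreeRegion P M := by rw [hTdef]; exact connectedComponentIn_subset _ _
  have hzbF : ((xb, p.2) : Pt) ∈ FreeRegion P M := hTF hzbT
  have hr21 : ∀ g ∈ M, xb < g.2.1 → p.1 < g.2.1 := by
    intro g hg h
    rcases hcoord g.2 (hEdge g hg).2.1 with h' | h'
    · linarith
    · rcases eq_or_lt_of_le h' with h'' | h''
      · exact absurd (hptu g.2 (hEdge g hg).2.1 p hp h''.symm) (hiso g hg).2
      · exact h''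
  have hl11 : ∀ g ∈ M, g.1.1 < p.1 → g.1.1 ≤ δ := fun g hg h => hδmax g.1 (hEdge g hg).1 h
  have hzbne : ∀ g ∈ M, g.1.1 < xb → xb < g.2.1 → yOn g xb ≠ p.2 := by
    intro g hg h1 h2 heq
    refine hFnoedge _ hzbF g hg ?_
    have h3 := mem_of_x (hEdge g hg).2.2 (le_of_lt h1) (le_of_lt h2)
    rwa [heq] at h3
  -- the lowest edge above the base point (xb, p.2), as a subsingleton finset
  obtain ⟨ET, hET, hETmin, hETsing⟩ :
      ∃ ET : Finset (Pt × Pt),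
        (∀ g ∈ ET, g ∈ M ∧ g.1.1 < xb ∧ xb < g.2.1 ∧ p.2 < yOn g xb) ∧
        (∀ f ∈ M, f.1.1 < xb → xb < f.2.1 → p.2 < yOn f xb →
          ∃ g ∈ ET, yOn g xb ≤ yOn f xb) ∧
        (∀ g ∈ ET, ∀ g' ∈ ET, g = g') := by
    rcases Finset.eq_empty_or_nonempty
        (M.filter fun g => g.1.1 < xb ∧ xb < g.2.1 ∧ p.2 < yOn g xb) with hA | hA
    · refine ⟨∅, ?_, ?_, ?_⟩
      · intro g hg; exact absurd hg (Finset.notMem_empty g)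
      · intro f hf h1 h2 h3
        have hmm : f ∈ M.filter fun g => g.1.1 < xb ∧ xb < g.2.1 ∧ p.2 < yOn g xb :=
          Finset.mem_filter.2 ⟨hf, h1, h2, h3⟩
        rw [hA] at hmm
        exact absurd hmm (Finset.notMem_empty f)
      · intro g hg; exact absurd hg (Finset.notMem_empty g)
    · obtain ⟨et, hetmem, hetmin⟩ := Finset.exists_min_image _ (fun g => yOn g xb) hA
      have h' := Finset.mem_filter.1 hetmem
      refine ⟨{et}, ?_, ?_, ?_⟩
      · intro g hg
        rw [Finset.mem_singleton] at hg
        subst hg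
        exact ⟨h'.1, h'.2.1, h'.2.2.1, h'.2.2.2⟩
      · intro f hf h1 h2 h3
        exact ⟨et, Finset.mem_singleton_self et,
          hetmin f (Finset.mem_filter.2 ⟨hf, h1, h2, h3⟩)⟩
      · intro g hg g' hg'
        rw [Finset.mem_singleton] at hg hg'
        rw [hg, hg']
  obtain ⟨EB, hEB, hEBmin, hEBsing⟩ :
      ∃ EB : Finset (Pt × Pt),
        (∀ g ∈ EB, g ∈ M ∧ g.1.1 < xb ∧ xb < g.2.1 ∧ yOn g xb < p.2) ∧
        (∀ f ∈ M, f.1.1 < xb → xb < f.2.1 → yOn f xb < p.2 →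
          ∃ g ∈ EB, yOn f xb ≤ yOn g xb) ∧
        (∀ g ∈ EB, ∀ g' ∈ EB, g = g') := by
    rcases Finset.eq_empty_or_nonempty
        (M.filter fun g => g.1.1 < xb ∧ xb < g.2.1 ∧ yOn g xb < p.2) with hA | hA
    · refine ⟨∅, ?_, ?_, ?_⟩
      · intro g hg; exact absurd hg (Finset.notMem_empty g)
      · intro f hf h1 h2 h3
        have hmm : f ∈ M.filter fun g => g.1.1 < xb ∧ xb < g.2.1 ∧ yOn g xb < p.2 :=
          Finset.mem_filter.2 ⟨hf, h1, h2, h3⟩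
        rw [hA] at hmm
        exact absurd hmm (Finset.notMem_empty f)
      · intro g hg; exact absurd hg (Finset.notMem_empty g)
    · obtain ⟨eb, hebmem, hebmax⟩ := Finset.exists_max_image _ (fun g => yOn g xb) hA
      have h' := Finset.mem_filter.1 hebmem
      refine ⟨{eb}, ?_, ?_, ?_⟩
      · intro g hg
        rw [Finset.mem_singleton] at hg
        subst hg
        exact ⟨h'.1, h'.2.1, h'.2.2.1, h'.2.2.2⟩
      · intro f hf h1 h2 h3
        exact ⟨eb, Finset.mem_singleton_self eb,
          hebmax f (Finset.mem_filter.2 ⟨hf, h1, h2, h3⟩)⟩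
      · intro g hg g' hg'
        rw [Finset.mem_singleton] at hg hg'
        rw [hg, hg']
  have hETM : ∀ g ∈ ET, g ∈ M := fun g hg => (hET g hg).1
  have hEBM : ∀ g ∈ EB, g ∈ M := fun g hg => (hEB g hg).1
  have hET11 : ∀ g ∈ ET, g.1.1 ≤ δ :=
    fun g hg => hl11 g (hETM g hg) (lt_trans (hET g hg).2.1 hxbp)
  have hEB11 : ∀ g ∈ EB, g.1.1 ≤ δ :=
    fun g hg => hl11 g (hEBM g hg) (lt_trans (hEB g hg).2.1 hxbp)
  have hET21 : ∀ g ∈ ET, p.1 < g.2.1 := fun g hg => hr21 g (hETM g hg) (hET g hg).2.2.1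
  have hEB21 : ∀ g ∈ EB, p.1 < g.2.1 := fun g hg => hr21 g (hEBM g hg) (hEB g hg).2.2.1
  have hmonoM : ∀ e ∈ M, ∀ f ∈ M, ∀ x₀ x : ℝ,
      e.1.1 ≤ x₀ → f.1.1 ≤ x₀ → e.1.1 ≤ x → f.1.1 ≤ x →
      x₀ ≤ e.2.1 → x₀ ≤ f.2.1 → x ≤ e.2.1 → x ≤ f.2.1 →
      yOn e x₀ < yOn f x₀ → yOn e x < yOn f x := by
    intro e he f hf x₀ x h1 h2 h3 h4 h5 h6 h7 h8 hlt
    have hnef : e ≠ f := fun h => by rw [h] at hlt; exact lt_irrefl _ hlt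
    exact lt_at_of_lt_at (hEdge e he).2.2 (hEdge f hf).2.2 (hM.no_cross e he f hf hnef)
      h1 h2 h3 h4 h5 h6 h7 h8 hlt
  have htouch : ∀ g ∈ M, ∀ g' ∈ M, ∀ x : ℝ, g.1.1 ≤ x → x ≤ g.2.1 →
      g'.1.1 ≤ x → x ≤ g'.2.1 → yOn g x = yOn g' x → g = g' := by
    intro g hg g' hg' x h1 h2 h3 h4 heq
    by_contra hne
    have hd := hM.no_cross g hg g' hg' hne
    have m1 := mem_of_x (hEdge g hg).2.2 h1 h2
    have m2 := mem_of_x (hEdge g' hg').2.2 h3 h4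
    rw [heq] at m1
    have hmm : ((x, yOn g' x) : Pt) ∈ Seg g.1 g.2 ∩ Seg g'.1 g'.2 := ⟨m1, m2⟩
    rw [hd] at hmm
    exact hmm
  have hstrictPT : ∀ g ∈ ET, p.2 < yOn g p.1 := by
    intro g hg
    obtain ⟨hgM, h1, h2, h3⟩ := hET g hg
    have hg21 : p.1 < g.2.1 := hET21 g hg
    have hg11 : g.1.1 ≤ δ := hET11 g hg
    rcases lt_trichotomy p.2 (yOn g p.1) with h | h | h
    · exact h
    · exact absurd ((seg_mem_iff (hEdge g hgM).2.2).2
        ⟨by linarith, by linarith, h⟩)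
        (hPnotSeg p hp g hgM (Ne.symm (hiso g hgM).1) (Ne.symm (hiso g hgM).2))
    · exfalso
      have hc : Continuous fun t : ℝ => yOn g t - p.2 := (cont_yOn g).sub continuous_const
      have h0 : (0:ℝ) ∈ Set.uIcc ((fun t : ℝ => yOn g t - p.2) xb)
          ((fun t : ℝ => yOn g t - p.2) p.1) := by
        rw [Set.mem_uIcc]
        right
        exact ⟨by simp only; linarith, by simp only; linarith⟩
      obtain ⟨t, ht, htv⟩ := intermediate_value_uIcc hc.continuousOn h0
      simp only at htv
      have htIcc : xb ≤ t ∧ t ≤ p.1 := by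
        rcases Set.mem_uIcc.1 ht with ⟨a1, a2⟩ | ⟨a1, a2⟩
        · exact ⟨a1, a2⟩
        · exact ⟨by linarith, by linarith⟩
      have htne2 : t ≠ p.1 := by
        intro hh
        rw [hh] at htv
        linarith
      have h1' : 0 < p.1 - t := by
        rcases eq_or_lt_of_le htIcc.2 with hh | hh
        · exact absurd hh htne2
        · linarith
      have h2' : p.1 - t < ε₀ := by
        have := htIcc.1
        rw [hxbdef] at this
        linarith
      have hmemF : ((p.1 - (p.1 - t), p.2) : Pt) ∈ FreeRegion P M :=
        hTF (hmem (p.1 - t) h1' h2')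
      have hseg : ((p.1 - (p.1 - t), p.2) : Pt) ∈ Seg g.1 g.2 := by
        have ht1 : p.1 - (p.1 - t) = t := by ring
        rw [ht1]
        exact (seg_mem_iff (hEdge g hgM).2.2).2
          ⟨by linarith [htIcc.1], by linarith [htIcc.2], by linarith⟩
      exact hFnoedge _ hmemF g hgM hseg
  have hstrictPB : ∀ g ∈ EB, yOn g p.1 < p.2 := by
    intro g hg
    obtain ⟨hgM, h1, h2, h3⟩ := hEB g hg
    have hg21 : p.1 < g.2.1 := hEB21 g hg
    have hg11 : g.1.1 ≤ δ := hEB11 g hg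
    rcases lt_trichotomy (yOn g p.1) p.2 with h | h | h
    · exact h
    · exact absurd ((seg_mem_iff (hEdge g hgM).2.2).2
        ⟨by linarith, by linarith, h.symm⟩)
        (hPnotSeg p hp g hgM (Ne.symm (hiso g hgM).1) (Ne.symm (hiso g hgM).2))
    · exfalso
      have hc : Continuous fun t : ℝ => yOn g t - p.2 := (cont_yOn g).sub continuous_const
      have h0 : (0:ℝ) ∈ Set.uIcc ((fun t : ℝ => yOn g t - p.2) xb)
          ((fun t : ℝ => yOn g t - p.2) p.1) := by
        rw [Set.mem_uIcc]
        left
        exact ⟨by simp only; linarith, by simp only; linarith⟩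
      obtain ⟨t, ht, htv⟩ := intermediate_value_uIcc hc.continuousOn h0
      simp only at htv
      have htIcc : xb ≤ t ∧ t ≤ p.1 := by
        rcases Set.mem_uIcc.1 ht with ⟨a1, a2⟩ | ⟨a1, a2⟩
        · exact ⟨a1, a2⟩
        · exact ⟨by linarith, by linarith⟩
      have htne2 : t ≠ p.1 := by
        intro hh
        rw [hh] at htv
        linarith
      have h1' : 0 < p.1 - t := by
        rcases eq_or_lt_of_le htIcc.2 with hh | hh
        · exact absurd hh htne2
        · linarith
      have h2' : p.1 - t < ε₀ := by
        have := htIcc.1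
        rw [hxbdef] at this
        linarith
      have hmemF : ((p.1 - (p.1 - t), p.2) : Pt) ∈ FreeRegion P M :=
        hTF (hmem (p.1 - t) h1' h2')
      have hseg : ((p.1 - (p.1 - t), p.2) : Pt) ∈ Seg g.1 g.2 := by
        have ht1 : p.1 - (p.1 - t) = t := by ring
        rw [ht1]
        exact (seg_mem_iff (hEdge g hgM).2.2).2
          ⟨by linarith [htIcc.1], by linarith [htIcc.2], by linarith⟩
      exact hFnoedge _ hmemF g hgM hseg
  have hupLT : ∀ g ∈ ET, ∀ x : ℝ, u.1 ≤ x → g.1.1 ≤ x → x ≤ p.1 →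
      yOn (u, p) x < yOn g x := by
    intro g hg x h1 h2 h3
    have hgM := hETM g hg
    have hyp : yOn (u, p) p.1 = p.2 := yOn_right (g := (u, p)) hux
    exact lt_at_of_lt_at (e := (u, p)) (f := g) hux (hEdge g hgM).2.2 (hsegdisj g hgM)
      hux.le ((hET11 g hg).trans hδlt.le) h1 h2 le_rfl (hET21 g hg).le h3
      (h3.trans (hET21 g hg).le) (by rw [hyp]; exact hstrictPT g hg)
  have hupGB : ∀ g ∈ EB, ∀ x : ℝ, u.1 ≤ x → g.1.1 ≤ x → x ≤ p.1 →
      yOn g x < yOn (u, p) x := by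
    intro g hg x h1 h2 h3
    have hgM := hEBM g hg
    have hyp : yOn (u, p) p.1 = p.2 := yOn_right (g := (u, p)) hux
    have hd : Seg g.1 g.2 ∩ Seg u p = ∅ := by
      rw [Set.inter_comm]; exact hsegdisj g hgM
    exact lt_at_of_lt_at (e := g) (f := (u, p)) (hEdge g hgM).2.2 hux hd
      ((hEB11 g hg).trans hδlt.le) hux.le h2 h1 (hEB21 g hg).le le_rfl
      (h3.trans (hEB21 g hg).le) h3 (by rw [hyp]; exact hstrictPB g hg)
  have hebet : ∀ et ∈ ET, ∀ eb ∈ EB, ∀ x : ℝ, et.1.1 ≤ x → eb.1.1 ≤ x → x ≤ p.1 →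
      yOn eb x < yOn et x := by
    intro et het eb heb x h1 h2 h3
    exact hmonoM eb (hEBM eb heb) et (hETM et het) xb x
      (hEB eb heb).2.1.le (hET et het).2.1.le h2 h1
      (hEB eb heb).2.2.1.le (hET et het).2.2.1.le
      (h3.trans (hEB21 eb heb).le) (h3.trans (hET21 et het).le)
      (lt_trans (hEB eb heb).2.2.2 (hET et het).2.2.2)
  have hETdom : ∀ f ∈ M, f.1.1 < xb → xb < f.2.1 → p.2 < yOn f xb →
      ∀ x : ℝ, f.1.1 ≤ x → x ≤ p.1 → (∀ g ∈ ET, g.1.1 ≤ x) →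
      ∃ g ∈ ET, yOn g x ≤ yOn f x := by
    intro f hf h1 h2 h3 x hx1 hx2 hx3
    obtain ⟨g, hg, hle⟩ := hETmin f hf h1 h2 h3
    rcases eq_or_lt_of_le hle with heq | hlt2
    · have hgf : g = f := htouch g (hETM g hg) f hf xb (hET g hg).2.1.le
        (hET g hg).2.2.1.le h1.le h2.le heq
      exact ⟨g, hg, le_of_eq (by rw [hgf])⟩
    · exact ⟨g, hg, (hmonoM g (hETM g hg) f hf xb x (hET g hg).2.1.le h1.le
        (hx3 g hg) hx1 (hET g hg).2.2.1.le h2.le (hx2.trans (hET21 g hg).le)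
        (hx2.trans (hr21 f hf h2).le) hlt2).le⟩
  have hEBdom : ∀ f ∈ M, f.1.1 < xb → xb < f.2.1 → yOn f xb < p.2 →
      ∀ x : ℝ, f.1.1 ≤ x → x ≤ p.1 → (∀ g ∈ EB, g.1.1 ≤ x) →
      ∃ g ∈ EB, yOn f x ≤ yOn g x := by
    intro f hf h1 h2 h3 x hx1 hx2 hx3
    obtain ⟨g, hg, hle⟩ := hEBmin f hf h1 h2 h3
    rcases eq_or_lt_of_le hle with heq | hlt2
    · have hgf : f = g := htouch f hf g (hEBM g hg) xb h1.le h2.le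
        (hEB g hg).2.1.le (hEB g hg).2.2.1.le heq
      exact ⟨g, hg, le_of_eq (by rw [hgf])⟩
    · exact ⟨g, hg, (hmonoM f hf g (hEBM g hg) xb x h1.le (hEB g hg).2.1.le
        hx1 (hx3 g hg) h2.le (hEB g hg).2.2.1.le (hx2.trans (hr21 f hf h2).le)
        (hx2.trans (hEB21 g hg).le) hlt2).le⟩
  -- blockers and the finite set of left obstacle abscissas
  set Blk := P.filter (fun r : Pt => r.1 < xb ∧ (∀ g ∈ ET, r.2 < yOn g r.1) ∧
    (∀ g ∈ EB, yOn g r.1 < r.2)) with hBlkdef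
  set L := ((ET ∪ EB).image (fun g : Pt × Pt => g.1.1)) ∪
    (Blk.image (fun r : Pt => r.1)) with hLdef
  have hETL : ∀ g ∈ ET, g.1.1 ∈ L := fun g hg =>
    Finset.mem_union_left _ (Finset.mem_image_of_mem _ (Finset.mem_union_left _ hg))
  have hEBL : ∀ g ∈ EB, g.1.1 ∈ L := fun g hg =>
    Finset.mem_union_left _ (Finset.mem_image_of_mem _ (Finset.mem_union_right _ hg))
  have hBlkL : ∀ r ∈ Blk, r.1 ∈ L := fun r hr =>
    Finset.mem_union_right _ (Finset.mem_image_of_mem _ hr)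
  have hLlt : ∀ t ∈ L, t < xb := by
    intro t ht
    rcases Finset.mem_union.1 ht with h | h
    · obtain ⟨g, hg, rfl⟩ := Finset.mem_image.1 h
      rcases Finset.mem_union.1 hg with h' | h'
      · exact (hET g h').2.1
      · exact (hEB g h').2.1
    · obtain ⟨r, hr, rfl⟩ := Finset.mem_image.1 h
      exact (Finset.mem_filter.1 hr).2.1
  have hLP : ∀ t ∈ L, ∃ r ∈ P, r.1 = t := by
    intro t ht
    rcases Finset.mem_union.1 ht with h | h
    · obtain ⟨g, hg, rfl⟩ := Finset.mem_image.1 h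
      rcases Finset.mem_union.1 hg with h' | h'
      · exact ⟨g.1, (hEdge g (hETM g h')).1, rfl⟩
      · exact ⟨g.1, (hEdge g (hEBM g h')).1, rfl⟩
    · obtain ⟨r, hr, rfl⟩ := Finset.mem_image.1 h
      exact ⟨r, (Finset.mem_filter.1 hr).1, rfl⟩
  -- the candidate cell
  set R : Set Pt := {z : Pt | (∀ t ∈ L, t < z.1) ∧ z.1 < p.1 ∧
    (∀ g ∈ ET, z.2 < yOn g z.1) ∧ (∀ g ∈ EB, yOn g z.1 < z.2)} with hRdef
  have hzbR : ((xb, p.2) : Pt) ∈ R := by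
    refine ⟨fun t ht => hLlt t ht, hxbp, ?_, ?_⟩
    · intro g hg; exact (hET g hg).2.2.2
    · intro g hg; exact (hEB g hg).2.2.2
  have hRF : R ⊆ FreeRegion P M := by
    rintro z ⟨hzL, hzp, hzT, hzB⟩
    simp only [FreeRegion, Set.mem_compl_iff, Set.mem_union]
    push_neg
    constructor
    · -- not on an edge
      intro hbad
      simp only [edgesSet, Set.mem_iUnion] at hbad
      obtain ⟨g, hgM, hzg⟩ := hbad
      obtain ⟨hz1, hz2, hzy⟩ := (seg_mem_iff (hEdge g hgM).2.2).1 hzg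
      have hg11p : g.1.1 < p.1 := lt_of_le_of_lt hz1 hzp
      have hg11δ : g.1.1 ≤ δ := hl11 g hgM hg11p
      rcases hcoord g.2 (hEdge g hgM).2.1 with h21 | h21
      · -- g ends before p : its right endpoint is a blocker, contradiction
        have hblk : g.2 ∈ Blk := by
          refine Finset.mem_filter.2 ⟨(hEdge g hgM).2.1, by linarith, ?_, ?_⟩
          · intro et het
            have hq1 : yOn g z.1 < yOn et z.1 := by rw [← hzy]; exact hzT et het
            have h2 : yOn g g.2.1 < yOn et g.2.1 := hmonoM g hgM et (hETM et het) z.1 g.2.1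
              hz1 (hzL _ (hETL et het)).le (hEdge g hgM).2.2.le
              ((hzL _ (hETL et het)).le.trans hz2) hz2
              (by linarith [hET21 et het]) le_rfl (by linarith [hET21 et het]) hq1
            rwa [yOn_right (hEdge g hgM).2.2] at h2
          · intro eb heb
            have hq1 : yOn eb z.1 < yOn g z.1 := by rw [← hzy]; exact hzB eb heb
            have h2 : yOn eb g.2.1 < yOn g g.2.1 := hmonoM eb (hEBM eb heb) g hgM z.1 g.2.1
              (hzL _ (hEBL eb heb)).le hz1 ((hzL _ (hEBL eb heb)).le.trans hz2)
              (hEdge g hgM).2.2.le (by linarith [hEB21 eb heb]) hz2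
              (by linarith [hEB21 eb heb]) le_rfl hq1
            rwa [yOn_right (hEdge g hgM).2.2] at h2
        have hcon := hzL g.2.1 (hBlkL g.2 hblk)
        linarith
      · -- g extends beyond p : it spans xb, contradicting minimality of ET/EB
        have h21' : p.1 < g.2.1 := by
          rcases eq_or_lt_of_le h21 with hh | hh
          · exact absurd (hptu g.2 (hEdge g hgM).2.1 p hp hh.symm) (hiso g hgM).2
          · exact hh
        have hspan1 : g.1.1 < xb := lt_of_le_of_lt hg11δ hδxb
        have hspan2 : xb < g.2.1 := lt_trans hxbp h21'
        rcases lt_trichotomy p.2 (yOn g xb) with hc | hc | hc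
        · obtain ⟨et, het, hle⟩ := hETdom g hgM hspan1 hspan2 hc z.1 hz1 hzp.le
            (fun g' hg' => (hzL _ (hETL g' hg')).le)
          have hcon := hzT et het
          linarith
        · exact hzbne g hgM hspan1 hspan2 hc.symm
        · obtain ⟨eb, heb, hle⟩ := hEBdom g hgM hspan1 hspan2 hc z.1 hz1 hzp.le
            (fun g' hg' => (hzL _ (hEBL g' hg')).le)
          have hcon := hzB eb heb
          linarith
    · -- not on a wall
      intro hbad
      simp only [Set.mem_iUnion] at hbad
      obtain ⟨r, hrP, hzw⟩ := hbad
      rw [Wall, Set.mem_setOf_eq] at hzw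
      obtain ⟨hzr1, hwall⟩ := hzw
      have hrp1 : r.1 < p.1 := by rw [← hzr1]; exact hzp
      have hrδ : r.1 ≤ δ := hδmax r hrP hrp1
      by_cases hin : (∀ g ∈ ET, r.2 < yOn g r.1) ∧ (∀ g ∈ EB, yOn g r.1 < r.2)
      · have hblk : r ∈ Blk := Finset.mem_filter.2
          ⟨hrP, by linarith [hδxb], hin.1, hin.2⟩
        have hcon := hzL r.1 (hBlkL r hblk)
        rw [hzr1] at hcon
        exact lt_irrefl _ hcon
      · rcases not_and_or.1 hin with hbad2 | hbad2
        · push_neg at hbad2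
          obtain ⟨et, het, hge⟩ := hbad2
          have hetM := hETM et het
          have he1 : et.1.1 < r.1 := by rw [← hzr1]; exact hzL _ (hETL et het)
          have he2 : r.1 < et.2.1 := lt_trans hrp1 (hET21 et het)
          rcases eq_or_lt_of_le hge with heq | hlt3
          · have hrseg : r ∈ Seg et.1 et.2 := (seg_mem_iff (hEdge et hetM).2.2).2
              ⟨he1.le, he2.le, heq.symm⟩
            refine hPnotSeg r hrP et hetM ?_ ?_ hrseg
            · intro hh; rw [hh] at he1; exact lt_irrefl _ he1
            · intro hh; rw [hh] at he2; exact lt_irrefl _ he2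
          · refine hwall ((r.1, yOn et r.1) : Pt) rfl ?_ ?_ ?_
            · rw [Set.mem_uIcc]
              left
              refine ⟨?_, hlt3.le⟩
              have hc := hzT et het
              rw [hzr1] at hc
              exact hc.le
            · intro hh
              have hc := congrArg Prod.snd hh
              simp only at hc
              rw [hc] at hlt3
              exact lt_irrefl _ hlt3
            · simp only [edgesSet, Set.mem_iUnion]
              exact ⟨et, hetM, mem_of_x (hEdge et hetM).2.2 he1.le he2.le⟩
        · push_neg at hbad2
          obtain ⟨eb, heb, hge⟩ := hbad2
          have hebM := hEBM eb heb
          have he1 : eb.1.1 < r.1 := by rw [← hzr1]; exact hzL _ (hEBL eb heb)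
          have he2 : r.1 < eb.2.1 := lt_trans hrp1 (hEB21 eb heb)
          rcases eq_or_lt_of_le hge with heq | hlt3
          · have hrseg : r ∈ Seg eb.1 eb.2 := (seg_mem_iff (hEdge eb hebM).2.2).2
              ⟨he1.le, he2.le, heq⟩
            refine hPnotSeg r hrP eb hebM ?_ ?_ hrseg
            · intro hh; rw [hh] at he1; exact lt_irrefl _ he1
            · intro hh; rw [hh] at he2; exact lt_irrefl _ he2
          · refine hwall ((r.1, yOn eb r.1) : Pt) rfl ?_ ?_ ?_
            · rw [Set.mem_uIcc]
              right
              refine ⟨hlt3.le, ?_⟩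
              have hc := hzB eb heb
              rw [hzr1] at hc
              exact hc.le
            · intro hh
              have hc := congrArg Prod.snd hh
              simp only at hc
              rw [hc] at hlt3
              exact lt_irrefl _ hlt3
            · simp only [edgesSet, Set.mem_iUnion]
              exact ⟨eb, hebM, mem_of_x (hEdge eb hebM).2.2 he1.le he2.le⟩
  have hRconv : Convex ℝ R := by
    rintro z₁ ⟨hL1, hp1, hT1, hB1⟩ z₂ ⟨hL2, hp2, hT2, hB2⟩ a b ha hb hab
    have hfst : (a • z₁ + b • z₂).1 = a * z₁.1 + b * z₂.1 := by
      simp [Prod.fst_add, Prod.smul_fst, smul_eq_mul]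
    have hsnd : (a • z₁ + b • z₂).2 = a * z₁.2 + b * z₂.2 := by
      simp [Prod.snd_add, Prod.smul_snd, smul_eq_mul]
    refine ⟨?_, ?_, ?_, ?_⟩
    · intro t ht
      rw [hfst]
      exact convex_lt_aux (hL1 t ht) (hL2 t ht) ha hb hab
    · rw [hfst]
      exact convex_gt_aux hp1 hp2 ha hb hab
    · intro g hg
      rw [hfst, hsnd, yOn_comb g hab]
      exact convex_lt_pair (hT1 g hg) (hT2 g hg) ha hb hab
    · intro g hg
      rw [hfst, hsnd, yOn_comb g hab]
      exact convex_lt_pair (hB1 g hg) (hB2 g hg) ha hb hab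
  have hRopen : IsOpen R := by
    have hre : R = (⋂ t ∈ L, {z : Pt | t < z.1}) ∩ ({z : Pt | z.1 < p.1} ∩
        ((⋂ g ∈ ET, {z : Pt | z.2 < yOn g z.1}) ∩
         (⋂ g ∈ EB, {z : Pt | yOn g z.1 < z.2}))) := by
      rw [hRdef]
      ext z
      simp only [Set.mem_setOf_eq, Set.mem_inter_iff, Set.mem_iInter]
    rw [hre]
    refine IsOpen.inter ?_ (IsOpen.inter ?_ (IsOpen.inter ?_ ?_))
    · exact isOpen_biInter_finset fun t _ => isOpen_lt continuous_const continuous_fst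
    · exact isOpen_lt continuous_fst continuous_const
    · exact isOpen_biInter_finset fun g _ =>
        isOpen_lt continuous_snd ((cont_yOn g).comp continuous_fst)
    · exact isOpen_biInter_finset fun g _ =>
        isOpen_lt ((cont_yOn g).comp continuous_fst) continuous_snd
  -- the core "left boundary is clean" lemma
  have hLC : ∀ (hne : L.Nonempty), ∀ f ∈ M, ∀ h : ℝ,
      ((L.max' hne, h) : Pt) ∈ Seg f.1 f.2 →
      (∀ g ∈ ET, h < yOn g (L.max' hne)) → (∀ g ∈ EB, yOn g (L.max' hne) < h) →
      ((L.max' hne, h) : Pt) ∈ P := by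
    intro hne f hfM h hseg hT hB
    have hALlt : L.max' hne < xb := hLlt _ (Finset.max'_mem _ hne)
    set A := L.max' hne with hAdef
    have hETle : ∀ g ∈ ET, g.1.1 ≤ A := fun g hg => Finset.le_max' _ _ (hETL g hg)
    have hEBle : ∀ g ∈ EB, g.1.1 ≤ A := fun g hg => Finset.le_max' _ _ (hEBL g hg)
    have hBlkle : ∀ r ∈ Blk, r.1 ≤ A := fun r hr => Finset.le_max' _ _ (hBlkL r hr)
    obtain ⟨hs1, hs2, hsy⟩ := (seg_mem_iff (hEdge f hfM).2.2).1 hseg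
    have hs1' : f.1.1 ≤ A := hs1
    have hs2' : A ≤ f.2.1 := hs2
    have hsy' : h = yOn f A := hsy
    rcases eq_or_lt_of_le hs1' with he1 | he1
    · have hsy2 := hsy'
      rw [← he1, yOn_left] at hsy2
      have hpt : ((A, h) : Pt) = f.1 := by
        rw [Prod.ext_iff]
        exact ⟨he1.symm, hsy2⟩
      rw [hpt]
      exact (hEdge f hfM).1
    rcases eq_or_lt_of_le hs2' with he2 | he2
    · have hsy2 := hsy'
      rw [he2, yOn_right (hEdge f hfM).2.2] at hsy2
      have hpt : ((A, h) : Pt) = f.2 := by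
        rw [Prod.ext_iff]
        exact ⟨he2, hsy2⟩
      rw [hpt]
      exact (hEdge f hfM).2.1
    exfalso
    rcases hcoord f.2 (hEdge f hfM).2.1 with hco | hco
    · -- f ends before xb : its right endpoint is a blocker beyond A
      have hblk : f.2 ∈ Blk := by
        refine Finset.mem_filter.2 ⟨(hEdge f hfM).2.1, by linarith [hδxb], ?_, ?_⟩
        · intro g hg
          have hlt : yOn f A < yOn g A := by rw [← hsy']; exact hT g hg
          have h2 : yOn f f.2.1 < yOn g f.2.1 := hmonoM f hfM g (hETM g hg) A f.2.1
            he1.le (hETle g hg) (hEdge f hfM).2.2.le (by linarith [hETle g hg, he2])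
            he2.le (by linarith [hALlt, (hET g hg).2.2.1]) le_rfl
            (by linarith [hco, hδxb, (hET g hg).2.2.1]) hlt
          rwa [yOn_right (hEdge f hfM).2.2] at h2
        · intro g hg
          have hlt : yOn g A < yOn f A := by rw [← hsy']; exact hB g hg
          have h2 : yOn g f.2.1 < yOn f f.2.1 := hmonoM g (hEBM g hg) f hfM A f.2.1
            (hEBle g hg) he1.le (by linarith [hEBle g hg, he2]) (hEdge f hfM).2.2.le
            (by linarith [hALlt, (hEB g hg).2.2.1]) he2.le
            (by linarith [hco, hδxb, (hEB g hg).2.2.1]) le_rfl hlt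
          rwa [yOn_right (hEdge f hfM).2.2] at h2
      have := hBlkle f.2 hblk
      linarith
    · -- f extends beyond p, hence spans xb
      have hco' : p.1 < f.2.1 := by
        rcases eq_or_lt_of_le hco with hh | hh
        · exact absurd (hptu f.2 (hEdge f hfM).2.1 p hp hh.symm) (hiso f hfM).2
        · exact hh
      have hsp1 : f.1.1 < xb := by linarith
      have hsp2 : xb < f.2.1 := by linarith
      rcases lt_trichotomy p.2 (yOn f xb) with hc | hc | hc
      · obtain ⟨g, hg, hle⟩ := hETdom f hfM hsp1 hsp2 hc A he1.le
          (by linarith [hALlt, hxbp]) hETle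
        have hcon := hT g hg
        linarith [hsy']
      · exact hzbne f hfM hsp1 hsp2 hc.symm
      · obtain ⟨g, hg, hle⟩ := hEBdom f hfM hsp1 hsp2 hc A he1.le
          (by linarith [hALlt, hxbp]) hEBle
        have hcon := hB g hg
        linarith [hsy']
  have hclos : ∀ z : Pt, z ∈ closure R → z ∉ R → z ∉ FreeRegion P M := by
    intro z hzc hzR
    have hRcl : z ∈ {w : Pt | (∀ t ∈ L, t ≤ w.1) ∧ w.1 ≤ p.1 ∧
        (∀ g ∈ ET, w.2 ≤ yOn g w.1) ∧ (∀ g ∈ EB, yOn g w.1 ≤ w.2)} := by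
      refine closure_minimal ?_ ?_ hzc
      · rintro w ⟨h1, h2, h3, h4⟩
        exact ⟨fun t ht => (h1 t ht).le, h2.le, fun g hg => (h3 g hg).le,
          fun g hg => (h4 g hg).le⟩
      · have he : {w : Pt | (∀ t ∈ L, t ≤ w.1) ∧ w.1 ≤ p.1 ∧
            (∀ g ∈ ET, w.2 ≤ yOn g w.1) ∧ (∀ g ∈ EB, yOn g w.1 ≤ w.2)} =
            (⋂ t ∈ L, {w : Pt | t ≤ w.1}) ∩ ({w : Pt | w.1 ≤ p.1} ∩
            ((⋂ g ∈ ET, {w : Pt | w.2 ≤ yOn g w.1}) ∩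
             (⋂ g ∈ EB, {w : Pt | yOn g w.1 ≤ w.2}))) := by
          ext w
          simp only [Set.mem_setOf_eq, Set.mem_inter_iff, Set.mem_iInter]
        rw [he]
        refine IsClosed.inter ?_ (IsClosed.inter ?_ (IsClosed.inter ?_ ?_))
        · exact isClosed_biInter fun t _ => isClosed_le continuous_const continuous_fst
        · exact isClosed_le continuous_fst continuous_const
        · exact isClosed_biInter fun g _ =>
            isClosed_le continuous_snd ((cont_yOn g).comp continuous_fst)
        · exact isClosed_biInter fun g _ =>
            isClosed_le ((cont_yOn g).comp continuous_fst) continuous_snd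
    obtain ⟨hc1, hc2, hc3, hc4⟩ := hRcl
    by_cases hTeq : ∀ g ∈ ET, z.2 < yOn g z.1
    swap
    · -- z lies on a top edge
      push_neg at hTeq
      obtain ⟨et, het, hge⟩ := hTeq
      have heq : z.2 = yOn et z.1 := le_antisymm (hc3 et het) hge
      exact hSegF z et (hETM et het) ((seg_mem_iff (hEdge et (hETM et het)).2.2).2
        ⟨hc1 _ (hETL et het), hc2.trans (hET21 et het).le, heq⟩)
    by_cases hBeq : ∀ g ∈ EB, yOn g z.1 < z.2
    swap
    · push_neg at hBeq
      obtain ⟨eb, heb, hge⟩ := hBeq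
      have heq : z.2 = yOn eb z.1 := le_antisymm hge (hc4 eb heb)
      exact hSegF z eb (hEBM eb heb) ((seg_mem_iff (hEdge eb (hEBM eb heb)).2.2).2
        ⟨hc1 _ (hEBL eb heb), hc2.trans (hEB21 eb heb).le, heq⟩)
    by_cases hpeq : z.1 < p.1
    swap
    · -- z lies on the wall of p
      have hzp1 : z.1 = p.1 := le_antisymm hc2 (not_lt.1 hpeq)
      refine hWallF z p hp ?_
      rw [Wall, Set.mem_setOf_eq]
      refine ⟨hzp1, ?_⟩
      intro w hw1 hw2 hwne hwedge
      simp only [edgesSet, Set.mem_iUnion] at hwedge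
      obtain ⟨f, hfM, hwf⟩ := hwedge
      obtain ⟨hw11, hw12, hwy⟩ := (seg_mem_iff (hEdge f hfM).2.2).1 hwf
      rw [hw1] at hw11 hw12 hwy
      have hf1 : f.1.1 < p.1 := by
        rcases eq_or_lt_of_le hw11 with hh | hh
        · exact absurd (hptu f.1 (hEdge f hfM).1 p hp hh) (hiso f hfM).1
        · exact hh
      have hf2 : p.1 < f.2.1 := by
        rcases eq_or_lt_of_le hw12 with hh | hh
        · exact absurd (hptu f.2 (hEdge f hfM).2.1 p hp hh.symm) (hiso f hfM).2
        · exact hh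
      have hsp1 : f.1.1 < xb := lt_of_le_of_lt (hl11 f hfM hf1) hδxb
      have hsp2 : xb < f.2.1 := lt_trans hxbp hf2
      have hwT : ∀ g ∈ ET, w.2 < yOn g p.1 := by
        intro g hg
        have h1 := hTeq g hg
        rw [hzp1] at h1
        have h2 := hstrictPT g hg
        rcases Set.mem_uIcc.1 hw2 with ⟨a1, a2⟩ | ⟨a1, a2⟩ <;> linarith
      have hwB : ∀ g ∈ EB, yOn g p.1 < w.2 := by
        intro g hg
        have h1 := hBeq g hg
        rw [hzp1] at h1
        have h2 := hstrictPB g hg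
        rcases Set.mem_uIcc.1 hw2 with ⟨a1, a2⟩ | ⟨a1, a2⟩ <;> linarith
      rcases lt_trichotomy p.2 (yOn f xb) with hc | hc | hc
      · obtain ⟨g, hg, hle⟩ := hETdom f hfM hsp1 hsp2 hc p.1 hf1.le le_rfl
          (fun g' hg' => (hET11 g' hg').trans hδlt.le)
        have hcon := hwT g hg
        linarith
      · exact hzbne f hfM hsp1 hsp2 hc.symm
      · obtain ⟨g, hg, hle⟩ := hEBdom f hfM hsp1 hsp2 hc p.1 hf1.le le_rfl
          (fun g' hg' => (hEB11 g' hg').trans hδlt.le)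
        have hcon := hwB g hg
        linarith
    -- now some element of L equals z.1, necessarily the maximum
    have hex : ∃ t ∈ L, ¬ t < z.1 := by
      by_contra hh
      push_neg at hh
      exact hzR ⟨hh, hpeq, hTeq, hBeq⟩
    obtain ⟨t0, ht0L, ht0⟩ := hex
    have hLne : L.Nonempty := ⟨t0, ht0L⟩
    have hzA : z.1 = L.max' hLne := by
      have h1 : L.max' hLne ≤ z.1 := hc1 _ (Finset.max'_mem _ hLne)
      have h2 : z.1 ≤ t0 := not_lt.1 ht0
      have h3 : t0 ≤ L.max' hLne := Finset.le_max' _ _ ht0L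
      linarith
    have hETle : ∀ g ∈ ET, g.1.1 ≤ L.max' hLne :=
      fun g hg => Finset.le_max' _ _ (hETL g hg)
    have hEBle : ∀ g ∈ EB, g.1.1 ≤ L.max' hLne :=
      fun g hg => Finset.le_max' _ _ (hEBL g hg)
    have hAxb : L.max' hLne < xb := hLlt _ (Finset.max'_mem _ hLne)
    have hzT : ∀ g ∈ ET, z.2 < yOn g (L.max' hLne) := by
      intro g hg; have h1 := hTeq g hg; rwa [hzA] at h1
    have hzB : ∀ g ∈ EB, yOn g (L.max' hLne) < z.2 := by
      intro g hg; have h1 := hBeq g hg; rwa [hzA] at h1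
    -- find the generating point of P at abscissa max' L
    have hgen : ∃ rb ∈ P, rb.1 = L.max' hLne ∧
        (∀ g ∈ ET, rb.2 ≤ yOn g (L.max' hLne)) ∧
        (∀ g ∈ EB, yOn g (L.max' hLne) ≤ rb.2) := by
      have hAL := Finset.max'_mem _ hLne
      rcases Finset.mem_union.1 hAL with h1 | h1
      · obtain ⟨g, hgU, hg1⟩ := Finset.mem_image.1 h1
        rcases Finset.mem_union.1 hgU with hgT | hgB
        · refine ⟨g.1, (hEdge g (hETM g hgT)).1, hg1, ?_, ?_⟩
          · intro g' hg'
            have hgg : g' = g := hETsing g' hg' g hgT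
            rw [hgg]
            have h5 : yOn g (L.max' hLne) = g.1.2 := by rw [← hg1, yOn_left]
            rw [h5]
          · intro g' hg'
            have h6 := hebet g hgT g' hg' (L.max' hLne) (hETle g hgT) (hEBle g' hg')
              (by linarith [hxbp])
            have h5 : yOn g (L.max' hLne) = g.1.2 := by rw [← hg1, yOn_left]
            rw [h5] at h6
            exact h6.le
        · refine ⟨g.1, (hEdge g (hEBM g hgB)).1, hg1, ?_, ?_⟩
          · intro g' hg'
            have h6 := hebet g' hg' g hgB (L.max' hLne) (hETle g' hg') (hEBle g hgB)
              (by linarith [hxbp])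
            have h5 : yOn g (L.max' hLne) = g.1.2 := by rw [← hg1, yOn_left]
            rw [h5] at h6
            exact h6.le
          · intro g' hg'
            have hgg : g' = g := hEBsing g' hg' g hgB
            rw [hgg]
            have h5 : yOn g (L.max' hLne) = g.1.2 := by rw [← hg1, yOn_left]
            rw [h5]
      · obtain ⟨r, hrB, hr1⟩ := Finset.mem_image.1 h1
        have hrm := Finset.mem_filter.1 hrB
        refine ⟨r, hrm.1, hr1, ?_, ?_⟩
        · intro g hg
          have h5 := hrm.2.2.1 g hg
          rw [hr1] at h5
          exact h5.le
        · intro g hg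
          have h5 := hrm.2.2.2 g hg
          rw [hr1] at h5
          exact h5.le
    obtain ⟨rb, hrbP, hrb1, hrbT, hrbB⟩ := hgen
    refine hWallF z rb hrbP ?_
    rw [Wall, Set.mem_setOf_eq]
    refine ⟨by rw [hzA, ← hrb1], ?_⟩
    intro w hw1 hw2 hwne hwedge
    simp only [edgesSet, Set.mem_iUnion] at hwedge
    obtain ⟨f, hfM, hwf⟩ := hwedge
    have hwA : w.1 = L.max' hLne := by rw [hw1, hrb1]
    have hwle : ∀ g ∈ ET, w.2 ≤ yOn g (L.max' hLne) := by
      intro g hg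
      have h1 := hzT g hg
      have h2 := hrbT g hg
      rcases Set.mem_uIcc.1 hw2 with ⟨a1, a2⟩ | ⟨a1, a2⟩ <;> linarith
    have hwge : ∀ g ∈ EB, yOn g (L.max' hLne) ≤ w.2 := by
      intro g hg
      have h1 := hzB g hg
      have h2 := hrbB g hg
      rcases Set.mem_uIcc.1 hw2 with ⟨a1, a2⟩ | ⟨a1, a2⟩ <;> linarith
    by_cases hstrict : (∀ g ∈ ET, w.2 < yOn g (L.max' hLne)) ∧
        (∀ g ∈ EB, yOn g (L.max' hLne) < w.2)
    · -- strictly inside : hLC says w is a point of P, hence w = rb, contradiction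
      have hwpt : w = ((L.max' hLne, w.2) : Pt) := by
        rw [Prod.ext_iff]
        exact ⟨hwA, rfl⟩
      have hmemP : ((L.max' hLne, w.2) : Pt) ∈ P :=
        hLC hLne f hfM w.2 (by rw [← hwpt]; exact hwf) hstrict.1 hstrict.2
      have hweq : ((L.max' hLne, w.2) : Pt) = rb :=
        hptu _ hmemP rb hrbP (by rw [hrb1])
      exact hwne (by rw [hwpt, hweq])
    · -- w sits exactly on a bounding edge : forced to coincide with rb
      rcases not_and_or.1 hstrict with hbad | hbad
      · push_neg at hbad
        obtain ⟨g, hg, hgle⟩ := hbad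
        have heqw : w.2 = yOn g (L.max' hLne) := le_antisymm (hwle g hg) hgle
        -- then w.2 is at the top of the uIcc, so w.2 = rb.2
        have hrb2 : w.2 ≤ rb.2 := by
          rcases Set.mem_uIcc.1 hw2 with ⟨a1, a2⟩ | ⟨a1, a2⟩
          · exact a2
          · exfalso
            have h1 := hzT g hg
            linarith [heqw]
        have : w.2 = rb.2 := le_antisymm hrb2 (by rw [heqw]; exact hrbT g hg)
        exact hwne (by rw [Prod.ext_iff]; exact ⟨by rw [hwA, hrb1], this⟩)
      · push_neg at hbad
        obtain ⟨g, hg, hgle⟩ := hbad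
        have heqw : w.2 = yOn g (L.max' hLne) := le_antisymm hgle (hwge g hg)
        have hrb2 : rb.2 ≤ w.2 := by
          rcases Set.mem_uIcc.1 hw2 with ⟨a1, a2⟩ | ⟨a1, a2⟩
          · exfalso
            have h1 := hzB g hg
            linarith [heqw]
          · exact a1
        have : w.2 = rb.2 := le_antisymm (by rw [heqw]; exact hrbB g hg) hrb2
        exact hwne (by rw [Prod.ext_iff]; exact ⟨by rw [hwA, hrb1], this⟩)
  have hTz : T = connectedComponentIn (FreeRegion P M) ((xb, p.2) : Pt) := by
    rw [hTdef]
    exact connectedComponentIn_eq (by rw [← hTdef]; exact hzbT)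
  have hRT : R ⊆ T := by
    rw [hTz]
    exact (hRconv.isPreconnected).subset_connectedComponentIn hzbR hRF
  have hTRs : T ⊆ R := by
    have hpre : IsPreconnected T := by
      rw [hTz]
      exact isPreconnected_connectedComponentIn
    have hsub : T ⊆ R ∪ (closure R)ᶜ := by
      intro w hw
      by_cases hwR : w ∈ R
      · exact Or.inl hwR
      · right
        intro hwc
        exact hclos w hwc hwR (hTF hw)
    exact hpre.subset_left_of_subset_union hRopen isClosed_closure.isOpen_compl
      (Set.disjoint_left.2 fun a haR hac => hac (subset_closure haR)) hsub
      ⟨(xb, p.2), hzbT, hzbR⟩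
  have hTR : T = R := Set.Subset.antisymm hTRs hRT
  have hfib : ∀ x : ℝ, (∀ t ∈ L, t < x) → x < p.1 → ∃ y : ℝ, ((x, y) : Pt) ∈ R := by
    intro x hxL hxp
    rcases Finset.eq_empty_or_nonempty ET with hETe | hETne
    · rcases Finset.eq_empty_or_nonempty EB with hEBe | hEBne
      · exact ⟨0, hxL, hxp, by simp [hETe], by simp [hEBe]⟩
      · refine ⟨(EB.image (fun e : Pt × Pt => yOn e x)).max' (hEBne.image _) + 1, hxL, hxp,
          by simp [hETe], ?_⟩
        intro g hg
        have h1 : yOn g x ≤ (EB.image (fun e : Pt × Pt => yOn e x)).max' (hEBne.image _) :=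
          Finset.le_max' (EB.image (fun e : Pt × Pt => yOn e x)) (yOn g x)
            (Finset.mem_image_of_mem _ hg)
        dsimp only
        linarith
    · rcases Finset.eq_empty_or_nonempty EB with hEBe | hEBne
      · refine ⟨(ET.image (fun e : Pt × Pt => yOn e x)).min' (hETne.image _) - 1, hxL, hxp, ?_,
          by simp [hEBe]⟩
        intro g hg
        have h1 : (ET.image (fun e : Pt × Pt => yOn e x)).min' (hETne.image _) ≤ yOn g x :=
          Finset.min'_le (ET.image (fun e : Pt × Pt => yOn e x)) (yOn g x)
            (Finset.mem_image_of_mem _ hg)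
        dsimp only
        linarith
      · have hcross : ∀ g ∈ ET, ∀ g' ∈ EB, yOn g' x < yOn g x := by
          intro g hg g' hg'
          exact hebet g hg g' hg' x (hxL _ (hETL g hg)).le (hxL _ (hEBL g' hg')).le hxp.le
        have hmm : (EB.image (fun e : Pt × Pt => yOn e x)).max' (hEBne.image _) <
            (ET.image (fun e : Pt × Pt => yOn e x)).min' (hETne.image _) := by
          obtain ⟨gt, hgt, hgt2⟩ := Finset.mem_image.1
            ((ET.image (fun e : Pt × Pt => yOn e x)).min'_mem (hETne.image _))
          obtain ⟨gb, hgb, hgb2⟩ := Finset.mem_image.1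
            ((EB.image (fun e : Pt × Pt => yOn e x)).max'_mem (hEBne.image _))
          rw [← hgt2, ← hgb2]
          exact hcross gt hgt gb hgb
        refine ⟨((EB.image (fun e : Pt × Pt => yOn e x)).max' (hEBne.image _) +
          (ET.image (fun e : Pt × Pt => yOn e x)).min' (hETne.image _)) / 2, hxL, hxp, ?_, ?_⟩
        · intro g hg
          have h1 : (ET.image (fun e : Pt × Pt => yOn e x)).min' (hETne.image _) ≤ yOn g x :=
            Finset.min'_le (ET.image (fun e : Pt × Pt => yOn e x)) (yOn g x)
              (Finset.mem_image_of_mem _ hg)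
          dsimp only
          linarith
        · intro g hg
          have h1 : yOn g x ≤ (EB.image (fun e : Pt × Pt => yOn e x)).max' (hEBne.image _) :=
            Finset.le_max' (EB.image (fun e : Pt × Pt => yOn e x)) (yOn g x)
              (Finset.mem_image_of_mem _ hg)
          dsimp only
          linarith
  have hLne : L.Nonempty := by
    rw [Finset.nonempty_iff_ne_empty]
    intro hLe
    have hfib0 : ∀ x : ℝ, x < p.1 → ∃ y : ℝ, ((x, y) : Pt) ∈ T := by
      intro x hx
      obtain ⟨y, hy⟩ := hfib x
        (fun t ht => absurd (hLe ▸ ht) (Finset.notMem_empty t)) hx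
      exact ⟨y, by rw [hTR]; exact hy⟩
    obtain ⟨y, hy⟩ := hfib0 (min (q.1 - 1) (p.1 - 1)) (by
      have h1 := min_le_right (q.1 - 1) (p.1 - 1)
      linarith)
    have h1 : q.1 ≤ min (q.1 - 1) (p.1 - 1) := hglb.1 ⟨y, hy⟩
    have h2 := min_le_left (q.1 - 1) (p.1 - 1)
    linarith
  have hXeq : {x : ℝ | ∃ y : ℝ, ((x, y) : Pt) ∈ T} = Set.Ioo (L.max' hLne) p.1 := by
    ext x
    simp only [Set.mem_setOf_eq, Set.mem_Ioo]
    constructor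
    · rintro ⟨y, hy⟩
      rw [hTR] at hy
      obtain ⟨h1, h2, _, _⟩ := hy
      exact ⟨h1 _ (Finset.max'_mem _ hLne), h2⟩
    · rintro ⟨h1, h2⟩
      obtain ⟨y, hy⟩ := hfib x (fun t ht => lt_of_le_of_lt (Finset.le_max' _ _ ht) h1) h2
      exact ⟨y, by rw [hTR]; exact hy⟩
  have hAxb : L.max' hLne < xb := hLlt _ (Finset.max'_mem _ hLne)
  have hqA : q.1 = L.max' hLne := by
    rw [hXeq] at hglb
    exact hglb.unique (isGLB_Ioo (by linarith))
  have hETle : ∀ g ∈ ET, g.1.1 ≤ L.max' hLne := fun g hg => Finset.le_max' _ _ (hETL g hg)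
  have hEBle : ∀ g ∈ EB, g.1.1 ≤ L.max' hLne := fun g hg => Finset.le_max' _ _ (hEBL g hg)
  have hqp1 : q.1 < p.1 := by rw [hqA]; linarith
  have hqBlk : (∀ g ∈ ET, q.2 < yOn g q.1) ∧ (∀ g ∈ EB, yOn g q.1 < q.2) := by
    have hAL := Finset.max'_mem _ hLne
    rcases Finset.mem_union.1 hAL with h1 | h1
    · exfalso
      obtain ⟨g, hgU, hg1⟩ := Finset.mem_image.1 h1
      have hgM : g ∈ M := by
        rcases Finset.mem_union.1 hgU with h | h
        · exact hETM g h
        · exact hEBM g h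
      exact (hqiso g hgM).1 (hptu g.1 (hEdge g hgM).1 q hqP (by rw [hg1, ← hqA]))
    · obtain ⟨r, hrB, hr1⟩ := Finset.mem_image.1 h1
      have hrm := Finset.mem_filter.1 hrB
      have hrq : r = q := hptu r hrm.1 q hqP (by rw [hr1, ← hqA])
      rw [← hrq]
      exact ⟨hrm.2.2.1, hrm.2.2.2⟩
  have hyOnu : yOn (u, p) u.1 = u.2 := by unfold yOn; simp
  have huA : u.1 < L.max' hLne := by
    rcases lt_trichotomy u.1 (L.max' hLne) with h | h | h
    · exact h
    · exact absurd (hptu u hu q hqP (by rw [h, ← hqA])) huq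
    · exfalso
      have hblk : u ∈ Blk := by
        refine Finset.mem_filter.2 ⟨hu, by linarith, ?_, ?_⟩
        · intro g hg
          have h2 := hupLT g hg u.1 le_rfl (by linarith [hETle g hg]) hux.le
          rwa [hyOnu] at h2
        · intro g hg
          have h2 := hupGB g hg u.1 le_rfl (by linarith [hEBle g hg]) hux.le
          rwa [hyOnu] at h2
      have h3 := Finset.le_max' _ _ (hBlkL u hblk)
      linarith
  have huq1 : u.1 < q.1 := by rw [hqA]; exact huA
  have hqT : ∀ g ∈ ET, q.2 < yOn g q.1 := hqBlk.1
  have hqB : ∀ g ∈ EB, yOn g q.1 < q.2 := hqBlk.2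
  have hvT : ∀ g ∈ ET, yOn (u, p) q.1 < yOn g q.1 := fun g hg =>
    hupLT g hg q.1 huq1.le (by rw [hqA]; exact hETle g hg) hqp1.le
  have hvB : ∀ g ∈ EB, yOn g q.1 < yOn (u, p) q.1 := fun g hg =>
    hupGB g hg q.1 huq1.le (by rw [hqA]; exact hEBle g hg) hqp1.le
  have hqnp : q ≠ p := fun h => absurd hqp1 (by rw [h]; exact lt_irrefl _)
  have hqv2 : q.2 ≠ yOn (u, p) q.1 := by
    intro hh
    exact not_mem_seg hP hu hp hqP hupne (Ne.symm huq) hqnp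
      ((seg_mem_iff (g := (u, p)) hux).2 ⟨huq1.le, hqp1.le, hh⟩)
  have hv1 : (vproj (u, p) q).1 = q.1 := rfl
  have hv2 : (vproj (u, p) q).2 = yOn (u, p) q.1 := rfl
  refine ⟨huq1, hqp1, ?_, ?_⟩
  · intro f hf
    rw [Set.eq_empty_iff_forall_notMem]
    rintro w ⟨hw1, hw2⟩
    obtain ⟨θ, hθ0, hθ1, hwx, hwy⟩ := openSegment_param hw1
    rw [hv1] at hwx
    rw [hv2] at hwy
    have hwx' : w.1 = q.1 := by rw [hwx]; ring
    have hwne_q : w.2 ≠ q.2 := by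
      intro hh
      apply hqv2
      have h5 : θ * (yOn (u, p) q.1 - q.2) = 0 := by
        rw [hh] at hwy
        linear_combination (-1 : ℝ) * hwy
      rcases mul_eq_zero.1 h5 with h6 | h6
      · exact absurd h6 (ne_of_gt hθ0)
      · linarith
    have hwne_v : w.2 ≠ yOn (u, p) q.1 := by
      intro hh
      apply hqv2
      have h5 : (1 - θ) * (q.2 - yOn (u, p) q.1) = 0 := by
        rw [hh] at hwy
        linear_combination (-1 : ℝ) * hwy
      rcases mul_eq_zero.1 h5 with h6 | h6
      · exact absurd h6 (ne_of_gt (by linarith))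
      · linarith
    rcases Finset.mem_insert.1 hf with hfup | hfM
    · rw [hfup] at hw2
      obtain ⟨_, _, hwyy⟩ := (seg_mem_iff (g := (u, p)) hux).1 hw2
      rw [hwx'] at hwyy
      exact hwne_v hwyy
    · have hwT : ∀ g ∈ ET, w.2 < yOn g (L.max' hLne) := by
        intro g hg
        have h1 := hqT g hg
        have h2 := hvT g hg
        have h3 : w.2 < yOn g q.1 := by
          rw [hwy]
          exact convex_gt_aux h1 h2 (by linarith) hθ0.le (by ring)
        rwa [hqA] at h3
      have hwB : ∀ g ∈ EB, yOn g (L.max' hLne) < w.2 := by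
        intro g hg
        have h1 := hqB g hg
        have h2 := hvB g hg
        have h3 : yOn g q.1 < w.2 := by
          rw [hwy]
          exact convex_lt_aux h1 h2 (by linarith) hθ0.le (by ring)
        rwa [hqA] at h3
      have hwpt : w = ((L.max' hLne, w.2) : Pt) := by
        rw [Prod.ext_iff]
        exact ⟨by rw [hwx', hqA], rfl⟩
      have hmemP : ((L.max' hLne, w.2) : Pt) ∈ P :=
        hLC hLne f hfM w.2 (by rw [← hwpt]; exact hw2) hwT hwB
      have hweq : ((L.max' hLne, w.2) : Pt) = q :=
        hptu _ hmemP q hqP (by rw [← hqA])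
      apply hwne_q
      rw [hwpt]
      exact congrArg Prod.snd hweq
  · intro r hr hrmem
    obtain ⟨θ, hθ0, hθ1, hwx, hwy⟩ := openSegment_param hrmem
    rw [hv1] at hwx
    rw [hv2] at hwy
    have hrx : r.1 = q.1 := by rw [hwx]; ring
    have hrq : r = q := hptu r hr q hqP hrx
    apply hqv2
    rw [hrq] at hwy
    have h5 : θ * (yOn (u, p) q.1 - q.2) = 0 := by linear_combination (-1 : ℝ) * hwy
    rcases mul_eq_zero.1 h5 with h6 | h6
    · exact absurd h6 (ne_of_gt hθ0)
    · linarith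
end
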